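/- arXiv:2307.16436 — 11 statements merged into one kernel-verified Lean document; each statement's English description precedes it below -/
import Mathlib

section
/- Let S : [0,1] → ℝ be continuous, R(x) = ∫₀ˣ S(y) dy, and Φ : ℝ → ℝ of class C² with Φ'' locally Lipschitz. Let D_I : [0,1] → ℝ be continuous with D_I(x) ≥ γ > 0 for all x. Then there exist T > 0 and a unique function D : [0,1] × [0,T) → ℝ, continuous, strictly positive, continuously differentiable in t, such that D(x,0) = D_I(x) and, for all (x,t) ∈ [0,1] × [0,T), D(x,t)² ∂ₜD(x,t) = R(x) ∫₀ˣ Φ''(u(y,t)) S(y) dy, where u(y,t) = ∫_y¹ R(z)/D(z,t) dz. -/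
open MeasureTheory Set intervalIntegral
open scoped Interval

noncomputable def Rp (Sc : ℝ → ℝ) (x : ℝ) : ℝ := ∫ w in (0:ℝ)..x, Sc w
noncomputable def Uf (Sc : ℝ → ℝ) (ε : ℝ) (h : ℝ → ℝ) (y : ℝ) : ℝ :=
  ∫ z in y..(1:ℝ), Rp Sc z / max ε (h z)
noncomputable def Gf (Sc Φ : ℝ → ℝ) (ε : ℝ) (h : ℝ → ℝ) (x : ℝ) : ℝ :=
  ∫ y in (0:ℝ)..x, iteratedDeriv 2 Φ (Uf Sc ε h y) * Sc y
noncomputable def Ff (Sc Φ : ℝ → ℝ) (ε : ℝ) (h : ℝ → ℝ) (x : ℝ) : ℝ :=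
  Rp Sc x * Gf Sc Φ ε h x / (max ε (h x)) ^ 2

section basic
variable {Sc Φ h k : ℝ → ℝ} {ε Ms B K : ℝ}

lemma max_pos' (hε : 0 < ε) (r : ℝ) : 0 < max ε r := lt_max_of_lt_left hε

lemma Ioc_subset_Icc01 {y : ℝ} (hy : y ∈ Icc (0:ℝ) 1) : Ι y 1 ⊆ Icc (0:ℝ) 1 := by
  intro z hz
  rcases hz with ⟨h1, h2⟩
  exact ⟨le_of_lt (lt_of_le_of_lt (le_min hy.1 zero_le_one) h1),
    le_trans h2 (max_le hy.2 le_rfl)⟩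

lemma Ioc_subset_Icc01' {x : ℝ} (hx : x ∈ Icc (0:ℝ) 1) : Ι (0:ℝ) x ⊆ Icc (0:ℝ) 1 := by
  rw [Set.uIoc_of_le hx.1]
  exact fun z hz => ⟨hz.1.le, hz.2.trans hx.2⟩

-- (insert the compiled lemmas from t3 here)
lemma hasDerivAt_primitive {f : ℝ → ℝ} (hf : Continuous f) (a x : ℝ) :
    HasDerivAt (fun u => ∫ t in a..u, f t) (f x) x :=
  intervalIntegral.integral_hasDerivAt_right (hf.intervalIntegrable _ _)
    (hf.stronglyMeasurableAtFilter _ _) hf.continuousAt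

lemma continuous_primitive' {f : ℝ → ℝ} (hf : Continuous f) (a : ℝ) :
    Continuous (fun u => ∫ t in a..u, f t) :=
  continuous_iff_continuousAt.2 fun x => (hasDerivAt_primitive hf a x).continuousAt

lemma Rp_continuous (hSc : Continuous Sc) : Continuous (Rp Sc) :=
  continuous_primitive' hSc 0

lemma Rp_bound (hMs : ∀ x, |Sc x| ≤ Ms) {x : ℝ} (hx : x ∈ Icc (0:ℝ) 1) :
    |Rp Sc x| ≤ Ms := by
  have := intervalIntegral.norm_integral_le_of_norm_le_const
    (C := Ms) (f := Sc) (a := 0) (b := x) (fun z _ => hMs z)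
  rw [Real.norm_eq_abs] at this
  calc |Rp Sc x| ≤ Ms * |x - 0| := this
    _ ≤ Ms * 1 := by
        have h0 : 0 ≤ Ms := le_trans (abs_nonneg _) (hMs 0)
        apply mul_le_mul_of_nonneg_left _ h0
        rw [abs_of_nonneg (by linarith [hx.1] : (0:ℝ) ≤ x - 0)]
        linarith [hx.2]
    _ = Ms := mul_one _

lemma q_continuous (hSc : Continuous Sc) (hε : 0 < ε) (hh : Continuous h) :
    Continuous (fun z => Rp Sc z / max ε (h z)) := by
  apply (Rp_continuous hSc).div (continuous_const.max hh)
  exact fun z => ne_of_gt (max_pos' hε _)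

lemma q_bound (hMs : ∀ x, |Sc x| ≤ Ms) (hε : 0 < ε) {z : ℝ} (hz : z ∈ Icc (0:ℝ) 1) :
    |Rp Sc z / max ε (h z)| ≤ Ms / ε := by
  rw [abs_div, abs_of_pos (max_pos' hε _)]
  exact div_le_div₀ (le_trans (abs_nonneg _) (Rp_bound hMs hz)) (Rp_bound hMs hz) hε
    (le_max_left _ _)

lemma Uf_continuous (hSc : Continuous Sc) (hε : 0 < ε) (hh : Continuous h) :
    Continuous (Uf Sc ε h) := by
  have : Uf Sc ε h = fun y => -∫ z in (1:ℝ)..y, Rp Sc z / max ε (h z) := by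
    funext y; rw [Uf, intervalIntegral.integral_symm]
  rw [this]
  exact (continuous_primitive' (q_continuous hSc hε hh) 1).neg

lemma Uf_bound (hMs : ∀ x, |Sc x| ≤ Ms) (hε : 0 < ε) {y : ℝ} (hy : y ∈ Icc (0:ℝ) 1) :
    |Uf Sc ε h y| ≤ Ms / ε := by
  have hMs0 : 0 ≤ Ms := le_trans (abs_nonneg _) (hMs 0)
  have hb : ∀ z ∈ Ι y 1, ‖Rp Sc z / max ε (h z)‖ ≤ Ms / ε :=
    fun z hz => q_bound hMs hε (Ioc_subset_Icc01 hy hz)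
  have := intervalIntegral.norm_integral_le_of_norm_le_const hb
  rw [Real.norm_eq_abs] at this
  calc |Uf Sc ε h y| ≤ Ms / ε * |1 - y| := this
    _ ≤ Ms / ε * 1 := by
        apply mul_le_mul_of_nonneg_left _ (by positivity)
        rw [abs_of_nonneg (by linarith [hy.2])]
        linarith [hy.1]
    _ = Ms / ε := mul_one _

lemma Gf_continuous (hSc : Continuous Sc) (hΦ : Continuous (iteratedDeriv 2 Φ)) (hε : 0 < ε)
    (hh : Continuous h) : Continuous (Gf Sc Φ ε h) :=
  continuous_primitive' (((hΦ.comp (Uf_continuous hSc hε hh))).mul hSc) 0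

lemma Ff_continuous (hSc : Continuous Sc) (hΦ : Continuous (iteratedDeriv 2 Φ)) (hε : 0 < ε)
    (hh : Continuous h) : Continuous (Ff Sc Φ ε h) := by
  apply ((Rp_continuous hSc).mul (Gf_continuous hSc hΦ hε hh)).div
    ((continuous_const.max hh).pow 2)
  intro x
  exact ne_of_gt (pow_pos (max_pos' hε _) 2)

-- bounds with B a bound for the second derivative on the relevant interval
lemma Gf_bound (hMs : ∀ x, |Sc x| ≤ Ms) (hε : 0 < ε)
    (hB : ∀ r ∈ Icc (-(Ms/ε)) (Ms/ε), |iteratedDeriv 2 Φ r| ≤ B)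
    {x : ℝ} (hx : x ∈ Icc (0:ℝ) 1) : |Gf Sc Φ ε h x| ≤ B * Ms := by
  have hMs0 : 0 ≤ Ms := le_trans (abs_nonneg _) (hMs 0)
  have hB0 : 0 ≤ B := le_trans (abs_nonneg _) (hB 0 (by constructor <;> [simp; skip] <;> positivity))
  have hb : ∀ y ∈ Ι (0:ℝ) x, ‖iteratedDeriv 2 Φ (Uf Sc ε h y) * Sc y‖ ≤ B * Ms := by
    intro y hy
    have hy' := Ioc_subset_Icc01' hx hy
    rw [Real.norm_eq_abs, abs_mul]
    apply mul_le_mul (hB _ (abs_le.1 (Uf_bound hMs hε hy'))) (hMs y) (abs_nonneg _) hB0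
  have := intervalIntegral.norm_integral_le_of_norm_le_const hb
  rw [Real.norm_eq_abs] at this
  calc |Gf Sc Φ ε h x| ≤ B * Ms * |x - 0| := this
    _ ≤ B * Ms * 1 := by
        apply mul_le_mul_of_nonneg_left _ (by positivity)
        rw [abs_of_nonneg (by linarith [hx.1] : (0:ℝ) ≤ x - 0)]
        linarith [hx.2]
    _ = B * Ms := mul_one _

lemma Ff_bound (hMs : ∀ x, |Sc x| ≤ Ms) (hε : 0 < ε)
    (hB : ∀ r ∈ Icc (-(Ms/ε)) (Ms/ε), |iteratedDeriv 2 Φ r| ≤ B)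
    {x : ℝ} (hx : x ∈ Icc (0:ℝ) 1) : |Ff Sc Φ ε h x| ≤ Ms * (B * Ms) / ε ^ 2 := by
  have hMs0 : 0 ≤ Ms := le_trans (abs_nonneg _) (hMs 0)
  have hp := max_pos' hε (h x)
  have hB0 : 0 ≤ B :=
    le_trans (abs_nonneg _) (hB 0 ⟨by simpa using div_nonneg hMs0 hε.le, by positivity⟩)
  rw [Ff, abs_div, abs_of_pos (pow_pos hp 2), abs_mul]
  apply div_le_div₀ (by positivity)
    (mul_le_mul (Rp_bound hMs hx) (Gf_bound hMs hε hB hx) (abs_nonneg _) hMs0)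
    (by positivity) (pow_le_pow_left₀ hε.le (le_max_left _ _) 2)

end basic
section diff
variable {Sc Φ h k : ℝ → ℝ} {ε Ms B K δ : ℝ}

lemma inv_max_diff (hε : 0 < ε) {a b : ℝ} (hab : |a - b| ≤ δ) :
    |1 / max ε a - 1 / max ε b| ≤ δ / ε ^ 2 := by
  set p := max ε a with hpd
  set q := max ε b with hqd
  have hp := max_pos' hε a
  have hq := max_pos' hε b
  have h1 : |q - p| ≤ δ := by
    have := abs_max_sub_max_le_abs b a ε
    rw [max_comm b ε, max_comm a ε] at this
    calc |q - p| ≤ |b - a| := this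
      _ = |a - b| := abs_sub_comm _ _
      _ ≤ δ := hab
  have h2 : 1 / p - 1 / q = (q - p) / (p * q) := by rw [div_sub_div _ _ hp.ne' hq.ne']; ring
  rw [h2, abs_div, abs_of_pos (mul_pos hp hq)]
  refine div_le_div₀ (le_trans (abs_nonneg _) h1) h1 (by positivity) ?_
  rw [pow_two]
  exact mul_le_mul (le_max_left _ _) (le_max_left _ _) hε.le (le_trans hε.le (le_max_left _ _))

lemma Uf_diff (hSc : Continuous Sc) (hMs : ∀ x, |Sc x| ≤ Ms) (hε : 0 < ε)
    (hh : Continuous h) (hk : Continuous k) (hδ : ∀ z ∈ Icc (0:ℝ) 1, |h z - k z| ≤ δ)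
    (hδ0 : 0 ≤ δ) {y : ℝ} (hy : y ∈ Icc (0:ℝ) 1) :
    |Uf Sc ε h y - Uf Sc ε k y| ≤ Ms * δ / ε ^ 2 := by
  have hMs0 : 0 ≤ Ms := le_trans (abs_nonneg _) (hMs 0)
  have hih : IntervalIntegrable (fun z => Rp Sc z / max ε (h z)) volume y 1 :=
    (q_continuous hSc hε hh).intervalIntegrable _ _
  have hik : IntervalIntegrable (fun z => Rp Sc z / max ε (k z)) volume y 1 :=
    (q_continuous hSc hε hk).intervalIntegrable _ _
  rw [Uf, Uf, ← intervalIntegral.integral_sub hih hik]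
  have hb : ∀ z ∈ Ι y 1, ‖Rp Sc z / max ε (h z) - Rp Sc z / max ε (k z)‖ ≤ Ms * (δ / ε ^ 2) := by
    intro z hz
    have hz' := Ioc_subset_Icc01 hy hz
    have he : Rp Sc z / max ε (h z) - Rp Sc z / max ε (k z)
        = Rp Sc z * (1 / max ε (h z) - 1 / max ε (k z)) := by ring
    rw [Real.norm_eq_abs, he, abs_mul]
    exact mul_le_mul (Rp_bound hMs hz') (inv_max_diff hε (hδ z hz')) (abs_nonneg _) hMs0
  have := intervalIntegral.norm_integral_le_of_norm_le_const hb
  rw [Real.norm_eq_abs] at this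
  calc |∫ z in y..1, (Rp Sc z / max ε (h z) - Rp Sc z / max ε (k z))|
      ≤ Ms * (δ / ε ^ 2) * |1 - y| := this
    _ ≤ Ms * (δ / ε ^ 2) * 1 := by
        apply mul_le_mul_of_nonneg_left _ (by positivity)
        rw [abs_of_nonneg (by linarith [hy.2])]
        linarith [hy.1]
    _ = Ms * δ / ε ^ 2 := by ring

lemma Gf_diff (hSc : Continuous Sc) (hMs : ∀ x, |Sc x| ≤ Ms) (hε : 0 < ε)
    (hΦc : Continuous (iteratedDeriv 2 Φ))
    (hh : Continuous h) (hk : Continuous k)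
    (hK0 : 0 ≤ K)
    (hK : ∀ u ∈ Icc (-(Ms/ε)) (Ms/ε), ∀ v ∈ Icc (-(Ms/ε)) (Ms/ε),
      |iteratedDeriv 2 Φ u - iteratedDeriv 2 Φ v| ≤ K * |u - v|)
    (hδ : ∀ z ∈ Icc (0:ℝ) 1, |h z - k z| ≤ δ) (hδ0 : 0 ≤ δ)
    {x : ℝ} (hx : x ∈ Icc (0:ℝ) 1) :
    |Gf Sc Φ ε h x - Gf Sc Φ ε k x| ≤ K * Ms ^ 2 * δ / ε ^ 2 := by
  have hMs0 : 0 ≤ Ms := le_trans (abs_nonneg _) (hMs 0)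
  have hih : IntervalIntegrable (fun y => iteratedDeriv 2 Φ (Uf Sc ε h y) * Sc y) volume 0 x :=
    ((hΦc.comp (Uf_continuous hSc hε hh)).mul hSc).intervalIntegrable _ _
  have hik : IntervalIntegrable (fun y => iteratedDeriv 2 Φ (Uf Sc ε k y) * Sc y) volume 0 x :=
    ((hΦc.comp (Uf_continuous hSc hε hk)).mul hSc).intervalIntegrable _ _
  rw [Gf, Gf, ← intervalIntegral.integral_sub hih hik]
  have hb : ∀ y ∈ Ι (0:ℝ) x,
      ‖iteratedDeriv 2 Φ (Uf Sc ε h y) * Sc y - iteratedDeriv 2 Φ (Uf Sc ε k y) * Sc y‖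
        ≤ K * (Ms * δ / ε ^ 2) * Ms := by
    intro y hy
    have hy' := Ioc_subset_Icc01' hx hy
    have he : iteratedDeriv 2 Φ (Uf Sc ε h y) * Sc y - iteratedDeriv 2 Φ (Uf Sc ε k y) * Sc y
        = (iteratedDeriv 2 Φ (Uf Sc ε h y) - iteratedDeriv 2 Φ (Uf Sc ε k y)) * Sc y := by ring
    rw [Real.norm_eq_abs, he, abs_mul]
    apply mul_le_mul _ (hMs y) (abs_nonneg _) (by positivity)
    calc |iteratedDeriv 2 Φ (Uf Sc ε h y) - iteratedDeriv 2 Φ (Uf Sc ε k y)|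
        ≤ K * |Uf Sc ε h y - Uf Sc ε k y| :=
          hK _ (abs_le.1 (Uf_bound hMs hε hy')) _ (abs_le.1 (Uf_bound hMs hε hy'))
      _ ≤ K * (Ms * δ / ε ^ 2) :=
          mul_le_mul_of_nonneg_left (Uf_diff hSc hMs hε hh hk hδ hδ0 hy') hK0
  have := intervalIntegral.norm_integral_le_of_norm_le_const hb
  rw [Real.norm_eq_abs] at this
  calc |∫ y in (0:ℝ)..x, (iteratedDeriv 2 Φ (Uf Sc ε h y) * Sc y
          - iteratedDeriv 2 Φ (Uf Sc ε k y) * Sc y)|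
      ≤ K * (Ms * δ / ε ^ 2) * Ms * |x - 0| := this
    _ ≤ K * (Ms * δ / ε ^ 2) * Ms * 1 := by
        apply mul_le_mul_of_nonneg_left _ (by positivity)
        rw [abs_of_nonneg (by linarith [hx.1] : (0:ℝ) ≤ x - 0)]
        linarith [hx.2]
    _ = K * Ms ^ 2 * δ / ε ^ 2 := by ring

lemma Ff_diff (hSc : Continuous Sc) (hMs : ∀ x, |Sc x| ≤ Ms) (hε : 0 < ε)
    (hΦc : Continuous (iteratedDeriv 2 Φ))
    (hh : Continuous h) (hk : Continuous k)
    (hB : ∀ r ∈ Icc (-(Ms/ε)) (Ms/ε), |iteratedDeriv 2 Φ r| ≤ B)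
    (hK0 : 0 ≤ K)
    (hK : ∀ u ∈ Icc (-(Ms/ε)) (Ms/ε), ∀ v ∈ Icc (-(Ms/ε)) (Ms/ε),
      |iteratedDeriv 2 Φ u - iteratedDeriv 2 Φ v| ≤ K * |u - v|)
    (hδ : ∀ z ∈ Icc (0:ℝ) 1, |h z - k z| ≤ δ) (hδ0 : 0 ≤ δ)
    {x : ℝ} (hx : x ∈ Icc (0:ℝ) 1) :
    |Ff Sc Φ ε h x - Ff Sc Φ ε k x|
      ≤ Ms * (K * Ms ^ 2 / ε ^ 4 + 2 * B * Ms / ε ^ 3) * δ := by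
  have hMs0 : 0 ≤ Ms := le_trans (abs_nonneg _) (hMs 0)
  have hB0 : 0 ≤ B :=
    le_trans (abs_nonneg _) (hB 0 ⟨by simpa using div_nonneg hMs0 hε.le, by positivity⟩)
  set p := max ε (h x) with hpd
  set q := max ε (k x) with hqd
  have hp := max_pos' hε (h x)
  have hq := max_pos' hε (k x)
  set a := Gf Sc Φ ε h x with had
  set b := Gf Sc Φ ε k x with hbd
  have key : Ff Sc Φ ε h x - Ff Sc Φ ε k x
      = Rp Sc x * ((a - b) * (1 / p ^ 2) + b * ((1 / p - 1 / q) * (1 / p + 1 / q))) := by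
    rw [Ff, Ff, ← hpd, ← hqd, ← had, ← hbd]
    field_simp
    ring
  have h1 : |(a - b) * (1 / p ^ 2)| ≤ (K * Ms ^ 2 * δ / ε ^ 2) * (1 / ε ^ 2) := by
    rw [abs_mul]
    apply mul_le_mul (Gf_diff hSc hMs hε hΦc hh hk hK0 hK hδ hδ0 hx) _ (abs_nonneg _)
      (by positivity)
    rw [abs_of_pos (by positivity : (0:ℝ) < 1 / p ^ 2)]
    exact one_div_le_one_div_of_le (by positivity)
      (pow_le_pow_left₀ hε.le (le_max_left _ _) 2)
  have hsum : |1 / p + 1 / q| ≤ 2 / ε := by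
    have h1p : 1 / p ≤ 1 / ε := one_div_le_one_div_of_le hε (le_max_left _ _)
    have h1q : 1 / q ≤ 1 / ε := one_div_le_one_div_of_le hε (le_max_left _ _)
    rw [abs_of_pos (by positivity)]
    have : 2 / ε = 1 / ε + 1 / ε := by ring
    linarith
  have h2 : |b * ((1 / p - 1 / q) * (1 / p + 1 / q))| ≤ (B * Ms) * ((δ / ε ^ 2) * (2 / ε)) := by
    rw [abs_mul]
    apply mul_le_mul (Gf_bound hMs hε hB hx) _ (abs_nonneg _) (by positivity)
    rw [abs_mul]
    exact mul_le_mul (inv_max_diff hε (hδ x hx)) hsum (abs_nonneg _) (by positivity)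
  calc |Ff Sc Φ ε h x - Ff Sc Φ ε k x|
      = |Rp Sc x| * |(a - b) * (1 / p ^ 2) + b * ((1 / p - 1 / q) * (1 / p + 1 / q))| := by
        rw [key, abs_mul]
    _ ≤ Ms * ((K * Ms ^ 2 * δ / ε ^ 2) * (1 / ε ^ 2) + (B * Ms) * ((δ / ε ^ 2) * (2 / ε))) := by
        apply mul_le_mul (Rp_bound hMs hx)
          (le_trans (abs_add_le _ _) (add_le_add h1 h2)) (abs_nonneg _) hMs0
    _ = Ms * (K * Ms ^ 2 / ε ^ 4 + 2 * B * Ms / ε ^ 3) * δ := by ring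
end diff

/-- locally Lipschitz implies Lipschitz-type bound on a compact interval -/
lemma locLip_bound {f : ℝ → ℝ} (h : LocallyLipschitz f) (a b : ℝ) :
    ∃ K : ℝ, 0 ≤ K ∧ ∀ u ∈ Icc a b, ∀ v ∈ Icc a b, |f u - f v| ≤ K * |u - v| := by
  have hloc : ∀ x : ℝ, ∃ ε > (0:ℝ), ∃ L : NNReal, LipschitzOnWith L f (Metric.ball x ε) := by
    intro x
    obtain ⟨L, t, ht, hL⟩ := h x
    obtain ⟨ε, hε, hb⟩ := Metric.mem_nhds_iff.mp ht
    exact ⟨ε, hε, L, hL.mono hb⟩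
  choose ε hε L hL using hloc
  obtain ⟨s, hs⟩ := (isCompact_Icc (a := a) (b := b)).elim_finite_subcover
    (fun x : ℝ => Metric.ball x (ε x / 2)) (fun _ => Metric.isOpen_ball)
    (fun x hx => mem_iUnion.2 ⟨x, Metric.mem_ball_self (by have := hε x; linarith)⟩)
  rcases isEmpty_or_nonempty (Icc a b) with he | hne
  · exact ⟨0, le_rfl, fun u hu => absurd hu (by simpa using he.false ⟨u, hu⟩)⟩
  obtain ⟨u₀, hu₀⟩ := hne
  have hsne : s.Nonempty := by
    rcases Finset.eq_empty_or_nonempty s with rfl | h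
    · simpa using hs hu₀
    · exact h
  set δ : ℝ := s.inf' hsne (fun i => ε i / 2) with hδdef
  have hδpos : 0 < δ := by
    rw [hδdef]
    apply (Finset.lt_inf'_iff hsne (f := fun i => ε i / 2)).2
    intro i _
    have := hε i; linarith
  obtain ⟨M, hM⟩ := (isCompact_Icc (a := a) (b := b)).exists_bound_of_continuousOn
    h.continuous.continuousOn
  have hM0 : 0 ≤ M := le_trans (norm_nonneg _) (hM u₀ hu₀)
  set Km : ℝ := s.sup' hsne (fun i => (L i : ℝ)) with hKm
  have hKm0 : 0 ≤ Km := by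
    obtain ⟨i, hi⟩ := hsne
    exact le_trans (L i).coe_nonneg (Finset.le_sup' (fun j => (L j : ℝ)) hi)
  refine ⟨max Km (2 * M / δ), le_trans hKm0 (le_max_left _ _), fun u hu v hv => ?_⟩
  rcases le_or_gt |u - v| δ with hc | hc
  · obtain ⟨i, hi, hui⟩ := by simpa [mem_iUnion] using hs hu
    have hvi : v ∈ Metric.ball i (ε i) := by
      have h1 : |u - i| < ε i / 2 := by simpa [Real.dist_eq] using hui
      have h2 : δ ≤ ε i / 2 := Finset.inf'_le _ hi
      have : |v - i| < ε i := by
        have := abs_sub_abs_le_abs_sub (v - i) (u - i)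
        have h3 : |v - u| ≤ δ := by rwa [abs_sub_comm]
        have := abs_sub (v - i) (u - i)
        calc |v - i| = |(v - u) + (u - i)| := by ring_nf
          _ ≤ |v - u| + |u - i| := abs_add_le _ _
          _ < δ + ε i / 2 := by linarith
          _ ≤ ε i := by linarith
      simpa [Real.dist_eq]
    have hui' : u ∈ Metric.ball i (ε i) := by
      refine Metric.ball_subset_ball (by linarith [hε i]) hui
    have := (hL i) hui' hvi
    rw [edist_dist, edist_dist] at this
    have hd : dist (f u) (f v) ≤ (L i : ℝ) * dist u v := by
      exact (lipschitzOnWith_iff_dist_le_mul.mp (hL i)) u hui' v hvi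
    calc |f u - f v| = dist (f u) (f v) := (Real.dist_eq _ _).symm
      _ ≤ (L i : ℝ) * dist u v := hd
      _ ≤ max Km (2 * M / δ) * |u - v| := by
          rw [Real.dist_eq]
          apply mul_le_mul _ le_rfl (abs_nonneg _) (le_trans hKm0 (le_max_left _ _))
          exact le_trans (Finset.le_sup' (fun i => (L i : ℝ)) hi) (le_max_left _ _)
  · have h1 : |f u - f v| ≤ 2 * M := by
      have := hM u hu; have := hM v hv
      have : |f u| ≤ M := hM u hu
      have : |f v| ≤ M := hM v hv
      calc |f u - f v| ≤ |f u| + |f v| := abs_sub _ _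
        _ ≤ 2 * M := by have := hM u hu; have := hM v hv; simp [Real.norm_eq_abs] at *; linarith
    calc |f u - f v| ≤ 2 * M := h1
      _ = (2 * M / δ) * δ := by field_simp
      _ ≤ (2 * M / δ) * |u - v| := by
          apply mul_le_mul_of_nonneg_left hc.le (by positivity)
      _ ≤ max Km (2 * M / δ) * |u - v| := by
          apply mul_le_mul_of_nonneg_right (le_max_right _ _) (abs_nonneg _)


lemma Rp_eq {S Sc : ℝ → ℝ} (hSceq : ∀ z ∈ Icc (0:ℝ) 1, Sc z = S z) {x : ℝ}
    (hx : x ∈ Icc (0:ℝ) 1) : Rp Sc x = ∫ y in (0:ℝ)..x, S y := by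
  apply intervalIntegral.integral_congr
  intro y hy
  rw [uIcc_of_le hx.1] at hy
  exact hSceq y ⟨hy.1, hy.2.trans hx.2⟩

lemma Ff_statement_eq {S Sc Φ ρ d : ℝ → ℝ} {ε : ℝ}
    (hSceq : ∀ z ∈ Icc (0:ℝ) 1, Sc z = S z)
    (hρ : ∀ z ∈ Icc (0:ℝ) 1, ε ≤ ρ z)
    (hρd : ∀ z ∈ Icc (0:ℝ) 1, ρ z = d z)
    {x : ℝ} (hx : x ∈ Icc (0:ℝ) 1) :
    Ff Sc Φ ε ρ x =
      (∫ y in (0:ℝ)..x, S y) *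
        (∫ y in (0:ℝ)..x,
          iteratedDeriv 2 Φ (∫ z in y..(1:ℝ), (∫ w in (0:ℝ)..z, S w) / d z) * S y) /
        (d x) ^ 2 := by
  have hGf : Gf Sc Φ ε ρ x =
      ∫ y in (0:ℝ)..x,
        iteratedDeriv 2 Φ (∫ z in y..(1:ℝ), (∫ w in (0:ℝ)..z, S w) / d z) * S y := by
    apply intervalIntegral.integral_congr
    intro y hy
    rw [uIcc_of_le hx.1] at hy
    have hy' : y ∈ Icc (0:ℝ) 1 := ⟨hy.1, hy.2.trans hx.2⟩
    have hUf : Uf Sc ε ρ y = ∫ z in y..(1:ℝ), (∫ w in (0:ℝ)..z, S w) / d z := by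
      apply intervalIntegral.integral_congr
      intro z hz
      rw [uIcc_of_le hy'.2] at hz
      have hz' : z ∈ Icc (0:ℝ) 1 := ⟨hy'.1.trans hz.1, hz.2⟩
      simp only []
      rw [Rp_eq hSceq hz', max_eq_right (hρ z hz'), hρd z hz']
    simp only []
    rw [hUf, hSceq y hy']
  rw [Ff, hGf, Rp_eq hSceq hx, max_eq_right (hρ x hx), hρd x hx]

/-! Main theorem -/

open MeasureTheory Set intervalIntegral

/-- `D` is a positive solution on `[0,1] × [0,T)` of the integro-differential system
`D² ∂ₜD = R(x) ∫₀ˣ Φ''(u(y,t)) S(y) dy`, `u(y,t) = ∫_y¹ R(z)/D(z,t) dz`, with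
`R(x) = ∫₀ˣ S(y) dy` and initial datum `D_I`, continuous and continuously
differentiable in `t`. -/
def IsSolOn (S Φ D_I : ℝ → ℝ) (T : ℝ) (D : ℝ → ℝ → ℝ) : Prop :=
  ∃ Dt : ℝ → ℝ → ℝ,
    ContinuousOn (fun p : ℝ × ℝ => D p.1 p.2) (Set.Icc 0 1 ×ˢ Set.Ico 0 T) ∧
    (∀ x ∈ Set.Icc (0:ℝ) 1, ContinuousOn (Dt x) (Set.Ico 0 T)) ∧
    (∀ x ∈ Set.Icc (0:ℝ) 1, ∀ t ∈ Set.Ico (0:ℝ) T, 0 < D x t) ∧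
    (∀ x ∈ Set.Icc (0:ℝ) 1, D x 0 = D_I x) ∧
    (∀ x ∈ Set.Icc (0:ℝ) 1, ∀ t ∈ Set.Ico (0:ℝ) T,
      HasDerivWithinAt (fun s => D x s) (Dt x t) (Set.Ico 0 T) t ∧
      (D x t) ^ 2 * Dt x t =
        (∫ y in (0:ℝ)..x, S y) *
          ∫ y in (0:ℝ)..x,
            iteratedDeriv 2 Φ (∫ z in y..(1:ℝ), (∫ w in (0:ℝ)..z, S w) / D z t) * S y)

/-- Local existence and uniqueness: for continuous `S`, `Φ ∈ C²` with
locally Lipschitz second derivative, and continuous initial datum `D_I ≥ γ > 0`, there is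
a `T > 0` and a unique positive solution of the integro-differential system on
`[0,1] × [0,T)`. -/
theorem stmt_2
    (S : ℝ → ℝ) (hS : ContinuousOn S (Icc 0 1))
    (Φ : ℝ → ℝ) (hΦ : ContDiff ℝ 2 Φ)
    (hlip : LocallyLipschitz (iteratedDeriv 2 Φ))
    (γ : ℝ) (hγ : 0 < γ)
    (D_I : ℝ → ℝ) (hDIc : ContinuousOn D_I (Icc 0 1))
    (hDIγ : ∀ x ∈ Icc (0:ℝ) 1, γ ≤ D_I x) :
    ∃ T : ℝ, 0 < T ∧
      (∃ D : ℝ → ℝ → ℝ, IsSolOn S Φ D_I T D) ∧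
      (∀ D D' : ℝ → ℝ → ℝ, IsSolOn S Φ D_I T D → IsSolOn S Φ D_I T D' →
        ∀ x ∈ Icc (0:ℝ) 1, ∀ t ∈ Ico (0:ℝ) T, D x t = D' x t) := by
  classical
  have h01 : (0:ℝ) ≤ 1 := zero_le_one
  set pr : ℝ → ℝ := fun z => ((projIcc (0:ℝ) 1 h01 z : ↥(Icc (0:ℝ) 1)) : ℝ) with hprdef
  have hprc : Continuous pr := continuous_subtype_val.comp continuous_projIcc
  have hprmem : ∀ z, pr z ∈ Icc (0:ℝ) 1 := fun z => (projIcc (0:ℝ) 1 h01 z).2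
  have hpreq : ∀ z ∈ Icc (0:ℝ) 1, pr z = z := fun z hz => by
    simp only [hprdef, projIcc_of_mem h01 hz]
  set Sc : ℝ → ℝ := fun z => S (pr z) with hScdef
  have hScc : Continuous Sc := hS.comp_continuous hprc hprmem
  have hSceq : ∀ z ∈ Icc (0:ℝ) 1, Sc z = S z := fun z hz => by
    simp only [hScdef]; rw [hpreq z hz]
  obtain ⟨Ms0, hMs0⟩ := isCompact_Icc.exists_bound_of_continuousOn hS
  set Ms := max Ms0 0 with hMsdef
  have hMs : ∀ z, |Sc z| ≤ Ms := fun z =>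
    le_trans (by simpa [Real.norm_eq_abs] using hMs0 _ (hprmem z)) (le_max_left _ _)
  have hΦc : Continuous (iteratedDeriv 2 Φ) := hΦ.continuous_iteratedDeriv 2 le_rfl
  -- reusable bound/Lipschitz constants for arbitrary cutoff level ε
  have key : ∀ ε : ℝ, 0 < ε → ∃ C L : ℝ, 0 ≤ C ∧ 0 ≤ L ∧
      (∀ h : ℝ → ℝ, Continuous h → ∀ x ∈ Icc (0:ℝ) 1, |Ff Sc Φ ε h x| ≤ C) ∧
      (∀ h k : ℝ → ℝ, Continuous h → Continuous k → ∀ δ : ℝ, 0 ≤ δ →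
        (∀ z ∈ Icc (0:ℝ) 1, |h z - k z| ≤ δ) →
        ∀ x ∈ Icc (0:ℝ) 1, |Ff Sc Φ ε h x - Ff Sc Φ ε k x| ≤ L * δ) := by
    intro ε hε
    obtain ⟨B0, hB0⟩ := (isCompact_Icc (a := -(Ms/ε)) (b := Ms/ε)).exists_bound_of_continuousOn
      hΦc.continuousOn
    set B := max B0 0 with hBdef
    have hB : ∀ r ∈ Icc (-(Ms/ε)) (Ms/ε), |iteratedDeriv 2 Φ r| ≤ B := fun r hr =>
      le_trans (by simpa [Real.norm_eq_abs] using hB0 r hr) (le_max_left _ _)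
    obtain ⟨K, hK0, hK⟩ := locLip_bound hlip (-(Ms/ε)) (Ms/ε)
    have hMs0' : (0:ℝ) ≤ Ms := le_max_right _ _
    have hB0' : (0:ℝ) ≤ B := le_max_right _ _
    refine ⟨Ms * (B * Ms) / ε ^ 2, Ms * (K * Ms ^ 2 / ε ^ 4 + 2 * B * Ms / ε ^ 3),
      by positivity, by positivity, ?_, ?_⟩
    · intro h hh x hx; exact Ff_bound hMs hε hB hx
    · intro h k hh hk δ hδ0 hδ x hx
      exact Ff_diff hScc hMs hε hΦc hh hk hB hK0 hK hδ hδ0 hx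
  -- Picard-Lindelöf in C([0,1], ℝ)
  set ε₀ : ℝ := γ / 2 with hε₀def
  have hε₀ : 0 < ε₀ := half_pos hγ
  obtain ⟨C, L, hC0, hL0, hCb, hLb⟩ := key ε₀ hε₀
  set DI0 : C(↥(Icc (0:ℝ) 1), ℝ) := ⟨fun x => D_I ↑x, hDIc.restrict⟩ with hDI0def
  have hρc : ∀ f : C(↥(Icc (0:ℝ) 1), ℝ),
      Continuous (fun z => f (projIcc (0:ℝ) 1 h01 z)) :=
    fun f => f.continuous.comp continuous_projIcc
  set vf : C(↥(Icc (0:ℝ) 1), ℝ) → C(↥(Icc (0:ℝ) 1), ℝ) := fun f =>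
    ⟨fun x => Ff Sc Φ ε₀ (fun z => f (projIcc (0:ℝ) 1 h01 z)) ↑x,
      (Ff_continuous hScc hΦc hε₀ (hρc f)).comp continuous_subtype_val⟩ with hvfdef
  have hvfb : ∀ f, ‖vf f‖ ≤ C := by
    intro f
    rw [ContinuousMap.norm_le _ hC0]
    intro x
    rw [Real.norm_eq_abs]
    exact hCb _ (hρc f) ↑x x.2
  have hvfl : ∀ f g, dist (vf f) (vf g) ≤ L * dist f g := by
    intro f g
    rw [ContinuousMap.dist_le (by positivity)]
    intro x
    rw [Real.dist_eq]
    apply hLb _ _ (hρc f) (hρc g) (dist f g) dist_nonneg _ ↑x x.2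
    intro z _
    rw [← Real.dist_eq]
    exact ContinuousMap.dist_apply_le_dist _
  have hvflip : LipschitzWith (Real.toNNReal L) vf := by
    apply LipschitzWith.of_dist_le_mul
    intro f g; rw [Real.coe_toNNReal L hL0]; exact hvfl f g
  have hpl : IsPicardLindelof (fun _ : ℝ => vf) (⟨0, ⟨le_rfl, zero_le_one⟩⟩ : Icc (0:ℝ) 1) DI0
      (Real.toNNReal C) 0 (Real.toNNReal C) (Real.toNNReal L) :=
    IsPicardLindelof.of_time_independent (fun x _ => (hvfb x).trans (Real.le_coe_toNNReal C))
      hvflip.lipschitzOnWith (by norm_num)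
  obtain ⟨f, hf0, hfd⟩ := hpl.exists_eq_forall_mem_Icc_hasDerivWithinAt₀
  replace hf0 : f 0 = DI0 := hf0
  set T := min 1 (γ / (2 * (C + 1))) with hTdef
  have hT0 : 0 < T := lt_min one_pos (by positivity)
  have hT1 : T ≤ 1 := min_le_left _ _
  have hTγ : C * T ≤ γ / 2 := by
    have h1 : T ≤ γ / (2 * (C + 1)) := min_le_right _ _
    have h2 : (γ / (2 * (C + 1))) * (2 * (C + 1)) = γ := by field_simp
    nlinarith [mul_le_mul_of_nonneg_left h1 hC0]
  have hIcoIcc : Ico (0:ℝ) T ⊆ Icc (0:ℝ) 1 := fun s hs => ⟨hs.1, le_trans hs.2.le hT1⟩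
  have hfc : ContinuousOn f (Icc (0:ℝ) 1) := fun s hs => (hfd s hs).continuousWithinAt
  have hflow : ∀ t ∈ Ico (0:ℝ) T, ∀ x : ↥(Icc (0:ℝ) 1), ε₀ ≤ f t x := by
    intro t ht x
    have h1 : ‖f t - f 0‖ ≤ C * ‖t - (0:ℝ)‖ :=
      Convex.norm_image_sub_le_of_norm_hasDerivWithin_le
        (fun s hs => hfd s hs) (fun s _ => hvfb (f s)) (convex_Icc 0 1)
        ⟨le_rfl, zero_le_one⟩ (hIcoIcc ht)
    have h2 : ‖t - (0:ℝ)‖ ≤ T := by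
      rw [sub_zero, Real.norm_eq_abs, abs_of_nonneg ht.1]; exact ht.2.le
    have h3 : |f t x - f 0 x| ≤ ‖f t - f 0‖ := by
      have := ContinuousMap.norm_coe_le_norm (f t - f 0) x
      rw [ContinuousMap.sub_apply] at this
      simpa [Real.norm_eq_abs] using this
    have hD0x : f 0 x = DI0 x := by rw [hf0]
    have h4 : γ ≤ DI0 x := hDIγ ↑x x.2
    have h5 : C * ‖t - (0:ℝ)‖ ≤ γ / 2 := le_trans (mul_le_mul_of_nonneg_left h2 hC0) hTγ
    have h6 := (abs_le.1 h3).1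
    rw [hε₀def]
    rw [hD0x] at h6
    linarith
  refine ⟨T, hT0, ⟨fun x t => f t (projIcc (0:ℝ) 1 h01 x), ?_⟩, ?_⟩
  · -- existence
    refine ⟨fun x t => vf (f t) (projIcc (0:ℝ) 1 h01 x), ?_, ?_, ?_, ?_, ?_⟩
    · -- joint continuity
      have hmap : ContinuousOn (fun p : ℝ × ℝ =>
          ((f p.2, projIcc (0:ℝ) 1 h01 p.1) : C(↥(Icc (0:ℝ) 1), ℝ) × ↥(Icc (0:ℝ) 1)))
          (Icc (0:ℝ) 1 ×ˢ Ico (0:ℝ) T) :=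
        (hfc.comp continuous_snd.continuousOn (fun p hp => hIcoIcc hp.2)).prodMk
          ((continuous_projIcc.comp continuous_fst).continuousOn)
      exact ContinuousEval.continuous_eval.comp_continuousOn hmap
    · -- continuity of Dt in t
      intro x _
      exact ((ContinuousEvalConst.continuous_eval_const
        (projIcc (0:ℝ) 1 h01 x)).comp hvflip.continuous).comp_continuousOn
        (hfc.mono hIcoIcc)
    · -- positivity
      intro x _ t ht
      exact lt_of_lt_of_le hε₀ (hflow t ht _)
    · -- initial condition
      intro x hx
      have hXx : ((projIcc (0:ℝ) 1 h01 x : ↥(Icc (0:ℝ) 1)) : ℝ) = x := hpreq x hx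
      calc f 0 (projIcc (0:ℝ) 1 h01 x) = DI0 (projIcc (0:ℝ) 1 h01 x) := by rw [hf0]
        _ = D_I ((projIcc (0:ℝ) 1 h01 x : ↥(Icc (0:ℝ) 1)) : ℝ) := rfl
        _ = D_I x := by rw [hXx]
    · -- the ODE
      intro x hx t ht
      have hXx : ((projIcc (0:ℝ) 1 h01 x : ↥(Icc (0:ℝ) 1)) : ℝ) = x := hpreq x hx
      constructor
      · have h1 := (hfd t (hIcoIcc ht)).mono hIcoIcc
        exact (ContinuousMap.evalCLM ℝ
          (projIcc (0:ℝ) 1 h01 x)).hasFDerivAt.comp_hasDerivWithinAt t h1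
      · set ρ : ℝ → ℝ := fun z => f t (projIcc (0:ℝ) 1 h01 z) with hρdef
        have hρlow : ∀ z ∈ Icc (0:ℝ) 1, ε₀ ≤ ρ z := fun z _ => hflow t ht _
        have hFeq := Ff_statement_eq (S := S) (Φ := Φ) (d := ρ)
          hSceq hρlow (fun z _ => rfl) hx
        have hρx0 : ρ x ≠ 0 := ne_of_gt (lt_of_lt_of_le hε₀ (hρlow x hx))
        have hvfX : vf (f t) (projIcc (0:ℝ) 1 h01 x)
            = Ff Sc Φ ε₀ ρ ((projIcc (0:ℝ) 1 h01 x : ↥(Icc (0:ℝ) 1)) : ℝ) := rfl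
        show (ρ x) ^ 2 * vf (f t) (projIcc (0:ℝ) 1 h01 x) = _
        rw [hvfX, hXx, hFeq]
        field_simp
        rfl
  · -- uniqueness
    rintro D D' ⟨Dt, hDc, hDtc, hDpos, hD0, hDeq⟩ ⟨Dt', hDc', hDtc', hDpos', hD0', hDeq'⟩ x hx t ht
    have htT : t < T := ht.2
    have ht0 : (0:ℝ) ≤ t := ht.1
    have hsubK : Icc (0:ℝ) 1 ×ˢ Icc (0:ℝ) t ⊆ Icc (0:ℝ) 1 ×ˢ Ico (0:ℝ) T :=
      fun p hp => ⟨hp.1, hp.2.1, lt_of_le_of_lt hp.2.2 htT⟩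
    have hKc : IsCompact (Icc (0:ℝ) 1 ×ˢ Icc (0:ℝ) t) := isCompact_Icc.prod isCompact_Icc
    have hKne : (Icc (0:ℝ) 1 ×ˢ Icc (0:ℝ) t).Nonempty :=
      ⟨(0, 0), ⟨⟨le_rfl, zero_le_one⟩, ⟨le_rfl, ht0⟩⟩⟩
    set W : ℝ × ℝ → ℝ := fun p => min (D p.1 p.2) (D' p.1 p.2) with hWdef
    have hWc : ContinuousOn W (Icc (0:ℝ) 1 ×ˢ Icc (0:ℝ) t) :=
      continuous_min.comp_continuousOn ((hDc.mono hsubK).prodMk (hDc'.mono hsubK))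
    obtain ⟨p₀, hp₀K, hp₀⟩ := hKc.exists_isMinOn hKne hWc
    set m := W p₀ with hmdef
    have hm0 : 0 < m :=
      lt_min (hDpos _ hp₀K.1 _ (hsubK hp₀K).2) (hDpos' _ hp₀K.1 _ (hsubK hp₀K).2)
    have hmle : ∀ z ∈ Icc (0:ℝ) 1, ∀ τ ∈ Icc (0:ℝ) t, m ≤ D z τ ∧ m ≤ D' z τ := by
      intro z hz τ hτ
      have h := hp₀ (Set.mk_mem_prod hz hτ)
      exact ⟨le_trans h (min_le_left _ _), le_trans h (min_le_right _ _)⟩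
    obtain ⟨C', L', hC0', hL0', hCb', hLb'⟩ := key m hm0
    have hmemT : ∀ τ ∈ Icc (0:ℝ) t, τ ∈ Ico (0:ℝ) T :=
      fun τ hτ => ⟨hτ.1, lt_of_le_of_lt hτ.2 htT⟩
    -- slice continuity
    have hslice : ∀ τ ∈ Icc (0:ℝ) t, Continuous (fun z => D (pr z) τ) := by
      intro τ hτ
      exact (hDc.comp_continuous (hprc.prodMk continuous_const)
        (fun z => ⟨hprmem z, hmemT τ hτ⟩))
    have hslice' : ∀ τ ∈ Icc (0:ℝ) t, Continuous (fun z => D' (pr z) τ) := by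
      intro τ hτ
      exact (hDc'.comp_continuous (hprc.prodMk continuous_const)
        (fun z => ⟨hprmem z, hmemT τ hτ⟩))
    -- the time derivatives are given by the truncated field
    have hDt_eq : ∀ x' ∈ Icc (0:ℝ) 1, ∀ τ ∈ Icc (0:ℝ) t,
        Dt x' τ = Ff Sc Φ m (fun z => D (pr z) τ) x' := by
      intro x' hx' τ hτ
      obtain ⟨_, heq⟩ := hDeq x' hx' τ (hmemT τ hτ)
      have hρlow : ∀ z ∈ Icc (0:ℝ) 1, m ≤ (fun z => D (pr z) τ) z := by
        intro z hz
        simp only []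
        rw [hpreq z hz]
        exact (hmle z hz τ hτ).1
      have hρd : ∀ z ∈ Icc (0:ℝ) 1, (fun z => D (pr z) τ) z = D z τ := by
        intro z hz; simp only []; rw [hpreq z hz]
      have hF := Ff_statement_eq (S := S) (Φ := Φ) hSceq hρlow hρd hx'
      have hne : D x' τ ≠ 0 := ne_of_gt (hDpos x' hx' τ (hmemT τ hτ))
      rw [hF, eq_div_iff (pow_ne_zero 2 hne)]
      linear_combination heq
    have hDt'_eq : ∀ x' ∈ Icc (0:ℝ) 1, ∀ τ ∈ Icc (0:ℝ) t,
        Dt' x' τ = Ff Sc Φ m (fun z => D' (pr z) τ) x' := by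
      intro x' hx' τ hτ
      obtain ⟨_, heq⟩ := hDeq' x' hx' τ (hmemT τ hτ)
      have hρlow : ∀ z ∈ Icc (0:ℝ) 1, m ≤ (fun z => D' (pr z) τ) z := by
        intro z hz
        simp only []
        rw [hpreq z hz]
        exact (hmle z hz τ hτ).2
      have hρd : ∀ z ∈ Icc (0:ℝ) 1, (fun z => D' (pr z) τ) z = D' z τ := by
        intro z hz; simp only []; rw [hpreq z hz]
      have hF := Ff_statement_eq (S := S) (Φ := Φ) hSceq hρlow hρd hx'
      have hne : D' x' τ ≠ 0 := ne_of_gt (hDpos' x' hx' τ (hmemT τ hτ))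
      rw [hF, eq_div_iff (pow_ne_zero 2 hne)]
      linear_combination heq
    -- fundamental theorem of calculus for the difference
    have hFTC : ∀ x' ∈ Icc (0:ℝ) 1, ∀ s ∈ Icc (0:ℝ) t,
        D x' s - D' x' s = ∫ τ in (0:ℝ)..s, (Dt x' τ - Dt' x' τ) := by
      intro x' hx' s hs
      have hcont : ContinuousOn (fun τ => D x' τ - D' x' τ) (Icc (0:ℝ) s) := by
        have hx1 : ContinuousOn (fun τ => D x' τ) (Icc (0:ℝ) s) :=
          (hDc.comp (continuous_const.prodMk continuous_id).continuousOn
            (fun τ hτ => ⟨hx', hmemT τ ⟨hτ.1, hτ.2.trans hs.2⟩⟩))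
        have hx2 : ContinuousOn (fun τ => D' x' τ) (Icc (0:ℝ) s) :=
          (hDc'.comp (continuous_const.prodMk continuous_id).continuousOn
            (fun τ hτ => ⟨hx', hmemT τ ⟨hτ.1, hτ.2.trans hs.2⟩⟩))
        exact hx1.sub hx2
      have hder : ∀ τ ∈ Ioo (0:ℝ) s,
          HasDerivAt (fun τ => D x' τ - D' x' τ) (Dt x' τ - Dt' x' τ) τ := by
        intro τ hτ
        have hτI : τ ∈ Ico (0:ℝ) T := ⟨hτ.1.le, lt_of_lt_of_le hτ.2 (hs.2.trans_lt htT).le⟩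
        have hnhds : Ico (0:ℝ) T ∈ nhds τ := by
          apply mem_nhds_iff.2
          exact ⟨Ioo (0:ℝ) T, Ioo_subset_Ico_self, isOpen_Ioo,
            ⟨hτ.1, lt_of_lt_of_le hτ.2 (le_trans hs.2 htT.le)⟩⟩
        have h1 := ((hDeq x' hx' τ hτI).1).hasDerivAt hnhds
        have h2 := ((hDeq' x' hx' τ hτI).1).hasDerivAt hnhds
        exact h1.sub h2
      have hint : IntervalIntegrable (fun τ => Dt x' τ - Dt' x' τ) volume 0 s := by
        apply ContinuousOn.intervalIntegrable_of_Icc hs.1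
        exact ((hDtc x' hx').mono (fun τ hτ => hmemT τ ⟨hτ.1, hτ.2.trans hs.2⟩)).sub
          ((hDtc' x' hx').mono (fun τ hτ => hmemT τ ⟨hτ.1, hτ.2.trans hs.2⟩))
      have := intervalIntegral.integral_eq_sub_of_hasDeriv_right_of_le hs.1 hcont
        (fun τ hτ => (hder τ hτ).hasDerivWithinAt) hint
      rw [this, hD0 x' hx', hD0' x' hx']
      ring
    -- the sup-distance function φ
    set Z : C(↥(Icc (0:ℝ) t) × ↥(Icc (0:ℝ) 1), ℝ) :=
      ⟨fun q => D (↑q.2) (↑q.1) - D' (↑q.2) (↑q.1), by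
        have hcj : Continuous (fun q : ↥(Icc (0:ℝ) t) × ↥(Icc (0:ℝ) 1) =>
            (((q.2 : ℝ), (q.1 : ℝ)) : ℝ × ℝ)) :=
          (continuous_subtype_val.comp continuous_snd).prodMk
            (continuous_subtype_val.comp continuous_fst)
        have hmem : ∀ q : ↥(Icc (0:ℝ) t) × ↥(Icc (0:ℝ) 1),
            (((q.2 : ℝ), (q.1 : ℝ)) : ℝ × ℝ) ∈ Icc (0:ℝ) 1 ×ˢ Icc (0:ℝ) t :=
          fun q => ⟨q.2.2, q.1.2⟩
        exact ((hDc.mono hsubK).comp_continuous hcj hmem).sub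
          ((hDc'.mono hsubK).comp_continuous hcj hmem)⟩ with hZdef
    set φ : ℝ → ℝ := fun s => ‖Z.curry (projIcc 0 t ht0 s)‖ with hφdef
    have hφc : Continuous φ :=
      continuous_norm.comp (Z.curry.continuous.comp continuous_projIcc)
    have hφ0 : ∀ s, 0 ≤ φ s := fun s => norm_nonneg _
    have hφval : ∀ s ∈ Icc (0:ℝ) t, ∀ z ∈ Icc (0:ℝ) 1, |D z s - D' z s| ≤ φ s := by
      intro s hs z hz
      have hZa : (Z.curry (projIcc 0 t ht0 s)) ⟨z, hz⟩ = D z s - D' z s := by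
        rw [ContinuousMap.curry_apply]
        show D z ↑(projIcc 0 t ht0 s) - D' z ↑(projIcc 0 t ht0 s) = _
        rw [projIcc_of_mem ht0 hs]
      calc |D z s - D' z s| = ‖(Z.curry (projIcc 0 t ht0 s)) ⟨z, hz⟩‖ := by
            rw [hZa, Real.norm_eq_abs]
        _ ≤ φ s := ContinuousMap.norm_coe_le_norm _ _
    -- the integral inequality
    have hκ : ∀ s ∈ Icc (0:ℝ) t, φ s ≤ L' * ∫ τ in (0:ℝ)..s, φ τ := by
      intro s hs
      have hψnn : 0 ≤ ∫ τ in (0:ℝ)..s, φ τ :=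
        intervalIntegral.integral_nonneg hs.1 (fun τ _ => hφ0 τ)
      have hLψ0 : 0 ≤ L' * ∫ τ in (0:ℝ)..s, φ τ := mul_nonneg hL0' hψnn
      rw [hφdef]
      rw [ContinuousMap.norm_le _ hLψ0]
      intro xh
      have hxh := xh.2
      have hZa : (Z.curry (projIcc 0 t ht0 s)) xh = D ↑xh s - D' ↑xh s := by
        rw [ContinuousMap.curry_apply]
        show D ↑xh ↑(projIcc 0 t ht0 s) - D' ↑xh ↑(projIcc 0 t ht0 s) = _
        rw [projIcc_of_mem ht0 hs]
      rw [hZa, Real.norm_eq_abs, hFTC ↑xh hxh s hs]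
      have hii1 : IntervalIntegrable (fun τ => ‖Dt ↑xh τ - Dt' ↑xh τ‖) volume 0 s := by
        apply ContinuousOn.intervalIntegrable_of_Icc hs.1
        exact (((hDtc ↑xh hxh).mono (fun τ hτ => hmemT τ ⟨hτ.1, hτ.2.trans hs.2⟩)).sub
          ((hDtc' ↑xh hxh).mono (fun τ hτ => hmemT τ ⟨hτ.1, hτ.2.trans hs.2⟩))).norm
      have hii2 : IntervalIntegrable (fun τ => L' * φ τ) volume 0 s :=
        (continuous_const.mul hφc).intervalIntegrable _ _
      calc |∫ τ in (0:ℝ)..s, (Dt ↑xh τ - Dt' ↑xh τ)|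
          ≤ ∫ τ in (0:ℝ)..s, ‖Dt ↑xh τ - Dt' ↑xh τ‖ := by
            rw [← Real.norm_eq_abs]
            exact intervalIntegral.norm_integral_le_integral_norm hs.1
        _ ≤ ∫ τ in (0:ℝ)..s, L' * φ τ := by
            apply intervalIntegral.integral_mono_on hs.1 hii1 hii2
            intro τ hτ
            have hτt : τ ∈ Icc (0:ℝ) t := ⟨hτ.1, hτ.2.trans hs.2⟩
            rw [Real.norm_eq_abs, hDt_eq ↑xh hxh τ hτt, hDt'_eq ↑xh hxh τ hτt]
            apply hLb' _ _ (hslice τ hτt) (hslice' τ hτt) (φ τ) (hφ0 τ) _ ↑xh hxh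
            intro z hz
            rw [hpreq z hz]
            exact hφval τ hτt z hz
        _ = L' * ∫ τ in (0:ℝ)..s, φ τ := intervalIntegral.integral_const_mul _ _
    -- Grönwall
    have hψd : ∀ s : ℝ, HasDerivAt (fun u => ∫ τ in (0:ℝ)..u, φ τ) (φ s) s :=
      fun s => hasDerivAt_primitive hφc 0 s
    have hgr := norm_le_gronwallBound_of_norm_deriv_right_le
      (f := fun u => ∫ τ in (0:ℝ)..u, φ τ) (f' := φ)
      (δ := 0) (K := L') (ε := 0) (a := 0) (b := t)
      (fun s _ => (hψd s).continuousAt.continuousWithinAt)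
      (fun s _ => (hψd s).hasDerivWithinAt)
      (by simp)
      (by
        intro s hs
        have hψnn : 0 ≤ ∫ τ in (0:ℝ)..s, φ τ :=
          intervalIntegral.integral_nonneg hs.1 (fun τ _ => hφ0 τ)
        rw [Real.norm_eq_abs, Real.norm_eq_abs, abs_of_nonneg (hφ0 s), abs_of_nonneg hψnn,
          add_zero]
        exact hκ s ⟨hs.1, hs.2.le⟩)
    have hψt : (∫ τ in (0:ℝ)..t, φ τ) = 0 := by
      have h1 := hgr t ⟨ht0, le_rfl⟩
      rw [gronwallBound_ε0] at h1
      have h2 : ‖∫ τ in (0:ℝ)..t, φ τ‖ ≤ 0 := by simpa using h1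
      have h3 := norm_nonneg (∫ τ in (0:ℝ)..t, φ τ)
      have h4 : ‖∫ τ in (0:ℝ)..t, φ τ‖ = 0 := le_antisymm h2 h3
      simpa [Real.norm_eq_abs, abs_eq_zero] using h4
    have hφt : φ t = 0 := by
      have h1 := hκ t ⟨ht0, le_rfl⟩
      rw [hψt, mul_zero] at h1
      exact le_antisymm h1 (hφ0 t)
    have := hφval t ⟨ht0, le_rfl⟩ x hx
    rw [hφt] at this
    have habs := abs_nonneg (D x t - D' x t)
    have : |D x t - D' x t| = 0 := le_antisymm this habs
    have := abs_eq_zero.1 this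
    linarith [this]
end

section
/- Let S ∈ L¹(0,1), R(x) = ∫₀ˣ S(y) dy, Φ : ℝ → ℝ convex of class C², and let D : [0,1] × [0,∞) → ℝ be a positive solution of D² ∂ₜD = R(x) ∫₀ˣ Φ''(u(y,t)) S(y) dy with u(y,t) = ∫_y¹ R(z)/D(z,t) dz and initial condition D(x,0) = D_I(x) ≥ γ > 0. If S(x) ≥ 0 almost everywhere on (0,1), or S(x) ≤ 0 almost everywhere on (0,1), then ∂ₜD(x,t) ≥ 0 for all (x,t), and consequently D(x,t) ≥ γ for all (x,t) ∈ [0,1] × [0,∞). -/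
open MeasureTheory Set

/-- A differentiable monotone function has nonnegative derivative. -/
lemma deriv_nonneg_of_monotone {f : ℝ → ℝ} (hf : Differentiable ℝ f) (hm : Monotone f)
    (t : ℝ) : 0 ≤ deriv f t := by
  have h := hasDerivAt_iff_tendsto_slope.mp (hf t).hasDerivAt
  have h' : Filter.Tendsto (slope f t) (nhdsWithin t (Ioi t)) (nhds (deriv f t)) :=
    h.mono_left (nhdsWithin_mono t fun y hy => ne_of_gt hy)
  refine ge_of_tendsto h' ?_
  filter_upwards [self_mem_nhdsWithin] with y hy
  have hyt : t < y := hy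
  have : f t ≤ f y := hm hyt.le
  rw [slope_def_field]
  exact div_nonneg (sub_nonneg.mpr this) (sub_nonneg.mpr hyt.le)

/-- Second derivative of a `C²` convex function is nonnegative. -/
lemma iteratedDeriv_two_nonneg {Φ : ℝ → ℝ} (hΦ : ContDiff ℝ 2 Φ)
    (hconv : ConvexOn ℝ univ Φ) (s : ℝ) : 0 ≤ iteratedDeriv 2 Φ s := by
  have h2 : ContDiff ℝ (1 + 1) Φ := by norm_num at hΦ ⊢; exact_mod_cast hΦ
  have hd := (contDiff_succ_iff_deriv.mp h2).2.2
  have hd1 : Differentiable ℝ Φ := (contDiff_succ_iff_deriv.mp h2).1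
  have hmono : Monotone (deriv Φ) := by
    have := hconv.monotoneOn_deriv (fun x _ => hd1 x)
    exact monotoneOn_univ.mp this
  have hdd : Differentiable ℝ (deriv Φ) := hd.differentiable (by norm_num)
  have : 0 ≤ deriv (deriv Φ) s := deriv_nonneg_of_monotone hdd hmono s
  simpa [iteratedDeriv_succ, iteratedDeriv_one] using this

/-- If `S` has a.e. constant sign on `(0,1)`, then the diffusivity of
the 1D gradient flow with mixed Neumann–Dirichlet boundary conditions is nondecreasing
in time, hence stays above its initial lower bound `γ`. -/
theorem stmt_4
    (S : ℝ → ℝ) (hS : IntervalIntegrable S volume 0 1)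
    (R : ℝ → ℝ) (hR : ∀ x, R x = ∫ y in (0:ℝ)..x, S y)
    (Φ : ℝ → ℝ) (hΦ : ContDiff ℝ 2 Φ) (hconv : ConvexOn ℝ univ Φ)
    (γ : ℝ) (hγ : 0 < γ)
    (D Dt : ℝ → ℝ → ℝ) (D_I : ℝ → ℝ)
    (hDpos : ∀ x ∈ Icc (0:ℝ) 1, ∀ t ∈ Ici (0:ℝ), 0 < D x t)
    (hD0 : ∀ x ∈ Icc (0:ℝ) 1, D x 0 = D_I x)
    (hDI : ∀ x ∈ Icc (0:ℝ) 1, γ ≤ D_I x)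
    (hODE : ∀ x ∈ Icc (0:ℝ) 1, ∀ t ∈ Ici (0:ℝ),
      HasDerivWithinAt (fun s => D x s) (Dt x t) (Ici 0) t ∧
      (D x t) ^ 2 * Dt x t =
        R x * ∫ y in (0:ℝ)..x,
          iteratedDeriv 2 Φ (∫ z in y..(1:ℝ), R z / D z t) * S y)
    (hsign : (∀ᵐ y ∂(volume.restrict (Ioc (0:ℝ) 1)), 0 ≤ S y) ∨
             (∀ᵐ y ∂(volume.restrict (Ioc (0:ℝ) 1)), S y ≤ 0)) :
    ∀ x ∈ Icc (0:ℝ) 1, ∀ t ∈ Ici (0:ℝ), 0 ≤ Dt x t ∧ γ ≤ D x t := by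
  have hΦ'' : ∀ s, 0 ≤ iteratedDeriv 2 Φ s := iteratedDeriv_two_nonneg hΦ hconv
  -- Step 1: the time derivative is nonnegative everywhere.
  have key : ∀ x ∈ Icc (0:ℝ) 1, ∀ t ∈ Ici (0:ℝ), 0 ≤ Dt x t := by
    intro x hx t ht
    obtain ⟨hder, heq⟩ := hODE x hx t ht
    have hx0 : (0:ℝ) ≤ x := hx.1
    have hsub : Ioc (0:ℝ) x ⊆ Ioc (0:ℝ) 1 := Ioc_subset_Ioc le_rfl hx.2
    have hrhs : 0 ≤ R x * ∫ y in (0:ℝ)..x,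
        iteratedDeriv 2 Φ (∫ z in y..(1:ℝ), R z / D z t) * S y := by
      rcases hsign with hpos | hneg
      · have hR0 : 0 ≤ R x := by
          rw [hR, intervalIntegral.integral_of_le hx0]
          exact setIntegral_nonneg_of_ae_restrict
            (ae_restrict_of_ae_restrict_of_subset hsub hpos)
        have hI : 0 ≤ ∫ y in (0:ℝ)..x,
            iteratedDeriv 2 Φ (∫ z in y..(1:ℝ), R z / D z t) * S y := by
          rw [intervalIntegral.integral_of_le hx0]
          refine setIntegral_nonneg_of_ae_restrict ?_
          filter_upwards [ae_restrict_of_ae_restrict_of_subset hsub hpos] with y hy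
          exact mul_nonneg (hΦ'' _) hy
        exact mul_nonneg hR0 hI
      · have hR0 : R x ≤ 0 := by
          rw [hR, intervalIntegral.integral_of_le hx0]
          exact setIntegral_nonpos_of_ae_restrict
            (ae_restrict_of_ae_restrict_of_subset hsub hneg)
        have hI : (∫ y in (0:ℝ)..x,
            iteratedDeriv 2 Φ (∫ z in y..(1:ℝ), R z / D z t) * S y) ≤ 0 := by
          rw [intervalIntegral.integral_of_le hx0]
          refine setIntegral_nonpos_of_ae_restrict ?_
          filter_upwards [ae_restrict_of_ae_restrict_of_subset hsub hneg] with y hy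
          exact mul_nonpos_of_nonneg_of_nonpos (hΦ'' _) hy
        exact mul_nonneg_iff.mpr (Or.inr ⟨hR0, hI⟩)
    have hD2 : 0 < (D x t) ^ 2 := pow_pos (hDpos x hx t ht) 2
    nlinarith [heq, hrhs, hD2]
  -- Step 2: D is monotone in time, hence stays above γ.
  intro x hx t ht
  refine ⟨key x hx t ht, ?_⟩
  have hmonoD : MonotoneOn (fun s => D x s) (Ici 0) := by
    apply monotoneOn_of_hasDerivWithinAt_nonneg (convex_Ici (0:ℝ))
      (f' := fun s => Dt x s)
    · exact fun s hs => ((hODE x hx s hs).1).continuousWithinAt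
    · intro s hs
      rw [interior_Ici] at hs
      exact ((hODE x hx s (mem_Ici.mpr (mem_Ioi.mp hs).le)).1).mono (by rw [interior_Ici]; exact Ioi_subset_Ici_self)
    · intro s hs
      rw [interior_Ici] at hs
      exact key x hx s (mem_Ici.mpr (mem_Ioi.mp hs).le)
  have h0t : D x 0 ≤ D x t := hmonoD (self_mem_Ici) ht ht
  calc γ ≤ D_I x := hDI x hx
    _ = D x 0 := (hD0 x hx).symm
    _ ≤ D x t := h0t
end

section
/- Let S : [0,1] → ℝ be continuous, R(x) = ∫₀ˣ S(y) dy, let D : [0,1] → ℝ be continuous and strictly positive, let Φ : ℝ → ℝ be of class C³, and set u(x) = ∫ₓ¹ R(y)/D(y) dy (so u'(x) = −R(x)/D(x)). Then for every x ∈ [0,1]: R(x) ∫₀ˣ Φ''(u(y)) S(y) dy = R(x)² Φ''(u(x)) + R(x) ∫₀ˣ Φ'''(u(y)) (R(y)²/D(y)) dy. -/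
/-!
The identity is integration by parts against `Φ''(u)`: since `R' = S` and `u' = -R/D`,
`(Φ''(u) R)' = Φ''(u) S - Φ'''(u) R²/D`, and `Φ''(u(0)) R(0) = 0` because `R(0) = 0`.
Multiplying the resulting formula by `R(x)` gives the claim.
-/

open MeasureTheory Set

section Primitive

variable {E : Type*} [NormedAddCommGroup E] [NormedSpace ℝ E] {f : ℝ → E} {a b y : ℝ}

theorem ContinuousOn.hasDerivAt_integral_right [CompleteSpace E] (hf : ContinuousOn f (Icc a b))
    (hy : y ∈ Ioo a b) : HasDerivAt (fun t ↦ ∫ s in a..t, f s) (f y) y :=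
  intervalIntegral.integral_hasDerivAt_right
    ((hf.mono (Icc_subset_Icc le_rfl hy.2.le)).intervalIntegrable_of_Icc hy.1.le)
    ((hf.mono Ioo_subset_Icc_self).stronglyMeasurableAtFilter isOpen_Ioo y hy)
    (hf.continuousAt (Icc_mem_nhds hy.1 hy.2))

theorem ContinuousOn.hasDerivAt_integral_left [CompleteSpace E] (hf : ContinuousOn f (Icc a b))
    (hy : y ∈ Ioo a b) : HasDerivAt (fun t ↦ ∫ s in t..b, f s) (-f y) y :=
  intervalIntegral.integral_hasDerivAt_left
    ((hf.mono (Icc_subset_Icc hy.1.le le_rfl)).intervalIntegrable_of_Icc hy.2.le)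
    ((hf.mono Ioo_subset_Icc_self).stronglyMeasurableAtFilter isOpen_Ioo y hy)
    (hf.continuousAt (Icc_mem_nhds hy.1 hy.2))

theorem ContinuousOn.continuousOn_integral_right (hf : ContinuousOn f (Icc a b)) (hab : a ≤ b) :
    ContinuousOn (fun t ↦ ∫ s in a..t, f s) (Icc a b) := by
  rw [← uIcc_of_le hab] at hf ⊢
  exact intervalIntegral.continuousOn_primitive_interval (hf.integrableOn_compact isCompact_uIcc)

theorem ContinuousOn.continuousOn_integral_left (hf : ContinuousOn f (Icc a b)) (hab : a ≤ b) :
    ContinuousOn (fun t ↦ ∫ s in t..b, f s) (Icc a b) := by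
  rw [← uIcc_of_le hab] at hf ⊢
  exact intervalIntegral.continuousOn_primitive_interval_left
    (hf.integrableOn_compact isCompact_uIcc)

end Primitive

theorem integral_comp_mul_deriv_eq {ψ ψ' u u' v v' : ℝ → ℝ} {a b : ℝ} (hab : a ≤ b)
    (hψ : ∀ z, HasDerivAt ψ (ψ' z) z) (hψ' : Continuous ψ')
    (hu : ContinuousOn u (Icc a b)) (huu' : ∀ y ∈ Ioo a b, HasDerivAt u (u' y) y)
    (hu' : ContinuousOn u' (Icc a b))
    (hv : ContinuousOn v (Icc a b)) (hvv' : ∀ y ∈ Ioo a b, HasDerivAt v (v' y) y)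
    (hv' : ContinuousOn v' (Icc a b)) :
    ∫ y in a..b, ψ (u y) * v' y =
      ψ (u b) * v b - ψ (u a) * v a - ∫ y in a..b, ψ' (u y) * u' y * v y := by
  have hψc : Continuous ψ := continuous_iff_continuousAt.2 fun z ↦ (hψ z).continuousAt
  rw [← uIcc_of_le hab] at hu hu' hv hv'
  refine intervalIntegral.integral_mul_deriv_eq_deriv_mul_of_hasDerivAt
    (hψc.comp_continuousOn hu) hv (fun y hy ↦ ?_) (fun y hy ↦ ?_)
    (((hψ'.comp_continuousOn hu).mul hu').intervalIntegrable) hv'.intervalIntegrable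
  · rw [min_eq_left hab, max_eq_right hab] at hy
    exact (hψ (u y)).comp y (huu' y hy)
  · rw [min_eq_left hab, max_eq_right hab] at hy
    exact hvv' y hy

/-- Integration-by-parts identity: with `u(x) = ∫ₓ¹ R(y)/D(y) dy`,
`R(x) ∫₀ˣ Φ''(u) S dy = R(x)² Φ''(u(x)) + R(x) ∫₀ˣ Φ'''(u) (R²/D) dy`. -/
theorem stmt_7
    (S : ℝ → ℝ) (hS : ContinuousOn S (Icc 0 1))
    (R : ℝ → ℝ) (hR : ∀ x, R x = ∫ y in (0:ℝ)..x, S y)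
    (D : ℝ → ℝ) (hDc : ContinuousOn D (Icc 0 1))
    (hDpos : ∀ x ∈ Icc (0:ℝ) 1, 0 < D x)
    (Φ : ℝ → ℝ) (hΦ : ContDiff ℝ 3 Φ)
    (u : ℝ → ℝ) (hu : ∀ x, u x = ∫ y in x..(1:ℝ), R y / D y) :
    ∀ x ∈ Icc (0:ℝ) 1,
      R x * ∫ y in (0:ℝ)..x, iteratedDeriv 2 Φ (u y) * S y =
        R x ^ 2 * iteratedDeriv 2 Φ (u x) +
          R x * ∫ y in (0:ℝ)..x, iteratedDeriv 3 Φ (u y) * (R y ^ 2 / D y) := by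
  rintro x ⟨hx0, hx1⟩
  have hRc : ContinuousOn R (Icc 0 1) := by
    rw [funext hR]; exact hS.continuousOn_integral_right zero_le_one
  have hR' : ∀ y ∈ Ioo (0:ℝ) 1, HasDerivAt R (S y) y := by
    rw [funext hR]; exact fun y ↦ hS.hasDerivAt_integral_right
  have hRD : ContinuousOn (fun y ↦ R y / D y) (Icc 0 1) :=
    hRc.div hDc fun y hy ↦ (hDpos y hy).ne'
  have huc : ContinuousOn u (Icc 0 1) := by
    rw [funext hu]; exact hRD.continuousOn_integral_left zero_le_one
  have hu' : ∀ y ∈ Ioo (0:ℝ) 1, HasDerivAt u (-(R y / D y)) y := by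
    rw [funext hu]; exact fun y ↦ hRD.hasDerivAt_integral_left
  have hΦ'' (z : ℝ) : HasDerivAt (iteratedDeriv 2 Φ) (iteratedDeriv 3 Φ z) z := by
    simpa only [← iteratedDeriv_succ] using
      ((hΦ.differentiable_iteratedDeriv 2 (by norm_num)) z).hasDerivAt
  have hsub : Icc 0 x ⊆ Icc (0:ℝ) 1 := Icc_subset_Icc le_rfl hx1
  have hIoo : Ioo 0 x ⊆ Ioo (0:ℝ) 1 := Ioo_subset_Ioo le_rfl hx1
  have hparts := integral_comp_mul_deriv_eq hx0 hΦ'' (hΦ.continuous_iteratedDeriv 3 le_rfl)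
    (huc.mono hsub) (fun y hy ↦ hu' y (hIoo hy)) (hRD.neg.mono hsub)
    (hRc.mono hsub) (fun y hy ↦ hR' y (hIoo hy)) (hS.mono hsub)
  have hR0 : R 0 = 0 := by rw [hR, intervalIntegral.integral_same]
  have hR2 : ∀ y, iteratedDeriv 3 Φ (u y) * -(R y / D y) * R y =
      -(iteratedDeriv 3 Φ (u y) * (R y ^ 2 / D y)) := fun y ↦ by ring
  simp only [hR2, intervalIntegral.integral_neg, hR0, mul_zero, sub_zero, sub_neg_eq_add]
    at hparts
  rw [hparts]
  ring
end

section
/- Let S : [0,1] → ℝ be continuous, R(x) = ∫₀ˣ S(y) dy, Φ : ℝ → ℝ of class C⁴, D⁰ : [0,1] → ℝ continuous with D⁰ ≥ γ > 0, and D¹ : [0,1] → ℝ continuous. For ε in a neighborhood of 0, define u_ε(x) = ∫ₓ¹ R(y)/(D⁰(y) + εD¹(y)) dy and E(ε) = ∫₀¹ (R(x)²/(D⁰(x) + εD¹(x))) Φ''(u_ε(x)) dx. Then E is twice differentiable at ε = 0 and E''(0) = ∫₀¹ (R(x)²/D⁰(x)) [ 2Φ''(u⁰(x)) (D¹(x)/D⁰(x))²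 + 2Φ'''(u⁰(x)) ( (D¹(x)/D⁰(x)) ∫ₓ¹ R(y)D¹(y)/D⁰(y)² dy + ∫ₓ¹ R(y)D¹(y)²/D⁰(y)³ dy ) + Φ⁽⁴⁾(u⁰(x)) ( ∫ₓ¹ R(y)D¹(y)/D⁰(y)² dy )² ] dx, where u⁰(x) = ∫ₓ¹ R(y)/D⁰(y) dy. -/
open MeasureTheory Set

open intervalIntegral Metric
open scoped Interval




lemma aux_intable {h : ℝ → ℝ} (hc : ContinuousOn h (Icc (0:ℝ) 1)) {x : ℝ}
    (hx : x ∈ Icc (0:ℝ) 1) : IntervalIntegrable h volume x 1 := by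
  apply ContinuousOn.intervalIntegrable
  apply hc.mono
  rw [uIcc_of_le hx.2]
  exact Icc_subset_Icc hx.1 le_rfl

lemma aux_uIoc_sub {x : ℝ} (hx : x ∈ Icc (0:ℝ) 1) : Ι x 1 ⊆ Icc (0:ℝ) 1 := by
  rw [uIoc_of_le hx.2]
  exact (Ioc_subset_Icc_self).trans (Icc_subset_Icc hx.1 le_rfl)

lemma aux_contOn_tail {h : ℝ → ℝ} (hc : ContinuousOn h (Icc (0:ℝ) 1)) :
    ContinuousOn (fun x => ∫ y in x..(1:ℝ), h y) (Icc (0:ℝ) 1) := by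
  have h1 : ContinuousOn (fun x => (∫ y in (0:ℝ)..1, h y) - ∫ y in (0:ℝ)..x, h y)
      (Icc (0:ℝ) 1) := by
    apply continuousOn_const.sub
    have := continuousOn_primitive_interval (a := (0:ℝ)) (b := 1) (μ := volume) (f := h) ?_
    · rwa [uIcc_of_le zero_le_one] at this
    · rw [uIcc_of_le zero_le_one]
      exact hc.integrableOn_compact isCompact_Icc
  apply h1.congr
  intro x hx
  have i1 : IntervalIntegrable h volume 0 x := by
    apply ContinuousOn.intervalIntegrable
    apply hc.mono
    rw [uIcc_of_le hx.1]
    exact Icc_subset_Icc le_rfl hx.2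
  have i2 : IntervalIntegrable h volume x 1 := aux_intable hc hx
  have := integral_add_adjacent_intervals i1 i2
  simp only []
  linarith [this]

lemma aux_tail_bound {h : ℝ → ℝ} {C : ℝ} (hC : ∀ y ∈ Icc (0:ℝ) 1, |h y| ≤ C)
    {x : ℝ} (hx : x ∈ Icc (0:ℝ) 1) : |∫ y in x..(1:ℝ), h y| ≤ C := by
  have h0 : (0:ℝ) ≤ C := le_trans (abs_nonneg _) (hC 0 (by constructor <;> norm_num))
  have := intervalIntegral.norm_integral_le_of_norm_le_const (C := C) (f := h) (a := x) (b := 1)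
    (fun y hy => hC y (aux_uIoc_sub hx hy))
  rw [Real.norm_eq_abs] at this
  calc |∫ y in x..(1:ℝ), h y| ≤ C * |1 - x| := this
    _ ≤ C * 1 := by
        apply mul_le_mul_of_nonneg_left _ h0
        rw [abs_of_nonneg (by linarith [hx.2])]
        linarith [hx.1]
    _ = C := mul_one C

lemma aux_abs_div_le {a b C d : ℝ} (ha : |a| ≤ C) (hd : 0 < d) (hb : d ≤ b) :
    |a / b| ≤ C / d := by
  rw [abs_div, abs_of_pos (lt_of_lt_of_le hd hb)]
  exact div_le_div₀ (le_trans (abs_nonneg a) ha) ha hd hb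




lemma aux_hasDerivAt_den (d0 d1 ε : ℝ) :
    HasDerivAt (fun t => d0 + t * d1) d1 ε := by
  simpa using ((hasDerivAt_id ε).mul_const d1).const_add d0

lemma aux_hasDerivAt_div1 {c d0 d1 ε : ℝ} (hne : d0 + ε * d1 ≠ 0) :
    HasDerivAt (fun t => c / (d0 + t * d1)) (-(c * d1 / (d0 + ε * d1) ^ 2)) ε := by
  have : HasDerivAt (fun t => c / (d0 + t * d1)) ((0 * (d0 + ε * d1) - c * d1) / (d0 + ε * d1) ^ 2) ε :=
    (hasDerivAt_const ε c).div (aux_hasDerivAt_den d0 d1 ε) hne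
  convert this using 1
  ring

lemma aux_hasDerivAt_div2 {c d0 d1 ε : ℝ} (hne : d0 + ε * d1 ≠ 0) :
    HasDerivAt (fun t => c / (d0 + t * d1) ^ 2) (-(2 * (c * d1) / (d0 + ε * d1) ^ 3)) ε := by
  have : HasDerivAt (fun t => c / (d0 + t * d1) ^ 2)
      ((0 * (d0 + ε * d1) ^ 2 - c * (((2:ℕ):ℝ) * (d0 + ε * d1) ^ (2 - 1) * d1)) / ((d0 + ε * d1) ^ 2) ^ 2) ε :=
    (hasDerivAt_const ε c).div ((aux_hasDerivAt_den d0 d1 ε).pow 2) (pow_ne_zero 2 hne)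
  convert this using 1
  norm_num
  field_simp

lemma aux_mul_bd {a b A B : ℝ} (ha : |a| ≤ A) (hb : |b| ≤ B) : |a * b| ≤ A * B := by
  rw [abs_mul]
  exact mul_le_mul ha hb (abs_nonneg _) (le_trans (abs_nonneg _) ha)

lemma aux_pow_bd {a A : ℝ} (ha : |a| ≤ A) (n : ℕ) : |a ^ n| ≤ A ^ n := by
  rw [abs_pow]
  exact pow_le_pow_left₀ (abs_nonneg _) ha n

set_option maxHeartbeats 1000000 in
lemma aux_inner1 (f D0 D1 : ℝ → ℝ)
    (hf : ContinuousOn f (Icc (0:ℝ) 1))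
    (hD0c : ContinuousOn D0 (Icc (0:ℝ) 1)) (hD1c : ContinuousOn D1 (Icc (0:ℝ) 1))
    {δ ε₀ Mf MD : ℝ} (hδ : 0 < δ)
    (hden : ∀ ε ∈ ball (0:ℝ) ε₀, ∀ y ∈ Icc (0:ℝ) 1, δ ≤ D0 y + ε * D1 y)
    (hMf : ∀ y ∈ Icc (0:ℝ) 1, |f y| ≤ Mf) (hMD : ∀ y ∈ Icc (0:ℝ) 1, |D1 y| ≤ MD)
    {x ε₁ : ℝ} (hx : x ∈ Icc (0:ℝ) 1) (hε₁ : ε₁ ∈ ball (0:ℝ) ε₀) :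
    HasDerivAt (fun ε => ∫ y in x..(1:ℝ), f y / (D0 y + ε * D1 y))
      (∫ y in x..(1:ℝ), -(f y * D1 y / (D0 y + ε₁ * D1 y) ^ 2)) ε₁ := by
  have hr : 0 < ε₀ - dist ε₁ 0 := by
    have := mem_ball.mp hε₁; linarith
  have hsub : ball ε₁ (ε₀ - dist ε₁ 0) ⊆ ball (0:ℝ) ε₀ :=
    ball_subset_ball' (by linarith)
  have hdenc : ContinuousOn (fun y => D0 y + ε₁ * D1 y) (Icc (0:ℝ) 1) :=
    hD0c.add (continuousOn_const.mul hD1c)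
  have hne : ∀ ε ∈ ball (0:ℝ) ε₀, ∀ y ∈ Icc (0:ℝ) 1, D0 y + ε * D1 y ≠ 0 :=
    fun ε hε y hy => ne_of_gt (lt_of_lt_of_le hδ (hden ε hε y hy))
  have hmeas : ∀ (g : ℝ → ℝ), ContinuousOn g (Icc (0:ℝ) 1) →
      AEStronglyMeasurable g (volume.restrict (Ι x 1)) := fun g hg =>
    (hg.aestronglyMeasurable measurableSet_Icc).mono_measure
      (Measure.restrict_mono (aux_uIoc_sub hx) le_rfl)
  have hmeas' : ∀ (g : ℝ → ℝ), ContinuousOn g (Icc (0:ℝ) 1) →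
      AEMeasurable g (volume.restrict (Ι x 1)) := fun g hg =>
    (hg.aemeasurable measurableSet_Icc).mono_measure
      (Measure.restrict_mono (aux_uIoc_sub hx) le_rfl)
  refine (intervalIntegral.hasDerivAt_integral_of_dominated_loc_of_deriv_le
    (F := fun ε y => f y / (D0 y + ε * D1 y)) (F' := fun ε y => -(f y * D1 y / (D0 y + ε * D1 y) ^ 2))
    (bound := fun _ => Mf * MD / δ ^ 2) (ball_mem_nhds ε₁ hr) ?_ ?_ ?_ ?_ ?_ ?_).2
  · exact Filter.Eventually.of_forall fun ε =>
      ((hmeas' f hf).div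
        (hmeas' _ (hD0c.add (continuousOn_const.mul hD1c)))).aestronglyMeasurable
  · exact aux_intable (hf.div hdenc (hne ε₁ hε₁)) hx
  · apply hmeas
    exact (((hf.mul hD1c).div (hdenc.pow 2)
      (fun y hy => pow_ne_zero 2 (hne ε₁ hε₁ y hy))).neg)
  · apply Filter.Eventually.of_forall
    intro y hy ε hε
    have hy1 : y ∈ Icc (0:ℝ) 1 := aux_uIoc_sub hx hy
    have hd := hden ε (hsub hε) y hy1
    rw [Real.norm_eq_abs, abs_neg]
    exact aux_abs_div_le
      (by rw [abs_mul]; exact mul_le_mul (hMf y hy1) (hMD y hy1) (abs_nonneg _)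
            (le_trans (abs_nonneg _) (hMf y hy1)))
      (pow_pos hδ 2) (pow_le_pow_left₀ hδ.le hd 2)
  · exact intervalIntegrable_const
  · apply Filter.Eventually.of_forall
    intro y hy ε hε
    exact aux_hasDerivAt_div1 (hne ε (hsub hε) y (aux_uIoc_sub hx hy))

set_option maxHeartbeats 1000000 in
lemma aux_inner2 (f D0 D1 : ℝ → ℝ)
    (hf : ContinuousOn f (Icc (0:ℝ) 1))
    (hD0c : ContinuousOn D0 (Icc (0:ℝ) 1)) (hD1c : ContinuousOn D1 (Icc (0:ℝ) 1))
    {δ ε₀ Mf MD : ℝ} (hδ : 0 < δ)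
    (hden : ∀ ε ∈ ball (0:ℝ) ε₀, ∀ y ∈ Icc (0:ℝ) 1, δ ≤ D0 y + ε * D1 y)
    (hMf : ∀ y ∈ Icc (0:ℝ) 1, |f y| ≤ Mf) (hMD : ∀ y ∈ Icc (0:ℝ) 1, |D1 y| ≤ MD)
    {x ε₁ : ℝ} (hx : x ∈ Icc (0:ℝ) 1) (hε₁ : ε₁ ∈ ball (0:ℝ) ε₀) :
    HasDerivAt (fun ε => ∫ y in x..(1:ℝ), f y / (D0 y + ε * D1 y) ^ 2)
      (∫ y in x..(1:ℝ), -(2 * (f y * D1 y) / (D0 y + ε₁ * D1 y) ^ 3)) ε₁ := by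
  have hr : 0 < ε₀ - dist ε₁ 0 := by
    have := mem_ball.mp hε₁; linarith
  have hsub : ball ε₁ (ε₀ - dist ε₁ 0) ⊆ ball (0:ℝ) ε₀ :=
    ball_subset_ball' (by linarith)
  have hdenc : ContinuousOn (fun y => D0 y + ε₁ * D1 y) (Icc (0:ℝ) 1) :=
    hD0c.add (continuousOn_const.mul hD1c)
  have hne : ∀ ε ∈ ball (0:ℝ) ε₀, ∀ y ∈ Icc (0:ℝ) 1, D0 y + ε * D1 y ≠ 0 :=
    fun ε hε y hy => ne_of_gt (lt_of_lt_of_le hδ (hden ε hε y hy))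
  have hmeas : ∀ (g : ℝ → ℝ), ContinuousOn g (Icc (0:ℝ) 1) →
      AEStronglyMeasurable g (volume.restrict (Ι x 1)) := fun g hg =>
    (hg.aestronglyMeasurable measurableSet_Icc).mono_measure
      (Measure.restrict_mono (aux_uIoc_sub hx) le_rfl)
  have hmeas' : ∀ (g : ℝ → ℝ), ContinuousOn g (Icc (0:ℝ) 1) →
      AEMeasurable g (volume.restrict (Ι x 1)) := fun g hg =>
    (hg.aemeasurable measurableSet_Icc).mono_measure
      (Measure.restrict_mono (aux_uIoc_sub hx) le_rfl)
  refine (intervalIntegral.hasDerivAt_integral_of_dominated_loc_of_deriv_le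
    (F := fun ε y => f y / (D0 y + ε * D1 y) ^ 2) (F' := fun ε y => -(2 * (f y * D1 y) / (D0 y + ε * D1 y) ^ 3))
    (bound := fun _ => 2 * (Mf * MD) / δ ^ 3) (ball_mem_nhds ε₁ hr) ?_ ?_ ?_ ?_ ?_ ?_).2
  · exact Filter.Eventually.of_forall fun ε =>
      ((hmeas' f hf).div
        (hmeas' _ ((hD0c.add (continuousOn_const.mul hD1c)).pow 2))).aestronglyMeasurable
  · exact aux_intable (hf.div (hdenc.pow 2)
      (fun y hy => pow_ne_zero 2 (hne ε₁ hε₁ y hy))) hx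
  · apply hmeas
    exact (((continuousOn_const.mul (hf.mul hD1c)).div (hdenc.pow 3)
      (fun y hy => pow_ne_zero 3 (hne ε₁ hε₁ y hy))).neg)
  · apply Filter.Eventually.of_forall
    intro y hy ε hε
    have hy1 : y ∈ Icc (0:ℝ) 1 := aux_uIoc_sub hx hy
    have hd := hden ε (hsub hε) y hy1
    rw [Real.norm_eq_abs, abs_neg]
    have h1 : |2 * (f y * D1 y)| ≤ 2 * (Mf * MD) := by
      rw [abs_mul, abs_mul, abs_two]
      apply mul_le_mul_of_nonneg_left _ (by norm_num)
      exact mul_le_mul (hMf y hy1) (hMD y hy1) (abs_nonneg _)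
        (le_trans (abs_nonneg _) (hMf y hy1))
    exact aux_abs_div_le h1 (pow_pos hδ 3) (pow_le_pow_left₀ hδ.le hd 3)
  · exact intervalIntegrable_const
  · apply Filter.Eventually.of_forall
    intro y hy ε hε
    exact aux_hasDerivAt_div2 (hne ε (hsub hε) y (aux_uIoc_sub hx hy))

set_option maxHeartbeats 2000000 in
/-- Second-order variation of the entropy dissipation functional
`E(ε) = E[D⁰ + εD¹]` at `ε = 0`. -/
theorem stmt_8
    (S : ℝ → ℝ) (hS : ContinuousOn S (Icc 0 1))
    (R : ℝ → ℝ) (hR : ∀ x, R x = ∫ y in (0:ℝ)..x, S y)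
    (Φ : ℝ → ℝ) (hΦ : ContDiff ℝ 4 Φ)
    (γ : ℝ) (hγ : 0 < γ)
    (D0 D1 : ℝ → ℝ)
    (hD0c : ContinuousOn D0 (Icc 0 1)) (hD0γ : ∀ x ∈ Icc (0:ℝ) 1, γ ≤ D0 x)
    (hD1c : ContinuousOn D1 (Icc 0 1))
    (u : ℝ → ℝ → ℝ)
    (hu : ∀ ε x, u ε x = ∫ y in x..(1:ℝ), R y / (D0 y + ε * D1 y))
    (E : ℝ → ℝ)
    (hE : ∀ ε, E ε = ∫ x in (0:ℝ)..1,
      (R x ^ 2 / (D0 x + ε * D1 x)) * iteratedDeriv 2 Φ (u ε x)) :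
    ∃ ε₀ : ℝ, 0 < ε₀ ∧ ∃ E' : ℝ → ℝ,
      (∀ ε ∈ Ioo (-ε₀) ε₀, HasDerivAt E (E' ε) ε) ∧
      HasDerivAt E'
        (∫ x in (0:ℝ)..1, (R x ^ 2 / D0 x) *
          (2 * iteratedDeriv 2 Φ (u 0 x) * (D1 x / D0 x) ^ 2
            + 2 * iteratedDeriv 3 Φ (u 0 x) *
                ((D1 x / D0 x) * (∫ y in x..(1:ℝ), R y * D1 y / (D0 y) ^ 2)
                  + ∫ y in x..(1:ℝ), R y * (D1 y) ^ 2 / (D0 y) ^ 3)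
            + iteratedDeriv 4 Φ (u 0 x) *
                (∫ y in x..(1:ℝ), R y * D1 y / (D0 y) ^ 2) ^ 2))
        0 := by
  -- continuity of R
  have h01 : (0:ℝ) ∈ Icc (0:ℝ) 1 := by constructor <;> norm_num
  have hRc : ContinuousOn R (Icc (0:ℝ) 1) := by
    have hSint : IntegrableOn S (uIcc (0:ℝ) 1) := by
      rw [uIcc_of_le zero_le_one]; exact hS.integrableOn_compact isCompact_Icc
    have h1 := intervalIntegral.continuousOn_primitive_interval (μ := volume) hSint
    rw [uIcc_of_le zero_le_one] at h1
    exact h1.congr (fun x _ => hR x)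
  -- bounds
  obtain ⟨MR, hMR⟩ : ∃ C, ∀ y ∈ Icc (0:ℝ) 1, |R y| ≤ C := by
    obtain ⟨C, hC⟩ := isCompact_Icc.exists_bound_of_continuousOn hRc
    exact ⟨C, fun y hy => by simpa using hC y hy⟩
  obtain ⟨MD, hMD⟩ : ∃ C, ∀ y ∈ Icc (0:ℝ) 1, |D1 y| ≤ C := by
    obtain ⟨C, hC⟩ := isCompact_Icc.exists_bound_of_continuousOn hD1c
    exact ⟨C, fun y hy => by simpa using hC y hy⟩
  have hMR0 : 0 ≤ MR := le_trans (abs_nonneg _) (hMR 0 h01)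
  have hMD0 : 0 ≤ MD := le_trans (abs_nonneg _) (hMD 0 h01)
  set δ : ℝ := γ / 2 with hδdef
  have hδ : 0 < δ := by positivity
  set ε₀ : ℝ := γ / (2 * (MD + 1)) with hε₀def
  have hε₀ : 0 < ε₀ := by positivity
  have hden : ∀ ε ∈ ball (0:ℝ) ε₀, ∀ y ∈ Icc (0:ℝ) 1, δ ≤ D0 y + ε * D1 y := by
    intro ε hε y hy
    have habs : |ε| < ε₀ := by simpa [Real.dist_eq] using mem_ball.mp hε
    have h1 : |ε * D1 y| ≤ ε₀ * MD := by
      rw [abs_mul]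
      exact mul_le_mul habs.le (hMD y hy) (abs_nonneg _) hε₀.le
    have h2 : ε₀ * MD + ε₀ = γ / 2 := by
      rw [hε₀def]; field_simp
    have h3 := (abs_le.mp h1).1
    have h4 := hD0γ y hy
    rw [hδdef]
    linarith
  have hne : ∀ ε ∈ ball (0:ℝ) ε₀, ∀ y ∈ Icc (0:ℝ) 1, D0 y + ε * D1 y ≠ 0 :=
    fun ε hε y hy => ne_of_gt (lt_of_lt_of_le hδ (hden ε hε y hy))
  have h0ball : (0:ℝ) ∈ ball (0:ℝ) ε₀ := mem_ball_self hε₀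
  -- derivatives of iterated derivatives of Φ
  have hΦ2 : ∀ t : ℝ, HasDerivAt (iteratedDeriv 2 Φ) (iteratedDeriv 3 Φ t) t := by
    intro t
    have hdiff := hΦ.differentiable_iteratedDeriv 2 (by norm_num)
    have h1 := (hdiff t).hasDerivAt
    rwa [show deriv (iteratedDeriv 2 Φ) = iteratedDeriv 3 Φ from (iteratedDeriv_succ (n := 2)).symm] at h1
  have hΦ3 : ∀ t : ℝ, HasDerivAt (iteratedDeriv 3 Φ) (iteratedDeriv 4 Φ t) t := by
    intro t
    have hdiff := hΦ.differentiable_iteratedDeriv 3 (by norm_num)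
    have h1 := (hdiff t).hasDerivAt
    rwa [show deriv (iteratedDeriv 3 Φ) = iteratedDeriv 4 Φ from (iteratedDeriv_succ (n := 3)).symm] at h1
  -- continuity in x
  have hcden : ∀ ε : ℝ, ContinuousOn (fun y => D0 y + ε * D1 y) (Icc (0:ℝ) 1) :=
    fun ε => hD0c.add (continuousOn_const.mul hD1c)
  have hucont : ∀ ε ∈ ball (0:ℝ) ε₀, ContinuousOn (fun x => u ε x) (Icc (0:ℝ) 1) := by
    intro ε hε
    exact (aux_contOn_tail (hRc.div (hcden ε) (hne ε hε))).congr (fun x _ => hu ε x)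
  have hv1cont : ∀ ε ∈ ball (0:ℝ) ε₀, ContinuousOn
      (fun x => ∫ y in x..(1:ℝ), R y * D1 y / (D0 y + ε * D1 y) ^ 2) (Icc (0:ℝ) 1) :=
    fun ε hε => aux_contOn_tail ((hRc.mul hD1c).div ((hcden ε).pow 2)
      (fun y hy => pow_ne_zero 2 (hne ε hε y hy)))
  have hv2cont : ∀ ε ∈ ball (0:ℝ) ε₀, ContinuousOn
      (fun x => ∫ y in x..(1:ℝ), R y * (D1 y) ^ 2 / (D0 y + ε * D1 y) ^ 3) (Icc (0:ℝ) 1) :=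
    fun ε hε => aux_contOn_tail ((hRc.mul (hD1c.pow 2)).div ((hcden ε).pow 3)
      (fun y hy => pow_ne_zero 3 (hne ε hε y hy)))
  -- bounds on u, v1, v2
  have hu_bd : ∀ ε ∈ ball (0:ℝ) ε₀, ∀ x ∈ Icc (0:ℝ) 1, |u ε x| ≤ MR / δ := by
    intro ε hε x hx
    rw [hu]
    exact aux_tail_bound (fun y hy => aux_abs_div_le (hMR y hy) hδ (hden ε hε y hy)) hx
  have hv1_bd : ∀ ε ∈ ball (0:ℝ) ε₀, ∀ x ∈ Icc (0:ℝ) 1,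
      |∫ y in x..(1:ℝ), R y * D1 y / (D0 y + ε * D1 y) ^ 2| ≤ MR * MD / δ ^ 2 := by
    intro ε hε x hx
    exact aux_tail_bound (fun y hy => aux_abs_div_le (aux_mul_bd (hMR y hy) (hMD y hy))
      (pow_pos hδ 2) (pow_le_pow_left₀ hδ.le (hden ε hε y hy) 2)) hx
  have hv2_bd : ∀ ε ∈ ball (0:ℝ) ε₀, ∀ x ∈ Icc (0:ℝ) 1,
      |∫ y in x..(1:ℝ), R y * (D1 y) ^ 2 / (D0 y + ε * D1 y) ^ 3| ≤ MR * MD ^ 2 / δ ^ 3 := by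
    intro ε hε x hx
    exact aux_tail_bound (fun y hy => aux_abs_div_le (aux_mul_bd (hMR y hy) (aux_pow_bd (hMD y hy) 2))
      (pow_pos hδ 3) (pow_le_pow_left₀ hδ.le (hden ε hε y hy) 3)) hx
  -- bounds on derivatives of Φ on the relevant range
  have hU0 : 0 ≤ MR / δ := by positivity
  have hΦbd : ∀ k : ℕ, k ≤ 4 → ∃ C, 0 ≤ C ∧ ∀ t : ℝ, |t| ≤ MR / δ → |iteratedDeriv k Φ t| ≤ C := by
    intro k hk
    obtain ⟨C, hC⟩ := isCompact_Icc.exists_bound_of_continuousOn (s := Icc (-(MR/δ)) (MR/δ))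
      ((hΦ.continuous_iteratedDeriv k (by exact_mod_cast hk)).continuousOn)
    refine ⟨C, ?_, fun t ht => by simpa using hC t (by rw [mem_Icc]; exact abs_le.mp ht)⟩
    exact le_trans (abs_nonneg _) (by simpa using hC 0 (by rw [mem_Icc]; constructor <;> linarith))
  obtain ⟨C2, hC20, hC2⟩ := hΦbd 2 (by norm_num)
  obtain ⟨C3, hC30, hC3⟩ := hΦbd 3 (by norm_num)
  obtain ⟨C4, hC40, hC4⟩ := hΦbd 4 (by norm_num)
  -- derivative of u and v1 in ε
  have hu_deriv : ∀ x ∈ Icc (0:ℝ) 1, ∀ ε ∈ ball (0:ℝ) ε₀,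
      HasDerivAt (fun ε => u ε x)
        (-∫ y in x..(1:ℝ), R y * D1 y / (D0 y + ε * D1 y) ^ 2) ε := by
    intro x hx ε hε
    have h1 := aux_inner1 R D0 D1 hRc hD0c hD1c hδ hden hMR hMD hx hε
    rw [intervalIntegral.integral_neg] at h1
    simp only [hu]
    exact h1
  have hv1_deriv : ∀ x ∈ Icc (0:ℝ) 1, ∀ ε ∈ ball (0:ℝ) ε₀,
      HasDerivAt (fun ε => ∫ y in x..(1:ℝ), R y * D1 y / (D0 y + ε * D1 y) ^ 2)
        (-(2 * ∫ y in x..(1:ℝ), R y * (D1 y) ^ 2 / (D0 y + ε * D1 y) ^ 3)) ε := by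
    intro x hx ε hε
    have h1 := aux_inner2 (fun y => R y * D1 y) D0 D1 (hRc.mul hD1c) hD0c hD1c hδ hden
      (fun y hy => aux_mul_bd (hMR y hy) (hMD y hy)) hMD hx hε
    convert h1 using 1
    rw [← intervalIntegral.integral_const_mul, ← intervalIntegral.integral_neg]
    apply intervalIntegral.integral_congr
    intro y _
    ring
  -- measurability helper on Ι 0 1
  have hmeas01 : ∀ (g : ℝ → ℝ), ContinuousOn g (Icc (0:ℝ) 1) →
      AEStronglyMeasurable g (volume.restrict (Ι (0:ℝ) 1)) := fun g hg =>
    (hg.aestronglyMeasurable measurableSet_Icc).mono_measure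
      (Measure.restrict_mono (aux_uIoc_sub h01) le_rfl)
  -- continuity of the integrand of E
  have hFcont : ∀ ε ∈ ball (0:ℝ) ε₀, ContinuousOn
      (fun x => R x ^ 2 / (D0 x + ε * D1 x) * iteratedDeriv 2 Φ (u ε x)) (Icc (0:ℝ) 1) := by
    intro ε hε
    exact ((hRc.pow 2).div (hcden ε) (hne ε hε)).mul
      ((hΦ.continuous_iteratedDeriv 2 (by norm_num)).comp_continuousOn (hucont ε hε))
  -- continuity of Fd ε
  have hFdcont : ∀ ε ∈ ball (0:ℝ) ε₀, ContinuousOn (fun x =>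
      -(R x ^ 2 * D1 x / (D0 x + ε * D1 x) ^ 2) * iteratedDeriv 2 Φ (u ε x)
        + R x ^ 2 / (D0 x + ε * D1 x) *
          (iteratedDeriv 3 Φ (u ε x) *
            -∫ y in x..(1:ℝ), R y * D1 y / (D0 y + ε * D1 y) ^ 2)) (Icc (0:ℝ) 1) := by
    intro ε hε
    apply ContinuousOn.add
    · exact ((((hRc.pow 2).mul hD1c).div ((hcden ε).pow 2)
        (fun y hy => pow_ne_zero 2 (hne ε hε y hy))).neg).mul
        ((hΦ.continuous_iteratedDeriv 2 (by norm_num)).comp_continuousOn (hucont ε hε))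
    · exact ((hRc.pow 2).div (hcden ε) (hne ε hε)).mul
        (((hΦ.continuous_iteratedDeriv 3 (by norm_num)).comp_continuousOn (hucont ε hε)).mul
          ((hv1cont ε hε).neg))
  -- pointwise bound pieces
  have hA1bd : ∀ ε ∈ ball (0:ℝ) ε₀, ∀ x ∈ Icc (0:ℝ) 1,
      |-(R x ^ 2 * D1 x / (D0 x + ε * D1 x) ^ 2)| ≤ MR ^ 2 * MD / δ ^ 2 := by
    intro ε hε x hx
    rw [abs_neg]
    exact aux_abs_div_le (aux_mul_bd (aux_pow_bd (hMR x hx) 2) (hMD x hx))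
      (pow_pos hδ 2) (pow_le_pow_left₀ hδ.le (hden ε hε x hx) 2)
  have hAbd : ∀ ε ∈ ball (0:ℝ) ε₀, ∀ x ∈ Icc (0:ℝ) 1,
      |R x ^ 2 / (D0 x + ε * D1 x)| ≤ MR ^ 2 / δ := by
    intro ε hε x hx
    exact aux_abs_div_le (aux_pow_bd (hMR x hx) 2) hδ (hden ε hε x hx)
  -- the candidate first derivative
  refine ⟨ε₀, hε₀, fun ε' => ∫ x in (0:ℝ)..1,
      (-(R x ^ 2 * D1 x / (D0 x + ε' * D1 x) ^ 2) * iteratedDeriv 2 Φ (u ε' x)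
        + R x ^ 2 / (D0 x + ε' * D1 x) *
          (iteratedDeriv 3 Φ (u ε' x) *
            -∫ y in x..(1:ℝ), R y * D1 y / (D0 y + ε' * D1 y) ^ 2)), ?_, ?_⟩
  · -- first derivative on the interval
    intro ε₁ hε₁
    have hbε₁ : ε₁ ∈ ball (0:ℝ) ε₀ := by
      rw [mem_ball, Real.dist_eq, sub_zero, abs_lt]
      exact ⟨hε₁.1, hε₁.2⟩
    have hEfun : E = fun ε => ∫ x in (0:ℝ)..1,
        R x ^ 2 / (D0 x + ε * D1 x) * iteratedDeriv 2 Φ (u ε x) := funext hE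
    rw [hEfun]
    have hr : 0 < ε₀ - dist ε₁ 0 := by
      have := mem_ball.mp hbε₁; linarith
    have hsub : ball ε₁ (ε₀ - dist ε₁ 0) ⊆ ball (0:ℝ) ε₀ :=
      ball_subset_ball' (by linarith)
    refine (intervalIntegral.hasDerivAt_integral_of_dominated_loc_of_deriv_le
      (F := fun ε x => R x ^ 2 / (D0 x + ε * D1 x) * iteratedDeriv 2 Φ (u ε x))
      (F' := fun ε x =>
        -(R x ^ 2 * D1 x / (D0 x + ε * D1 x) ^ 2) * iteratedDeriv 2 Φ (u ε x)
        + R x ^ 2 / (D0 x + ε * D1 x) *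
          (iteratedDeriv 3 Φ (u ε x) *
            -∫ y in x..(1:ℝ), R y * D1 y / (D0 y + ε * D1 y) ^ 2))
      (bound := fun _ => MR ^ 2 * MD / δ ^ 2 * C2 + MR ^ 2 / δ * (C3 * (MR * MD / δ ^ 2)))
      (ball_mem_nhds ε₁ hr) ?_ ?_ ?_ ?_ ?_ ?_).2
    · exact (isOpen_ball.eventually_mem hbε₁).mono
        (fun ε hε => hmeas01 _ (hFcont ε hε))
    · exact aux_intable (hFcont ε₁ hbε₁) h01
    · exact hmeas01 _ (hFdcont ε₁ hbε₁)
    · apply Filter.Eventually.of_forall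
      intro x hx ε hε
      have hx1 : x ∈ Icc (0:ℝ) 1 := aux_uIoc_sub h01 hx
      have hεb : ε ∈ ball (0:ℝ) ε₀ := hsub hε
      rw [Real.norm_eq_abs]
      refine le_trans (abs_add_le _ _) (add_le_add ?_ ?_)
      · exact aux_mul_bd (hA1bd ε hεb x hx1) (hC2 _ (hu_bd ε hεb x hx1))
      · refine aux_mul_bd (hAbd ε hεb x hx1) (aux_mul_bd (hC3 _ (hu_bd ε hεb x hx1)) ?_)
        rw [abs_neg]
        exact hv1_bd ε hεb x hx1
    · exact intervalIntegrable_const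
    · apply Filter.Eventually.of_forall
      intro x hx ε hε
      have hx1 : x ∈ Icc (0:ℝ) 1 := aux_uIoc_sub h01 hx
      have hεb : ε ∈ ball (0:ℝ) ε₀ := hsub hε
      have h1 : HasDerivAt (fun ε => R x ^ 2 / (D0 x + ε * D1 x))
          (-(R x ^ 2 * D1 x / (D0 x + ε * D1 x) ^ 2)) ε :=
        aux_hasDerivAt_div1 (hne ε hεb x hx1)
      have h2 : HasDerivAt (fun ε => iteratedDeriv 2 Φ (u ε x))
          (iteratedDeriv 3 Φ (u ε x) *
            -∫ y in x..(1:ℝ), R y * D1 y / (D0 y + ε * D1 y) ^ 2) ε :=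
        by have := (hΦ2 (u ε x)).comp ε (hu_deriv x hx1 ε hεb); exact this
      exact h1.mul h2
  · -- second derivative at 0
    have hIcc : ∀ x ∈ Icc (0:ℝ) 1, D0 x ≠ 0 :=
      fun x hx => ne_of_gt (lt_of_lt_of_le hγ (hD0γ x hx))
    have heq : (∫ x in (0:ℝ)..1, (R x ^ 2 / D0 x) *
          (2 * iteratedDeriv 2 Φ (u 0 x) * (D1 x / D0 x) ^ 2
            + 2 * iteratedDeriv 3 Φ (u 0 x) *
                ((D1 x / D0 x) * (∫ y in x..(1:ℝ), R y * D1 y / (D0 y) ^ 2)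
                  + ∫ y in x..(1:ℝ), R y * (D1 y) ^ 2 / (D0 y) ^ 3)
            + iteratedDeriv 4 Φ (u 0 x) *
                (∫ y in x..(1:ℝ), R y * D1 y / (D0 y) ^ 2) ^ 2)) =
        ∫ x in (0:ℝ)..1,
          ((-(-(2 * (R x ^ 2 * D1 x * D1 x) / (D0 x + 0 * D1 x) ^ 3)) * iteratedDeriv 2 Φ (u 0 x)
            + -(R x ^ 2 * D1 x / (D0 x + 0 * D1 x) ^ 2) *
                (iteratedDeriv 3 Φ (u 0 x) *
                  -∫ y in x..(1:ℝ), R y * D1 y / (D0 y + 0 * D1 y) ^ 2))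
          + (-(R x ^ 2 * D1 x / (D0 x + 0 * D1 x) ^ 2) *
                (iteratedDeriv 3 Φ (u 0 x) *
                  -∫ y in x..(1:ℝ), R y * D1 y / (D0 y + 0 * D1 y) ^ 2)
              + R x ^ 2 / (D0 x + 0 * D1 x) *
                (iteratedDeriv 4 Φ (u 0 x) *
                    (-∫ y in x..(1:ℝ), R y * D1 y / (D0 y + 0 * D1 y) ^ 2) *
                    (-∫ y in x..(1:ℝ), R y * D1 y / (D0 y + 0 * D1 y) ^ 2)
                  + iteratedDeriv 3 Φ (u 0 x) *
                    -(-(2 * ∫ y in x..(1:ℝ), R y * (D1 y) ^ 2 / (D0 y + 0 * D1 y) ^ 3))))) := by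
      apply intervalIntegral.integral_congr
      intro x hx
      rw [uIcc_of_le zero_le_one] at hx
      have hD0x : D0 x ≠ 0 := hIcc x hx
      simp only [zero_mul, add_zero]
      field_simp
      ring
    rw [heq]
    refine (intervalIntegral.hasDerivAt_integral_of_dominated_loc_of_deriv_le
      (F := fun ε x =>
        -(R x ^ 2 * D1 x / (D0 x + ε * D1 x) ^ 2) * iteratedDeriv 2 Φ (u ε x)
        + R x ^ 2 / (D0 x + ε * D1 x) *
          (iteratedDeriv 3 Φ (u ε x) *
            -∫ y in x..(1:ℝ), R y * D1 y / (D0 y + ε * D1 y) ^ 2))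
      (F' := fun ε x =>
        (-(-(2 * (R x ^ 2 * D1 x * D1 x) / (D0 x + ε * D1 x) ^ 3)) * iteratedDeriv 2 Φ (u ε x)
          + -(R x ^ 2 * D1 x / (D0 x + ε * D1 x) ^ 2) *
              (iteratedDeriv 3 Φ (u ε x) *
                -∫ y in x..(1:ℝ), R y * D1 y / (D0 y + ε * D1 y) ^ 2))
        + (-(R x ^ 2 * D1 x / (D0 x + ε * D1 x) ^ 2) *
              (iteratedDeriv 3 Φ (u ε x) *
                -∫ y in x..(1:ℝ), R y * D1 y / (D0 y + ε * D1 y) ^ 2)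
            + R x ^ 2 / (D0 x + ε * D1 x) *
              (iteratedDeriv 4 Φ (u ε x) *
                  (-∫ y in x..(1:ℝ), R y * D1 y / (D0 y + ε * D1 y) ^ 2) *
                  (-∫ y in x..(1:ℝ), R y * D1 y / (D0 y + ε * D1 y) ^ 2)
                + iteratedDeriv 3 Φ (u ε x) *
                  -(-(2 * ∫ y in x..(1:ℝ), R y * (D1 y) ^ 2 / (D0 y + ε * D1 y) ^ 3)))))
      (bound := fun _ =>
        (2 * (MR ^ 2 * MD * MD) / δ ^ 3 * C2
            + MR ^ 2 * MD / δ ^ 2 * (C3 * (MR * MD / δ ^ 2)))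
          + (MR ^ 2 * MD / δ ^ 2 * (C3 * (MR * MD / δ ^ 2))
            + MR ^ 2 / δ * (C4 * (MR * MD / δ ^ 2) * (MR * MD / δ ^ 2)
                + C3 * (2 * (MR * MD ^ 2 / δ ^ 3)))))
      (ball_mem_nhds 0 hε₀) ?_ ?_ ?_ ?_ ?_ ?_).2
    · exact (isOpen_ball.eventually_mem h0ball).mono
        (fun ε hε => hmeas01 _ (hFdcont ε hε))
    · exact aux_intable (hFdcont 0 h0ball) h01
    · apply hmeas01
      apply ContinuousOn.add
      · apply ContinuousOn.add
        · exact (((continuousOn_const.mul (((hRc.pow 2).mul hD1c).mul hD1c)).div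
            ((hcden 0).pow 3) (fun y hy => pow_ne_zero 3 (hne 0 h0ball y hy))).neg.neg).mul
            ((hΦ.continuous_iteratedDeriv 2 (by norm_num)).comp_continuousOn (hucont 0 h0ball))
        · exact ((((hRc.pow 2).mul hD1c).div ((hcden 0).pow 2)
            (fun y hy => pow_ne_zero 2 (hne 0 h0ball y hy))).neg).mul
            (((hΦ.continuous_iteratedDeriv 3 (by norm_num)).comp_continuousOn
              (hucont 0 h0ball)).mul ((hv1cont 0 h0ball).neg))
      · apply ContinuousOn.add
        · exact ((((hRc.pow 2).mul hD1c).div ((hcden 0).pow 2)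
            (fun y hy => pow_ne_zero 2 (hne 0 h0ball y hy))).neg).mul
            (((hΦ.continuous_iteratedDeriv 3 (by norm_num)).comp_continuousOn
              (hucont 0 h0ball)).mul ((hv1cont 0 h0ball).neg))
        · refine ((hRc.pow 2).div (hcden 0) (hne 0 h0ball)).mul (ContinuousOn.add ?_ ?_)
          · exact ((((hΦ.continuous_iteratedDeriv 4 le_rfl).comp_continuousOn
              (hucont 0 h0ball)).mul ((hv1cont 0 h0ball).neg)).mul ((hv1cont 0 h0ball).neg))
          · exact ((hΦ.continuous_iteratedDeriv 3 (by norm_num)).comp_continuousOn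
              (hucont 0 h0ball)).mul ((continuousOn_const.mul (hv2cont 0 h0ball)).neg.neg)
    · apply Filter.Eventually.of_forall
      intro x hx ε hε
      have hx1 : x ∈ Icc (0:ℝ) 1 := aux_uIoc_sub h01 hx
      have hεb : ε ∈ ball (0:ℝ) ε₀ := by
        simpa [Real.dist_eq] using hε
      rw [Real.norm_eq_abs]
      refine le_trans (abs_add_le _ _) (add_le_add (le_trans (abs_add_le _ _) (add_le_add ?_ ?_))
        (le_trans (abs_add_le _ _) (add_le_add ?_ ?_)))
      · refine aux_mul_bd ?_ (hC2 _ (hu_bd ε hεb x hx1))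
        rw [abs_neg, abs_neg]
        refine aux_abs_div_le (aux_mul_bd (le_of_eq abs_two)
          (aux_mul_bd (aux_mul_bd (aux_pow_bd (hMR x hx1) 2) (hMD x hx1)) (hMD x hx1)))
          (pow_pos hδ 3) (pow_le_pow_left₀ hδ.le (hden ε hεb x hx1) 3)
      · refine aux_mul_bd (hA1bd ε hεb x hx1) (aux_mul_bd (hC3 _ (hu_bd ε hεb x hx1)) ?_)
        rw [abs_neg]; exact hv1_bd ε hεb x hx1
      · refine aux_mul_bd (hA1bd ε hεb x hx1) (aux_mul_bd (hC3 _ (hu_bd ε hεb x hx1)) ?_)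
        rw [abs_neg]; exact hv1_bd ε hεb x hx1
      · refine aux_mul_bd (hAbd ε hεb x hx1) (le_trans (abs_add_le _ _) (add_le_add ?_ ?_))
        · refine aux_mul_bd (aux_mul_bd (hC4 _ (hu_bd ε hεb x hx1)) ?_) ?_
          · rw [abs_neg]; exact hv1_bd ε hεb x hx1
          · rw [abs_neg]; exact hv1_bd ε hεb x hx1
        · refine aux_mul_bd (hC3 _ (hu_bd ε hεb x hx1)) ?_
          rw [abs_neg, abs_neg]
          exact aux_mul_bd (le_of_eq abs_two) (hv2_bd ε hεb x hx1)
    · exact intervalIntegrable_const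
    · apply Filter.Eventually.of_forall
      intro x hx ε hε
      have hx1 : x ∈ Icc (0:ℝ) 1 := aux_uIoc_sub h01 hx
      have hεb : ε ∈ ball (0:ℝ) ε₀ := by
        simpa [Real.dist_eq] using hε
      have hA : HasDerivAt (fun ε => R x ^ 2 / (D0 x + ε * D1 x))
          (-(R x ^ 2 * D1 x / (D0 x + ε * D1 x) ^ 2)) ε :=
        aux_hasDerivAt_div1 (hne ε hεb x hx1)
      have hA1' : HasDerivAt (fun ε => -(R x ^ 2 * D1 x / (D0 x + ε * D1 x) ^ 2))
          (-(-(2 * (R x ^ 2 * D1 x * D1 x) / (D0 x + ε * D1 x) ^ 3))) ε :=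
        (aux_hasDerivAt_div2 (hne ε hεb x hx1)).neg
      have hP2 : HasDerivAt (fun ε => iteratedDeriv 2 Φ (u ε x))
          (iteratedDeriv 3 Φ (u ε x) *
            -∫ y in x..(1:ℝ), R y * D1 y / (D0 y + ε * D1 y) ^ 2) ε :=
        by have := (hΦ2 (u ε x)).comp ε (hu_deriv x hx1 ε hεb); exact this
      have hP3 : HasDerivAt (fun ε => iteratedDeriv 3 Φ (u ε x))
          (iteratedDeriv 4 Φ (u ε x) *
            -∫ y in x..(1:ℝ), R y * D1 y / (D0 y + ε * D1 y) ^ 2) ε :=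
        by have := (hΦ3 (u ε x)).comp ε (hu_deriv x hx1 ε hεb); exact this
      have hW : HasDerivAt (fun ε => -∫ y in x..(1:ℝ), R y * D1 y / (D0 y + ε * D1 y) ^ 2)
          (-(-(2 * ∫ y in x..(1:ℝ), R y * (D1 y) ^ 2 / (D0 y + ε * D1 y) ^ 3))) ε :=
        (hv1_deriv x hx1 ε hεb).neg
      exact (hA1'.mul hP2).add (hA.mul (hP3.mul hW))
end

section
/- Let S : [0,1] → ℝ be continuous, R(x) = ∫₀ˣ S(y) dy, Φ : ℝ → ℝ convex of class C⁴, and γ > 0. Assume (1) 2Φ''(v)Φ⁽⁴⁾(v) ≥ Φ'''(v)² for all v ∈ ℝ, and (2) either R(x) ≥ 0 on (0,1) and Φ'''(v) ≥ 0 on ℝ, or R(x) ≤ 0 on (0,1) and Φ'''(v) ≤ 0 on ℝ. Then the functional E[D] = ∫₀¹ (R(x)²/D(x)) Φ''(∫ₓ¹ R(y)/D(y) dy) dx is convex on the set of continuous functions D : [0,1] → ℝ with D(x) ≥ γ for all x. -/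
open MeasureTheory Set

open Filter Topology

lemma combo_pos' {a b d₀ d₁ : ℝ} (ha : 0 ≤ a) (hb : 0 ≤ b) (hab : a + b = 1)
    (h₀ : 0 < d₀) (h₁ : 0 < d₁) : 0 < a * d₀ + b * d₁ := by
  rcases ha.lt_or_eq with h | h
  · nlinarith [mul_pos h h₀, mul_nonneg hb h₁.le]
  · have hb1 : b = 1 := by linarith
    rw [← h, hb1]; linarith

lemma inv_combo' (r d₀ d₁ a b : ℝ) (hr : 0 ≤ r) (h₀ : 0 < d₀) (h₁ : 0 < d₁)
    (ha : 0 ≤ a) (hb : 0 ≤ b) (hab : a + b = 1) :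
    r / (a*d₀+b*d₁) ≤ a*(r/d₀)+b*(r/d₁) := by
  have hd : 0 < a*d₀+b*d₁ := combo_pos' ha hb hab h₀ h₁
  rw [div_le_iff₀ hd]
  have e : a*(r/d₀)+b*(r/d₁) = (a*r*d₁+b*r*d₀)/(d₀*d₁) := by field_simp
  rw [e, div_mul_eq_mul_div, le_div_iff₀ (by positivity)]
  have hb2 : b = 1 - a := by linarith
  subst hb2
  nlinarith [mul_nonneg (mul_nonneg (mul_nonneg ha hb) hr) (sq_nonneg (d₀-d₁))]

lemma inv_combo_neg' (r d₀ d₁ a b : ℝ) (hr : r ≤ 0) (h₀ : 0 < d₀) (h₁ : 0 < d₁)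
    (ha : 0 ≤ a) (hb : 0 ≤ b) (hab : a + b = 1) :
    a*(r/d₀)+b*(r/d₁) ≤ r / (a*d₀+b*d₁) := by
  have := inv_combo' (-r) d₀ d₁ a b (by linarith) h₀ h₁ ha hb hab
  simp only [neg_div, mul_neg] at this
  linarith

lemma mono_deriv_nonneg' {f : ℝ → ℝ} (hf : Monotone f) {v : ℝ}
    (hd : DifferentiableAt ℝ f v) : 0 ≤ deriv f v := by
  have h := hd.hasDerivAt
  rw [hasDerivAt_iff_tendsto_slope] at h
  have h2 : Tendsto (slope f v) (𝓝[>] v) (𝓝 (deriv f v)) :=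
    h.mono_left (nhdsWithin_mono v (fun y hy => ne_of_gt hy))
  refine ge_of_tendsto h2 ?_
  filter_upwards [self_mem_nhdsWithin] with y hy
  rw [slope_def_field]
  have hvy : v < y := hy
  have h3 : f v ≤ f y := hf hvy.le
  exact div_nonneg (by linarith) (by linarith)

lemma phi2_nonneg' (Φ : ℝ → ℝ) (hΦ : ContDiff ℝ 4 Φ) (hconv : ConvexOn ℝ univ Φ) (v : ℝ) :
    0 ≤ iteratedDeriv 2 Φ v := by
  have hd1 : Differentiable ℝ (deriv Φ) := by
    have := hΦ.differentiable_iteratedDeriv 1 (by norm_num)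
    rwa [iteratedDeriv_one] at this
  have hmono : Monotone (deriv Φ) := by
    have := hconv.monotoneOn_deriv (fun x _ => (hΦ.differentiable (by norm_num)).differentiableAt)
    rwa [monotoneOn_univ] at this
  have h2 : iteratedDeriv 2 Φ = deriv (deriv Φ) := by
    rw [show (2:ℕ) = 1 + 1 from rfl, iteratedDeriv_succ, iteratedDeriv_one]
  rw [h2]
  exact mono_deriv_nonneg' hmono (hd1 v)

lemma phi4_nonneg' (Φ : ℝ → ℝ) (hΦ : ContDiff ℝ 4 Φ)
    (hΦ2 : ∀ v, 0 ≤ iteratedDeriv 2 Φ v)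
    (h1 : ∀ v, iteratedDeriv 3 Φ v ^ 2 ≤ 2 * iteratedDeriv 2 Φ v * iteratedDeriv 4 Φ v)
    (v : ℝ) : 0 ≤ iteratedDeriv 4 Φ v := by
  by_contra hneg
  push_neg at hneg
  have hcont4 : Continuous (iteratedDeriv 4 Φ) := hΦ.continuous_iteratedDeriv 4 le_rfl
  have hev4 : ∀ᶠ w in 𝓝 v, iteratedDeriv 4 Φ w < 0 :=
    hcont4.continuousAt.eventually_lt continuous_const.continuousAt hneg
  have hev2 : ∀ᶠ w in 𝓝 v, iteratedDeriv 2 Φ w = 0 := by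
    filter_upwards [hev4] with w hw
    have := h1 w
    have h2 := hΦ2 w
    nlinarith [sq_nonneg (iteratedDeriv 3 Φ w)]
  have hev3 : ∀ᶠ w in 𝓝 v, iteratedDeriv 3 Φ w = 0 := by
    filter_upwards [hev2.eventually_nhds] with w hw
    have : deriv (iteratedDeriv 2 Φ) w = deriv (fun _ => (0:ℝ)) w :=
      Filter.EventuallyEq.deriv_eq hw
    rw [← iteratedDeriv_succ] at this
    simpa using this
  have : iteratedDeriv 4 Φ v = 0 := by
    have : deriv (iteratedDeriv 3 Φ) v = deriv (fun _ => (0:ℝ)) v :=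
      Filter.EventuallyEq.deriv_eq hev3
    rw [← iteratedDeriv_succ] at this
    simpa using this
  linarith

lemma key_ineq' (Φ : ℝ → ℝ) (hΦ : ContDiff ℝ 4 Φ)
    (hΦ2 : ∀ v, 0 ≤ iteratedDeriv 2 Φ v) (hΦ4 : ∀ v, 0 ≤ iteratedDeriv 4 Φ v)
    (h1 : ∀ v, iteratedDeriv 3 Φ v ^ 2 ≤ 2 * iteratedDeriv 2 Φ v * iteratedDeriv 4 Φ v)
    {d₀ d₁ q₀ q₁ a b : ℝ} (hd₀ : 0 < d₀) (hd₁ : 0 < d₁)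
    (ha : 0 ≤ a) (hb : 0 ≤ b) (hab : a + b = 1) :
    iteratedDeriv 2 Φ (a*q₀ + b*q₁) / (a*d₀ + b*d₁)
      ≤ a * (iteratedDeriv 2 Φ q₀ / d₀) + b * (iteratedDeriv 2 Φ q₁ / d₁) := by
  set Φ₂ := iteratedDeriv 2 Φ with hΦ₂def
  set Φ₃ := iteratedDeriv 3 Φ with hΦ₃def
  set Φ₄ := iteratedDeriv 4 Φ with hΦ₄def
  have hdiff2 : Differentiable ℝ Φ₂ := hΦ.differentiable_iteratedDeriv 2 (by norm_num)
  have hdiff3 : Differentiable ℝ Φ₃ := hΦ.differentiable_iteratedDeriv 3 (by norm_num)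
  have hd23 : deriv Φ₂ = Φ₃ := (iteratedDeriv_succ (n := 2)).symm
  have hd34 : deriv Φ₃ = Φ₄ := (iteratedDeriv_succ (n := 3)).symm
  have hΦ₂at : ∀ v, HasDerivAt Φ₂ (Φ₃ v) v := fun v => hd23 ▸ (hdiff2 v).hasDerivAt
  have hΦ₃at : ∀ v, HasDerivAt Φ₃ (Φ₄ v) v := fun v => hd34 ▸ (hdiff3 v).hasDerivAt
  set δq := q₁ - q₀ with hδq
  set δd := d₁ - d₀ with hδd
  set L : ℝ → ℝ := fun t => q₀ + t * δq with hL
  set M : ℝ → ℝ := fun t => d₀ + t * δd with hM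
  set s : Set ℝ := {t | 0 < M t} with hs
  have hsopen : IsOpen s := isOpen_lt continuous_const (by fun_prop)
  have hsconv : Convex ℝ s := by
    intro x hx y hy a' b' ha' hb' hab'
    simp only [hs, hM, mem_setOf_eq, smul_eq_mul] at *
    have : d₀ + (a' * x + b' * y) * δd = a' * (d₀ + x * δd) + b' * (d₀ + y * δd) := by
      have : a' * d₀ + b' * d₀ = d₀ := by rw [← add_mul, hab', one_mul]
      ring_nf
      nlinarith [this]
    rw [this]
    exact combo_pos' ha' hb' hab' hx hy
  have hLat : ∀ t, HasDerivAt L δq t := fun t => (hasDerivAt_mul_const δq).const_add q₀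
  have hMat : ∀ t, HasDerivAt M δd t := fun t => (hasDerivAt_mul_const δd).const_add d₀
  set g : ℝ → ℝ := fun t => Φ₂ (L t) / M t with hg
  set g1 : ℝ → ℝ := fun t => (Φ₃ (L t) * δq * M t - Φ₂ (L t) * δd) / M t ^ 2 with hg1
  have hgat : ∀ t ∈ s, HasDerivAt g (g1 t) t := by
    intro t ht
    exact (((hΦ₂at (L t)).comp t (hLat t)).div (hMat t) (ne_of_gt ht))
  set N : ℝ → ℝ := fun t => Φ₃ (L t) * δq * M t - Φ₂ (L t) * δd with hN
  set g2 : ℝ → ℝ := fun t =>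
    ((Φ₄ (L t) * δq * δq * M t + Φ₃ (L t) * δq * δd - Φ₃ (L t) * δq * δd) * (M t ^ 2)
      - N t * (2 * M t ^ 1 * δd)) / (M t ^ 2) ^ 2 with hg2
  have hg1at : ∀ t ∈ s, HasDerivAt g1 (g2 t) t := by
    intro t ht
    have hNat : HasDerivAt N (Φ₄ (L t) * δq * δq * M t + Φ₃ (L t) * δq * δd
        - Φ₃ (L t) * δq * δd) t := by
      have h₁ : HasDerivAt (fun t => Φ₃ (L t) * δq * M t)
          ((Φ₄ (L t) * δq) * δq * M t + Φ₃ (L t) * δq * δd) t := by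
        have := (((hΦ₃at (L t)).comp t (hLat t)).mul_const δq).mul (hMat t)
        exact this.congr_deriv (by simp only [Function.comp_apply])
      have h₂ : HasDerivAt (fun t => Φ₂ (L t) * δd) (Φ₃ (L t) * δq * δd) t := by
        have := ((hΦ₂at (L t)).comp t (hLat t)).mul_const δd
        exact this.congr_deriv (by simp only [Function.comp_apply])
      have := h₁.sub h₂
      exact this.congr_deriv (by simp only [Function.comp_apply])
    have hpow : HasDerivAt (fun t => M t ^ 2) (2 * M t ^ 1 * δd) t := by
      have := (hMat t).pow 2
      exact this.congr_deriv (by norm_num)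
    exact hNat.div hpow (pow_ne_zero 2 (ne_of_gt ht))
  have hg2nonneg : ∀ t ∈ s, 0 ≤ g2 t := by
    intro t ht
    have hm : 0 < M t := ht
    have hA := hΦ2 (L t)
    have hC := hΦ4 (L t)
    have hB := h1 (L t)
    simp only [hg2, hN]
    set A := Φ₂ (L t); set B := Φ₃ (L t); set C := Φ₄ (L t)
    rw [le_div_iff₀ (by positivity)]
    have key : 0 ≤ C * (δq * M t) ^ 2 - 2 * B * (δq * M t) * δd + 2 * A * δd ^ 2 := by
      rcases hC.lt_or_eq with h | h
      · nlinarith [sq_nonneg (C * (δq * M t) - B * δd), mul_nonneg (sub_nonneg.2 hB) (sq_nonneg δd)]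
      · have hB0 : B = 0 := by nlinarith [sq_nonneg B]
        rw [hB0, ← h]
        nlinarith [sq_nonneg δd]
    nlinarith [mul_nonneg (mul_pos hm hm).le (mul_nonneg hm.le key)]
  have h0s : (0:ℝ) ∈ s := by simp [hs, hM, hd₀]
  have h1s : (1:ℝ) ∈ s := by
    simp only [hs, hM, mem_setOf_eq, one_mul, hδd]
    linarith
  have hint : interior s = s := hsopen.interior_eq
  have hderiv_eq : ∀ t ∈ s, deriv g t = g1 t := fun t ht => (hgat t ht).deriv
  have hgconv : ConvexOn ℝ s g := by
    refine convexOn_of_deriv2_nonneg hsconv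
      (fun t ht => ((hgat t ht).differentiableAt.continuousAt).continuousWithinAt)
      (fun t ht => (hgat t (hint ▸ ht)).differentiableAt.differentiableWithinAt) ?_ ?_
    · intro t ht
      rw [hint] at ht
      have hev : deriv g =ᶠ[𝓝 t] g1 := by
        filter_upwards [hsopen.mem_nhds ht] with w hw using hderiv_eq w hw
      exact ((hg1at t ht).differentiableAt.congr_of_eventuallyEq hev).differentiableWithinAt
    · intro t ht
      rw [hint] at ht
      have hev : deriv g =ᶠ[𝓝 t] g1 := by
        filter_upwards [hsopen.mem_nhds ht] with w hw using hderiv_eq w hw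
      show 0 ≤ deriv (deriv g) t
      rw [hev.deriv_eq, (hg1at t ht).deriv]
      exact hg2nonneg t ht
  have hcomb := hgconv.2 h0s h1s ha hb hab
  simp only [smul_eq_mul, mul_zero, mul_one, zero_add, hg, hL, hM] at hcomb
  have ha1 : a = 1 - b := by linarith
  have e1 : q₀ + b * δq = a * q₀ + b * q₁ := by rw [hδq, ha1]; ring
  have e2 : d₀ + b * δd = a * d₀ + b * d₁ := by rw [hδd, ha1]; ring
  have e3 : q₀ + 0 * δq = q₀ := by ring
  have e4 : d₀ + 0 * δd = d₀ := by ring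
  have e5 : q₀ + 1 * δq = q₁ := by rw [hδq]; ring
  have e6 : d₀ + 1 * δd = d₁ := by rw [hδd]; ring
  rw [e1, e2, e3, e4, e5, e6] at hcomb
  exact hcomb

lemma sign_extend' {f : ℝ → ℝ} (hf : ContinuousOn f (Icc 0 1)) (h0 : f 0 = 0)
    (hpos : ∀ x ∈ Ioo (0:ℝ) 1, 0 ≤ f x) : ∀ x ∈ Icc (0:ℝ) 1, 0 ≤ f x := by
  intro x hx
  rcases eq_or_lt_of_le hx.2 with rfl | hx1
  · have hne : (𝓝[Ioo (0:ℝ) 1] 1).NeBot := by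
      apply mem_closure_iff_nhdsWithin_neBot.1
      rw [closure_Ioo (by norm_num : (0:ℝ) ≠ 1)]
      exact ⟨by norm_num, le_rfl⟩
    have ht : Tendsto f (𝓝[Ioo (0:ℝ) 1] 1) (𝓝 (f 1)) :=
      (hf 1 (by norm_num)).mono_left (nhdsWithin_mono _ Ioo_subset_Icc_self)
    refine ge_of_tendsto ht ?_
    filter_upwards [self_mem_nhdsWithin] with y hy using hpos y hy
  · rcases eq_or_lt_of_le hx.1 with h | hx0
    · rw [← h, h0]
    · exact hpos x ⟨hx0, hx1⟩

lemma u_cont' (R : ℝ → ℝ) (hRcont : ContinuousOn R (Icc 0 1)) (D : ℝ → ℝ)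
    (hD : ContinuousOn D (Icc 0 1)) (hDpos : ∀ x ∈ Icc (0:ℝ) 1, 0 < D x) :
    ContinuousOn (fun x => ∫ y in x..(1:ℝ), R y / D y) (Icc 0 1) := by
  have hdiv : ContinuousOn (fun y => R y / D y) (Icc 0 1) :=
    hRcont.div hD (fun y hy => ne_of_gt (hDpos y hy))
  have h_int : IntegrableOn (fun y => R y / D y) (uIcc (0:ℝ) 1) volume := by
    rw [uIcc_of_le (by norm_num : (0:ℝ) ≤ 1)]
    exact hdiv.integrableOn_Icc
  have := intervalIntegral.continuousOn_primitive_interval_left (a := (0:ℝ)) (b := (1:ℝ)) h_int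
  rwa [uIcc_of_le (by norm_num : (0:ℝ) ≤ 1)] at this

lemma uII' (R : ℝ → ℝ) (hRcont : ContinuousOn R (Icc 0 1)) (D : ℝ → ℝ)
    (hD : ContinuousOn D (Icc 0 1)) (hDpos : ∀ x ∈ Icc (0:ℝ) 1, 0 < D x)
    {x : ℝ} (hx : x ∈ Icc (0:ℝ) 1) :
    IntervalIntegrable (fun y => R y / D y) volume x 1 := by
  have hdiv : ContinuousOn (fun y => R y / D y) (Icc 0 1) :=
    hRcont.div hD (fun y hy => ne_of_gt (hDpos y hy))
  apply ContinuousOn.intervalIntegrable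
  rw [uIcc_of_le hx.2]
  exact hdiv.mono (fun y hy => ⟨le_trans hx.1 hy.1, hy.2⟩)

lemma integrand_II' (R : ℝ → ℝ) (hRcont : ContinuousOn R (Icc 0 1)) (Φ : ℝ → ℝ)
    (hΦc : Continuous (iteratedDeriv 2 Φ)) (D : ℝ → ℝ)
    (hD : ContinuousOn D (Icc 0 1)) (hDpos : ∀ x ∈ Icc (0:ℝ) 1, 0 < D x) :
    IntervalIntegrable
      (fun x => R x ^ 2 / D x * iteratedDeriv 2 Φ (∫ y in x..(1:ℝ), R y / D y))
      volume 0 1 := by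
  apply ContinuousOn.intervalIntegrable
  rw [uIcc_of_le (by norm_num : (0:ℝ) ≤ 1)]
  exact (((hRcont.pow 2).div hD (fun y hy => ne_of_gt (hDpos y hy))).mul
    (hΦc.comp_continuousOn (u_cont' R hRcont D hD hDpos)))

/-- Under `2Φ''Φ⁽⁴⁾ ≥ (Φ''')²` and matching sign conditions on `R`
and `Φ'''`, the entropy dissipation functional
`E[D] = ∫₀¹ (R²/D) Φ''(∫ₓ¹ R/D) dx` is convex on the set of continuous functions
`D ≥ γ` on `[0,1]`. -/
theorem stmt_9
    (S : ℝ → ℝ) (hS : ContinuousOn S (Icc 0 1))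
    (R : ℝ → ℝ) (hR : ∀ x, R x = ∫ y in (0:ℝ)..x, S y)
    (Φ : ℝ → ℝ) (hΦ : ContDiff ℝ 4 Φ) (hconv : ConvexOn ℝ univ Φ)
    (γ : ℝ) (hγ : 0 < γ)
    (h1 : ∀ v : ℝ, iteratedDeriv 3 Φ v ^ 2 ≤ 2 * iteratedDeriv 2 Φ v * iteratedDeriv 4 Φ v)
    (h2 : ((∀ x ∈ Ioo (0:ℝ) 1, 0 ≤ R x) ∧ ∀ v : ℝ, 0 ≤ iteratedDeriv 3 Φ v) ∨
          ((∀ x ∈ Ioo (0:ℝ) 1, R x ≤ 0) ∧ ∀ v : ℝ, iteratedDeriv 3 Φ v ≤ 0)) :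
    ConvexOn ℝ {D : ℝ → ℝ | ContinuousOn D (Icc 0 1) ∧ ∀ x ∈ Icc (0:ℝ) 1, γ ≤ D x}
      (fun D => ∫ x in (0:ℝ)..1,
        (R x ^ 2 / D x) * iteratedDeriv 2 Φ (∫ y in x..(1:ℝ), R y / D y)) := by
  have hΦ2n : ∀ v, 0 ≤ iteratedDeriv 2 Φ v := phi2_nonneg' Φ hΦ hconv
  have hΦ4n : ∀ v, 0 ≤ iteratedDeriv 4 Φ v := phi4_nonneg' Φ hΦ hΦ2n h1
  have hΦ₂cont : Continuous (iteratedDeriv 2 Φ) := hΦ.continuous_iteratedDeriv 2 (by norm_num)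
  have hdiff2 : Differentiable ℝ (iteratedDeriv 2 Φ) :=
    hΦ.differentiable_iteratedDeriv 2 (by norm_num)
  have hd23 : deriv (iteratedDeriv 2 Φ) = iteratedDeriv 3 Φ := (iteratedDeriv_succ (n := 2)).symm
  have hRcont : ContinuousOn R (Icc 0 1) := by
    have hRfun : R = fun x => ∫ y in (0:ℝ)..x, S y := funext hR
    rw [hRfun]
    have h_int : IntegrableOn S (uIcc (0:ℝ) 1) volume := by
      rw [uIcc_of_le (by norm_num : (0:ℝ) ≤ 1)]
      exact hS.integrableOn_Icc
    have := intervalIntegral.continuousOn_primitive_interval (μ := volume) h_int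
    rwa [uIcc_of_le (by norm_num : (0:ℝ) ≤ 1)] at this
  have hR0 : R 0 = 0 := by rw [hR 0, intervalIntegral.integral_same]
  have hcases : ((∀ x ∈ Icc (0:ℝ) 1, 0 ≤ R x) ∧ Monotone (iteratedDeriv 2 Φ)) ∨
      ((∀ x ∈ Icc (0:ℝ) 1, R x ≤ 0) ∧ Antitone (iteratedDeriv 2 Φ)) := by
    rcases h2 with ⟨hRs, hΦ₃s⟩ | ⟨hRs, hΦ₃s⟩
    · left
      refine ⟨sign_extend' hRcont hR0 hRs, ?_⟩
      exact monotone_of_deriv_nonneg hdiff2 (fun v => by rw [hd23]; exact hΦ₃s v)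
    · right
      constructor
      · have := sign_extend' hRcont.neg (by simp [hR0])
          (fun x hx => neg_nonneg.2 (hRs x hx))
        intro x hx
        have := this x hx
        simpa [neg_nonneg] using this
      · exact antitone_of_deriv_nonpos hdiff2 (fun v => by rw [hd23]; exact hΦ₃s v)
  constructor
  · -- the set is convex
    intro D₀ hD₀ D₁ hD₁ a b ha hb hab
    constructor
    · have he : ((a • D₀ + b • D₁ : ℝ → ℝ)) = fun x => a * D₀ x + b * D₁ x := by
        funext x; simp [smul_eq_mul]
      rw [he]
      exact (continuousOn_const.mul hD₀.1).add (continuousOn_const.mul hD₁.1)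
    · intro x hx
      have h₀ := hD₀.2 x hx
      have h₁ := hD₁.2 x hx
      simp only [Pi.add_apply, Pi.smul_apply, smul_eq_mul]
      nlinarith [mul_le_mul_of_nonneg_left h₀ ha, mul_le_mul_of_nonneg_left h₁ hb]
  · intro D₀ hD₀ D₁ hD₁ a b ha hb hab
    simp only [Pi.add_apply, Pi.smul_apply, smul_eq_mul]
    have hD₀pos : ∀ x ∈ Icc (0:ℝ) 1, 0 < D₀ x := fun x hx => lt_of_lt_of_le hγ (hD₀.2 x hx)
    have hD₁pos : ∀ x ∈ Icc (0:ℝ) 1, 0 < D₁ x := fun x hx => lt_of_lt_of_le hγ (hD₁.2 x hx)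
    have hDcc : ContinuousOn (fun x => a * D₀ x + b * D₁ x) (Icc 0 1) :=
      (continuousOn_const.mul hD₀.1).add (continuousOn_const.mul hD₁.1)
    have hDcpos : ∀ x ∈ Icc (0:ℝ) 1, 0 < a * D₀ x + b * D₁ x :=
      fun x hx => combo_pos' ha hb hab (hD₀pos x hx) (hD₁pos x hx)
    -- the key per-point monotone comparison of the inner integrals
    have hq : ∀ x ∈ Icc (0:ℝ) 1,
        iteratedDeriv 2 Φ (∫ y in x..(1:ℝ), R y / (a * D₀ y + b * D₁ y)) ≤
        iteratedDeriv 2 Φ (a * (∫ y in x..(1:ℝ), R y / D₀ y)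
          + b * (∫ y in x..(1:ℝ), R y / D₁ y)) := by
      intro x hx
      have hsub : Icc x 1 ⊆ Icc (0:ℝ) 1 := fun y hy => ⟨le_trans hx.1 hy.1, hy.2⟩
      have i₀ := uII' R hRcont D₀ hD₀.1 hD₀pos hx
      have i₁ := uII' R hRcont D₁ hD₁.1 hD₁pos hx
      have ic := uII' R hRcont _ hDcc hDcpos hx
      have isum : IntervalIntegrable
          (fun y => a * (R y / D₀ y) + b * (R y / D₁ y)) volume x 1 :=
        (i₀.const_mul a).add (i₁.const_mul b)
      have hsplit : (∫ y in x..(1:ℝ), (a * (R y / D₀ y) + b * (R y / D₁ y)))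
          = a * (∫ y in x..(1:ℝ), R y / D₀ y) + b * (∫ y in x..(1:ℝ), R y / D₁ y) := by
        rw [intervalIntegral.integral_add (i₀.const_mul a) (i₁.const_mul b),
          intervalIntegral.integral_const_mul, intervalIntegral.integral_const_mul]
      rcases hcases with ⟨hRs, hmono⟩ | ⟨hRs, hanti⟩
      · apply hmono
        rw [← hsplit]
        apply intervalIntegral.integral_mono_on hx.2 ic isum
        intro y hy
        exact inv_combo' (R y) (D₀ y) (D₁ y) a b (hRs y (hsub hy))
          (hD₀pos y (hsub hy)) (hD₁pos y (hsub hy)) ha hb hab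
      · apply hanti
        rw [← hsplit]
        apply intervalIntegral.integral_mono_on hx.2 isum ic
        intro y hy
        exact inv_combo_neg' (R y) (D₀ y) (D₁ y) a b (hRs y (hsub hy))
          (hD₀pos y (hsub hy)) (hD₁pos y (hsub hy)) ha hb hab
    -- pointwise inequality for the outer integrand
    have hpt : ∀ x ∈ Icc (0:ℝ) 1,
        R x ^ 2 / (a * D₀ x + b * D₁ x)
            * iteratedDeriv 2 Φ (∫ y in x..(1:ℝ), R y / (a * D₀ y + b * D₁ y))
          ≤ a * (R x ^ 2 / D₀ x * iteratedDeriv 2 Φ (∫ y in x..(1:ℝ), R y / D₀ y))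
            + b * (R x ^ 2 / D₁ x * iteratedDeriv 2 Φ (∫ y in x..(1:ℝ), R y / D₁ y)) := by
      intro x hx
      set u₀ := ∫ y in x..(1:ℝ), R y / D₀ y
      set u₁ := ∫ y in x..(1:ℝ), R y / D₁ y
      have hcpos := hDcpos x hx
      have step1 : R x ^ 2 / (a * D₀ x + b * D₁ x)
            * iteratedDeriv 2 Φ (∫ y in x..(1:ℝ), R y / (a * D₀ y + b * D₁ y))
          ≤ R x ^ 2 / (a * D₀ x + b * D₁ x) * iteratedDeriv 2 Φ (a * u₀ + b * u₁) :=
        mul_le_mul_of_nonneg_left (hq x hx) (div_nonneg (sq_nonneg _) hcpos.le)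
      have step2 := key_ineq' Φ hΦ hΦ2n hΦ4n h1 (q₀ := u₀) (q₁ := u₁)
        (hD₀pos x hx) (hD₁pos x hx) ha hb hab
      have step3 := mul_le_mul_of_nonneg_left step2 (sq_nonneg (R x))
      have eL : R x ^ 2 / (a * D₀ x + b * D₁ x) * iteratedDeriv 2 Φ (a * u₀ + b * u₁)
          = R x ^ 2 * (iteratedDeriv 2 Φ (a * u₀ + b * u₁) / (a * D₀ x + b * D₁ x)) := by
        ring
      have eR : R x ^ 2 * (a * (iteratedDeriv 2 Φ u₀ / D₀ x)
            + b * (iteratedDeriv 2 Φ u₁ / D₁ x))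
          = a * (R x ^ 2 / D₀ x * iteratedDeriv 2 Φ u₀)
            + b * (R x ^ 2 / D₁ x * iteratedDeriv 2 Φ u₁) := by
        ring
      linarith [step1, step3, eL ▸ step1, eR ▸ step3]
    -- integrate the pointwise inequality
    have f₀I := integrand_II' R hRcont Φ hΦ₂cont D₀ hD₀.1 hD₀pos
    have f₁I := integrand_II' R hRcont Φ hΦ₂cont D₁ hD₁.1 hD₁pos
    have fcI := integrand_II' R hRcont Φ hΦ₂cont _ hDcc hDcpos
    have hfin := intervalIntegral.integral_mono_on (by norm_num : (0:ℝ) ≤ 1) fcI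
      ((f₀I.const_mul a).add (f₁I.const_mul b)) hpt
    rwa [intervalIntegral.integral_add (f₀I.const_mul a) (f₁I.const_mul b),
      intervalIntegral.integral_const_mul, intervalIntegral.integral_const_mul] at hfin
end

section
/- Fix a, b > 0 with a > b, 0 < x₀ < x₁ < 1, γ > 0, and a convex function Φ : ℝ → ℝ of class C² with Φ'(0) = 0 and lim_{v→∞} Φ'(v) = ∞. Let 0 < T < ∞ and let D₁, D₂ : [0,T] → ℝ be continuous, differentiable on [0,T), strictly positive on [0,T), with D₁(0), D₂(0) ≥ γ, satisfying D₁'(t) = a² Φ''(u₀(t))/D₁(t)² and D₂'(t) = (a−b)(a Φ''(u₀(t)) − b Φ''(u₁(t)))/D₂(t)², where u₀(t) = a(x₁−x₀)/D₁(t) + (a−b)(1−x₁)/D₂(t) and u₁(t) = (a−b)(1−x₁)/D₂(t). Assume the energy E(t) = a Φ'(u₀(t)) − b Φ'(u₁(t)) satisfies E(t) ≤ E(0) < ∞ for all t ∈ [0,T). Then D₂(T) > 0. -/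
/-!
If `D₂` reached `0` at time `T`, then `u₁ = (a - b)(1 - x₁)/D₂` would blow up as `t → T⁻`, and
so would `Φ'(u₁)`. Since `Φ'` is nondecreasing and `u₀ ≥ u₁`, the energy dominates
`(a - b) Φ'(u₁)`, which contradicts `E(t) ≤ E(0)`.
-/

open Set Filter Topology

theorem Filter.Tendsto.nhdsGT_zero_of_le {α : Type*} {l : Filter α} [l.NeBot] {f : α → ℝ}
    {c : ℝ} (hf : Tendsto f l (𝓝 c)) (hpos : ∀ᶠ x in l, 0 < f x) (hc : c ≤ 0) :
    Tendsto f l (𝓝[>] 0) := by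
  obtain rfl : c = 0 := le_antisymm hc (ge_of_tendsto hf (hpos.mono fun _ => le_of_lt))
  exact tendsto_nhdsWithin_iff.2 ⟨hf, hpos⟩

theorem Filter.Tendsto.const_div_atTop_of_nhdsGT_zero {α : Type*} {l : Filter α} {f : α → ℝ}
    {c : ℝ} (hf : Tendsto f l (𝓝[>] 0)) (hc : 0 < c) :
    Tendsto (fun x => c / f x) l atTop := by
  simp only [div_eq_mul_inv]
  exact hf.inv_tendsto_nhdsGT_zero.const_mul_atTop hc

theorem sub_mul_le_mul_sub_mul_of_le {a b x y : ℝ} (ha : 0 ≤ a) (hxy : x ≤ y) :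
    (a - b) * x ≤ a * y - b * x := by
  nlinarith

theorem stmt_11_general
    (a b : ℝ) (ha : 0 < a) (hab : b < a)
    (x₀ x₁ : ℝ) (hx01 : x₀ < x₁) (hx₁ : x₁ < 1)
    (Φ : ℝ → ℝ) (hΦ : ContDiff ℝ 2 Φ) (hconv : ConvexOn ℝ univ Φ)
    (hΦ'top : Tendsto (deriv Φ) atTop atTop)
    (T : ℝ) (hT : 0 < T)
    (D₁ D₂ : ℝ → ℝ)
    (hD₂c : ContinuousOn D₂ (Icc 0 T))
    (hD₁pos : ∀ t ∈ Ico (0:ℝ) T, 0 < D₁ t) (hD₂pos : ∀ t ∈ Ico (0:ℝ) T, 0 < D₂ t)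
    (u₀ u₁ : ℝ → ℝ)
    (hu₀ : ∀ t, u₀ t = a * (x₁ - x₀) / D₁ t + (a - b) * (1 - x₁) / D₂ t)
    (hu₁ : ∀ t, u₁ t = (a - b) * (1 - x₁) / D₂ t)
    (E : ℝ → ℝ) (hE : ∀ t, E t = a * deriv Φ (u₀ t) - b * deriv Φ (u₁ t))
    (hEdec : ∀ t ∈ Ico (0:ℝ) T, E t ≤ E 0) :
    0 < D₂ T := by
  by_contra! hD₂T
  have hIco : Ico 0 T ∈ 𝓝[<] T := Ico_mem_nhdsLT hT
  have hD₂lim : Tendsto D₂ (𝓝[<] T) (𝓝[>] 0) :=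
    ((hD₂c T ⟨hT.le, le_rfl⟩).mono_of_mem_nhdsWithin
      (mem_of_superset hIco Ico_subset_Icc_self)).tendsto.nhdsGT_zero_of_le
      (mem_of_superset hIco hD₂pos) hD₂T
  have hu₁top : Tendsto u₁ (𝓝[<] T) atTop := by
    simpa only [← hu₁] using
      hD₂lim.const_div_atTop_of_nhdsGT_zero (mul_pos (sub_pos.2 hab) (sub_pos.2 hx₁))
  have hmono : Monotone (deriv Φ) := by
    simpa only [monotoneOn_univ] using
      hconv.monotoneOn_deriv fun x _ => (hΦ.differentiable two_ne_zero).differentiableAt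
  have hbound : ∀ t ∈ Ico 0 T, (a - b) * deriv Φ (u₁ t) ≤ E 0 := by
    intro t ht
    have hu₁₀ : u₁ t ≤ u₀ t := by
      rw [hu₀, hu₁, le_add_iff_nonneg_left]
      exact div_nonneg (mul_nonneg ha.le (sub_pos.2 hx01).le) (hD₁pos t ht).le
    calc (a - b) * deriv Φ (u₁ t) ≤ E t :=
          hE t ▸ sub_mul_le_mul_sub_mul_of_le ha.le (hmono hu₁₀)
      _ ≤ E 0 := hEdec t ht
  obtain ⟨t, hbig, ht⟩ :=
    (((hΦ'top.comp hu₁top).const_mul_atTop (sub_pos.2 hab)).eventually_gt_atTop (E 0)).and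
      hIco |>.exists
  exact (hbig.trans_le (hbound t ht)).false

/-- For the δ-source gradient-flow ODE system with `a > b`, if
`Φ'(v) → ∞` as `v → ∞` and the energy `E(t) = aΦ'(u₀(t)) − bΦ'(u₁(t))` is
nonincreasing, then `D₂(T) > 0`. -/
theorem stmt_11
    (a b : ℝ) (ha : 0 < a) (hb : 0 < b) (hab : b < a)
    (x₀ x₁ : ℝ) (hx₀ : 0 < x₀) (hx01 : x₀ < x₁) (hx₁ : x₁ < 1)
    (γ : ℝ) (hγ : 0 < γ)
    (Φ : ℝ → ℝ) (hΦ : ContDiff ℝ 2 Φ) (hconv : ConvexOn ℝ univ Φ)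
    (hΦ'0 : deriv Φ 0 = 0)
    (hΦ'top : Tendsto (deriv Φ) atTop atTop)
    (T : ℝ) (hT : 0 < T)
    (D₁ D₂ : ℝ → ℝ)
    (hD₁c : ContinuousOn D₁ (Icc 0 T)) (hD₂c : ContinuousOn D₂ (Icc 0 T))
    (hD₁pos : ∀ t ∈ Ico (0:ℝ) T, 0 < D₁ t) (hD₂pos : ∀ t ∈ Ico (0:ℝ) T, 0 < D₂ t)
    (hD₁0 : γ ≤ D₁ 0) (hD₂0 : γ ≤ D₂ 0)
    (u₀ u₁ : ℝ → ℝ)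
    (hu₀ : ∀ t, u₀ t = a * (x₁ - x₀) / D₁ t + (a - b) * (1 - x₁) / D₂ t)
    (hu₁ : ∀ t, u₁ t = (a - b) * (1 - x₁) / D₂ t)
    (hODE₁ : ∀ t ∈ Ico (0:ℝ) T,
      HasDerivWithinAt D₁ (a ^ 2 * iteratedDeriv 2 Φ (u₀ t) / (D₁ t) ^ 2) (Icc 0 T) t)
    (hODE₂ : ∀ t ∈ Ico (0:ℝ) T,
      HasDerivWithinAt D₂
        ((a - b) * (a * iteratedDeriv 2 Φ (u₀ t) - b * iteratedDeriv 2 Φ (u₁ t)) / (D₂ t) ^ 2)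
        (Icc 0 T) t)
    (E : ℝ → ℝ) (hE : ∀ t, E t = a * deriv Φ (u₀ t) - b * deriv Φ (u₁ t))
    (hEdec : ∀ t ∈ Ico (0:ℝ) T, E t ≤ E 0) :
    0 < D₂ T :=
  stmt_11_general a b ha hab x₀ x₁ hx01 hx₁ Φ hΦ hconv hΦ'top T hT D₁ D₂ hD₂c hD₁pos hD₂pos u₀ u₁
    hu₀ hu₁ E hE hEdec
end

section
/- Fix a, b > 0 with a < b, 0 < x₀ < x₁ < 1, γ > 0, and a convex function Φ : ℝ → ℝ of class C² with Φ'(0) = 0 and lim_{v→−∞} Φ'(v) = −∞. Let 0 < T < ∞ and let D₁, D₂ : [0,T] → ℝ be continuous, differentiable on [0,T), strictly positive on [0,T), with D₁(0), D₂(0) ≥ γ, satisfying D₁'(t) = a² Φ''(u₀(t))/D₁(t)² and D₂'(t) = (a−b)(a Φ''(u₀(t)) − b Φ''(u₁(t)))/D₂(t)², where u₀(t) = a(x₁−x₀)/D₁(t) + (a−b)(1−x₁)/D₂(t) and u₁(t) = (a−b)(1−x₁)/D₂(t). Assume the energy E(t) = a Φ'(u₀(t)) − b Φ'(u₁(t))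 satisfies E(t) ≤ E(0) < ∞ for all t ∈ [0,T). Then D₂(T) > 0. -/
/-!
The energy bound `a Φ'(u₀) − b Φ'(u₁) ≤ E(0)` together with `u₁ ≤ u₀` and the monotonicity of
`Φ'` gives `(a − b) Φ'(u₁) ≤ E(0)`. As `a − b < 0` and `Φ' → −∞` at `−∞`, this keeps `u₁` above
some `M < 0`; since `u₁ = (a − b)(1 − x₁)/D₂`, it keeps `D₂` above the positive constant
`(a − b)(1 − x₁)/M` on `[0, T)`, and continuity carries the bound to `t = T`.
-/

open MeasureTheory Set Filter

theorem Monotone.sub_mul_apply_le_of_mul_sub_mul_le {f : ℝ → ℝ} (hf : Monotone f)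
    {a b u v C : ℝ} (ha : 0 ≤ a) (huv : u ≤ v) (h : a * f v - b * f u ≤ C) :
    (a - b) * f u ≤ C := by
  nlinarith [mul_le_mul_of_nonneg_left (hf huv) ha]

theorem Filter.Tendsto.exists_neg_forall_lt_of_mul_le {f : ℝ → ℝ}
    (hf : Tendsto f atBot atBot) {k : ℝ} (hk : k < 0) (C : ℝ) :
    ∃ M < 0, ∀ v, k * f v ≤ C → M < v := by
  obtain ⟨M, hM⟩ := eventually_atBot.1 (hf.eventually_lt_atBot (C / k))
  refine ⟨min M (-1), by simp, fun v hv => ?_⟩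
  by_contra! hvM
  have hfv : f v < C / k := hM v (hvM.trans (min_le_left _ _))
  exact hv.not_gt (by simpa [mul_div_cancel₀ C hk.ne] using mul_lt_mul_of_neg_left hfv hk)

theorem stmt_13_general
    (a b : ℝ) (ha : 0 < a) (hab : a < b)
    (x₀ x₁ : ℝ) (hx01 : x₀ < x₁) (hx₁ : x₁ < 1)
    (Φ : ℝ → ℝ) (hΦ : ContDiff ℝ 2 Φ) (hconv : ConvexOn ℝ univ Φ)
    (hΦ'bot : Tendsto (deriv Φ) atBot atBot)
    (T : ℝ) (hT : 0 < T)
    (D₁ D₂ : ℝ → ℝ)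
    (hD₂c : ContinuousOn D₂ (Icc 0 T))
    (hD₁pos : ∀ t ∈ Ico (0:ℝ) T, 0 < D₁ t) (hD₂pos : ∀ t ∈ Ico (0:ℝ) T, 0 < D₂ t)
    (u₀ u₁ : ℝ → ℝ)
    (hu₀ : ∀ t, u₀ t = a * (x₁ - x₀) / D₁ t + (a - b) * (1 - x₁) / D₂ t)
    (hu₁ : ∀ t, u₁ t = (a - b) * (1 - x₁) / D₂ t)
    (E : ℝ → ℝ) (hE : ∀ t, E t = a * deriv Φ (u₀ t) - b * deriv Φ (u₁ t))
    (hEdec : ∀ t ∈ Ico (0:ℝ) T, E t ≤ E 0) :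
    0 < D₂ T := by
  have hmono : Monotone (deriv Φ) := monotoneOn_univ.1 <|
    hconv.monotoneOn_deriv fun x _ => (hΦ.differentiable (by norm_num)).differentiableAt
  have hq : (a - b) * (1 - x₁) < 0 := mul_neg_of_neg_of_pos (by linarith) (by linarith)
  have hu₁_le_u₀ : ∀ t ∈ Ico (0:ℝ) T, u₁ t ≤ u₀ t := fun t ht => by
    rw [hu₀, hu₁]
    exact le_add_of_nonneg_left <|
      div_nonneg (mul_nonneg ha.le (by linarith)) (hD₁pos t ht).le
  obtain ⟨M, hM, hu₁M⟩ := hΦ'bot.exists_neg_forall_lt_of_mul_le (sub_neg.2 hab) (E 0)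
  have hD₂_lb : ∀ t ∈ Ico (0:ℝ) T, (a - b) * (1 - x₁) / M ≤ D₂ t := fun t ht => by
    have hEt : a * deriv Φ (u₀ t) - b * deriv Φ (u₁ t) ≤ E 0 := hE t ▸ hEdec t ht
    have hMu : M < (a - b) * (1 - x₁) / D₂ t := by
      rw [← hu₁]
      exact hu₁M _ (hmono.sub_mul_apply_le_of_mul_sub_mul_le ha.le (hu₁_le_u₀ t ht) hEt)
    rw [div_le_iff_of_neg hM]
    exact (mul_comm M _ ▸ (lt_div_iff₀ (hD₂pos t ht)).1 hMu).le
  have hD₂T : (a - b) * (1 - x₁) / M ≤ D₂ T :=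
    le_on_closure (f := fun _ => _) hD₂_lb continuousOn_const
      (by rwa [closure_Ico hT.ne]) (by rw [closure_Ico hT.ne]; exact right_mem_Icc.2 hT.le)
  exact (div_pos_of_neg_of_neg hq hM).trans_le hD₂T

/-- For the δ-source gradient-flow ODE system with `a < b`, if
`Φ'(v) → −∞` as `v → −∞` and the energy `E(t) = aΦ'(u₀(t)) − bΦ'(u₁(t))` is
nonincreasing, then `D₂(T) > 0`. -/
theorem stmt_13
    (a b : ℝ) (ha : 0 < a) (hb : 0 < b) (hab : a < b)
    (x₀ x₁ : ℝ) (hx₀ : 0 < x₀) (hx01 : x₀ < x₁) (hx₁ : x₁ < 1)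
    (γ : ℝ) (hγ : 0 < γ)
    (Φ : ℝ → ℝ) (hΦ : ContDiff ℝ 2 Φ) (hconv : ConvexOn ℝ univ Φ)
    (hΦ'0 : deriv Φ 0 = 0)
    (hΦ'bot : Tendsto (deriv Φ) atBot atBot)
    (T : ℝ) (hT : 0 < T)
    (D₁ D₂ : ℝ → ℝ)
    (hD₁c : ContinuousOn D₁ (Icc 0 T)) (hD₂c : ContinuousOn D₂ (Icc 0 T))
    (hD₁pos : ∀ t ∈ Ico (0:ℝ) T, 0 < D₁ t) (hD₂pos : ∀ t ∈ Ico (0:ℝ) T, 0 < D₂ t)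
    (hD₁0 : γ ≤ D₁ 0) (hD₂0 : γ ≤ D₂ 0)
    (u₀ u₁ : ℝ → ℝ)
    (hu₀ : ∀ t, u₀ t = a * (x₁ - x₀) / D₁ t + (a - b) * (1 - x₁) / D₂ t)
    (hu₁ : ∀ t, u₁ t = (a - b) * (1 - x₁) / D₂ t)
    (hODE₁ : ∀ t ∈ Ico (0:ℝ) T,
      HasDerivWithinAt D₁ (a ^ 2 * iteratedDeriv 2 Φ (u₀ t) / (D₁ t) ^ 2) (Icc 0 T) t)
    (hODE₂ : ∀ t ∈ Ico (0:ℝ) T,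
      HasDerivWithinAt D₂
        ((a - b) * (a * iteratedDeriv 2 Φ (u₀ t) - b * iteratedDeriv 2 Φ (u₁ t)) / (D₂ t) ^ 2)
        (Icc 0 T) t)
    (E : ℝ → ℝ) (hE : ∀ t, E t = a * deriv Φ (u₀ t) - b * deriv Φ (u₁ t))
    (hEdec : ∀ t ∈ Ico (0:ℝ) T, E t ≤ E 0) :
    0 < D₂ T :=
  stmt_13_general a b ha hab x₀ x₁ hx01 hx₁ Φ hΦ hconv hΦ'bot T hT D₁ D₂ hD₂c hD₁pos hD₂pos u₀ u₁
    hu₀ hu₁ E hE hEdec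
end

section
/- Fix a, b > 0 with a < b, 0 < x₀ < x₁ < 1, γ > 0, and a convex function Φ : ℝ → ℝ of class C² with Φ'(0) = 0 and β := −lim_{v→−∞} Φ'(v) < ∞. Let 0 < T < ∞ and let D₁, D₂ : [0,T] → ℝ be continuous, differentiable on [0,T), strictly positive on [0,T), with D₁(0), D₂(0) ≥ γ, satisfying D₁'(t) = a² Φ''(u₀(t))/D₁(t)² and D₂'(t) = (a−b)(a Φ''(u₀(t)) − b Φ''(u₁(t)))/D₂(t)², where u₀(t) = a(x₁−x₀)/D₁(t) + (a−b)(1−x₁)/D₂(t) and u₁(t) = (a−b)(1−x₁)/D₂(t). Assume the energy E(t) = a Φ'(u₀(t)) − b Φ'(u₁(t)) satisfies E(t) < E(0) < ∞ for all t ∈ (0,T), and that β ≥ E(0)/(b−a). Then D₂(T) > 0. -/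
open MeasureTheory Set Filter Topology

/-- For the δ-source gradient-flow ODE system with `a < b`, if
`Φ'(v) → −β > −∞` as `v → −∞`, the energy `E(t) = aΦ'(u₀(t)) − bΦ'(u₁(t))` is strictly
below `E(0)` for `t ∈ (0,T)`, and `β ≥ E(0)/(b−a)`, then `D₂(T) > 0`. -/
theorem stmt_14
    (a b : ℝ) (ha : 0 < a) (hb : 0 < b) (hab : a < b)
    (x₀ x₁ : ℝ) (hx₀ : 0 < x₀) (hx01 : x₀ < x₁) (hx₁ : x₁ < 1)
    (γ : ℝ) (hγ : 0 < γ)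
    (Φ : ℝ → ℝ) (hΦ : ContDiff ℝ 2 Φ) (hconv : ConvexOn ℝ univ Φ)
    (hΦ'0 : deriv Φ 0 = 0)
    (β : ℝ) (hΦ'bot : Tendsto (deriv Φ) atBot (nhds (-β)))
    (T : ℝ) (hT : 0 < T)
    (D₁ D₂ : ℝ → ℝ)
    (hD₁c : ContinuousOn D₁ (Icc 0 T)) (hD₂c : ContinuousOn D₂ (Icc 0 T))
    (hD₁pos : ∀ t ∈ Ico (0:ℝ) T, 0 < D₁ t) (hD₂pos : ∀ t ∈ Ico (0:ℝ) T, 0 < D₂ t)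
    (hD₁0 : γ ≤ D₁ 0) (hD₂0 : γ ≤ D₂ 0)
    (u₀ u₁ : ℝ → ℝ)
    (hu₀ : ∀ t, u₀ t = a * (x₁ - x₀) / D₁ t + (a - b) * (1 - x₁) / D₂ t)
    (hu₁ : ∀ t, u₁ t = (a - b) * (1 - x₁) / D₂ t)
    (hODE₁ : ∀ t ∈ Ico (0:ℝ) T,
      HasDerivWithinAt D₁ (a ^ 2 * iteratedDeriv 2 Φ (u₀ t) / (D₁ t) ^ 2) (Icc 0 T) t)
    (hODE₂ : ∀ t ∈ Ico (0:ℝ) T,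
      HasDerivWithinAt D₂
        ((a - b) * (a * iteratedDeriv 2 Φ (u₀ t) - b * iteratedDeriv 2 Φ (u₁ t)) / (D₂ t) ^ 2)
        (Icc 0 T) t)
    (E : ℝ → ℝ) (hE : ∀ t, E t = a * deriv Φ (u₀ t) - b * deriv Φ (u₁ t))
    (hEdec : ∀ t ∈ Ioo (0:ℝ) T, E t < E 0)
    (hβ : E 0 / (b - a) ≤ β) :
    0 < D₂ T := by
  by_contra hcon
  push_neg at hcon
  have hbapos : (0:ℝ) < b - a := by linarith
  have hTIcc : T ∈ Icc (0:ℝ) T := ⟨hT.le, le_rfl⟩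
  have hc₁pos : 0 < a * (x₁ - x₀) := mul_pos ha (by linarith)
  have hc₂neg : (a - b) * (1 - x₁) < 0 :=
    mul_neg_of_neg_of_pos (by linarith) (by linarith)
  -- the approach filter at T from the left, inside (0,T)
  have hlne : (𝓝[Ioo (0:ℝ) T] T).NeBot := by
    rw [nhdsWithin_Ioo_eq_nhdsLT hT]
    infer_instance
  have hmemIoo : ∀ᶠ t in 𝓝[Ioo (0:ℝ) T] T, t ∈ Ioo (0:ℝ) T := eventually_mem_nhdsWithin
  have hD₂tend : Tendsto D₂ (𝓝[Ioo (0:ℝ) T] T) (𝓝 (D₂ T)) :=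
    (hD₂c T hTIcc).mono_left (nhdsWithin_mono T Ioo_subset_Icc_self)
  -- D₂ T = 0
  have hD₂T : D₂ T = 0 := by
    refine le_antisymm hcon ?_
    exact ge_of_tendsto hD₂tend (hmemIoo.mono fun t ht => (hD₂pos t ⟨ht.1.le, ht.2⟩).le)
  -- regularity of Φ
  have hΦd : Differentiable ℝ Φ := hΦ.differentiable two_ne_zero
  have hΦ'C1 : ContDiff ℝ 1 (deriv Φ) := by
    have h2 : ContDiff ℝ (1 + 1 : WithTop ℕ∞) Φ := by norm_num; exact hΦ
    exact (contDiff_succ_iff_deriv.mp h2).2.2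
  have hΦ'd : Differentiable ℝ (deriv Φ) := hΦ'C1.differentiable one_ne_zero
  have hΦ''at : ∀ x : ℝ, HasDerivAt (deriv Φ) (iteratedDeriv 2 Φ x) x := by
    intro x
    have h2 : iteratedDeriv 2 Φ = deriv (deriv Φ) := by
      rw [show (2:ℕ) = 1+1 from rfl, iteratedDeriv_succ, iteratedDeriv_one]
    rw [h2]
    exact (hΦ'd x).hasDerivAt
  -- second derivative is nonnegative
  have hmono : Monotone (deriv Φ) :=
    monotoneOn_univ.mp (hconv.monotoneOn_deriv fun x _ => hΦd x)
  have hφ'' : ∀ x : ℝ, 0 ≤ iteratedDeriv 2 Φ x := by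
    intro x
    have hslope := hasDerivAt_iff_tendsto_slope.mp (hΦ''at x)
    refine ge_of_tendsto hslope ?_
    filter_upwards [self_mem_nhdsWithin] with y hy
    rw [slope_def_field]
    rcases lt_or_gt_of_ne (Ne.symm hy) with h | h
    · exact div_nonneg (sub_nonneg.2 (hmono h.le)) (by linarith)
    · exact div_nonneg_iff.mpr (Or.inr ⟨sub_nonpos.2 (hmono h.le), by linarith⟩)
  -- functional forms
  have hu₀fun : u₀ = fun s => a * (x₁ - x₀) * (D₁ s)⁻¹ + (a - b) * (1 - x₁) * (D₂ s)⁻¹ :=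
    funext fun s => by rw [hu₀ s, div_eq_mul_inv, div_eq_mul_inv]
  have hu₁fun : u₁ = fun s => (a - b) * (1 - x₁) * (D₂ s)⁻¹ :=
    funext fun s => by rw [hu₁ s, div_eq_mul_inv]
  have hEfun : E = fun s => a * deriv Φ (u₀ s) - b * deriv Φ (u₁ s) := funext hE
  -- energy dissipation: E has nonpositive derivative on [0,T)
  have hEderiv : ∀ t ∈ Ico (0:ℝ) T, ∃ e, HasDerivWithinAt E e (Icc 0 T) t ∧ e ≤ 0 := by
    intro t ht
    have hp : 0 < D₁ t := hD₁pos t ht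
    have hq : 0 < D₂ t := hD₂pos t ht
    set φ₀ := iteratedDeriv 2 Φ (u₀ t) with hφ₀
    set φ₁ := iteratedDeriv 2 Φ (u₁ t) with hφ₁
    have hd1 := hODE₁ t ht
    have hd2 := hODE₂ t ht
    have hinv1 : HasDerivWithinAt (fun s => (D₁ s)⁻¹)
        (-(a ^ 2 * φ₀ / D₁ t ^ 2) / D₁ t ^ 2) (Icc 0 T) t := hd1.inv hp.ne'
    have hinv2 : HasDerivWithinAt (fun s => (D₂ s)⁻¹)
        (-((a - b) * (a * φ₀ - b * φ₁) / D₂ t ^ 2) / D₂ t ^ 2) (Icc 0 T) t := hd2.inv hq.ne'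
    have hu1' : HasDerivWithinAt u₁
        ((a - b) * (1 - x₁) * (-((a - b) * (a * φ₀ - b * φ₁) / D₂ t ^ 2) / D₂ t ^ 2))
        (Icc 0 T) t := by
      rw [hu₁fun]; exact hinv2.const_mul _
    have hu0' : HasDerivWithinAt u₀
        (a * (x₁ - x₀) * (-(a ^ 2 * φ₀ / D₁ t ^ 2) / D₁ t ^ 2)
          + (a - b) * (1 - x₁) * (-((a - b) * (a * φ₀ - b * φ₁) / D₂ t ^ 2) / D₂ t ^ 2))
        (Icc 0 T) t := by
      rw [hu₀fun]; exact (hinv1.const_mul _).add (hinv2.const_mul _)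
    have hcomp0 : HasDerivWithinAt (fun s => deriv Φ (u₀ s))
        (φ₀ * (a * (x₁ - x₀) * (-(a ^ 2 * φ₀ / D₁ t ^ 2) / D₁ t ^ 2)
          + (a - b) * (1 - x₁) * (-((a - b) * (a * φ₀ - b * φ₁) / D₂ t ^ 2) / D₂ t ^ 2)))
        (Icc 0 T) t := (hΦ''at (u₀ t)).comp_hasDerivWithinAt t hu0'
    have hcomp1 : HasDerivWithinAt (fun s => deriv Φ (u₁ s))
        (φ₁ * ((a - b) * (1 - x₁) * (-((a - b) * (a * φ₀ - b * φ₁) / D₂ t ^ 2) / D₂ t ^ 2)))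
        (Icc 0 T) t := (hΦ''at (u₁ t)).comp_hasDerivWithinAt t hu1'
    refine ⟨_, by rw [hEfun]; exact (hcomp0.const_mul a).sub (hcomp1.const_mul b), ?_⟩
    have key : a * (φ₀ * (a * (x₁ - x₀) * (-(a ^ 2 * φ₀ / D₁ t ^ 2) / D₁ t ^ 2)
          + (a - b) * (1 - x₁) * (-((a - b) * (a * φ₀ - b * φ₁) / D₂ t ^ 2) / D₂ t ^ 2)))
        - b * (φ₁ * ((a - b) * (1 - x₁) * (-((a - b) * (a * φ₀ - b * φ₁) / D₂ t ^ 2) / D₂ t ^ 2)))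
        = -(a ^ 4 * (x₁ - x₀) * φ₀ ^ 2 / D₁ t ^ 4)
          - (a - b) ^ 2 * (1 - x₁) * (a * φ₀ - b * φ₁) ^ 2 / D₂ t ^ 4 := by
      field_simp
      ring
    rw [key]
    have h1 : 0 ≤ a ^ 4 * (x₁ - x₀) * φ₀ ^ 2 / D₁ t ^ 4 :=
      div_nonneg (mul_nonneg (mul_nonneg (pow_nonneg ha.le 4) (by linarith)) (sq_nonneg _))
        (pow_nonneg hp.le 4)
    have h2 : 0 ≤ (a - b) ^ 2 * (1 - x₁) * (a * φ₀ - b * φ₁) ^ 2 / D₂ t ^ 4 :=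
      div_nonneg (mul_nonneg (mul_nonneg (sq_nonneg _) (by linarith)) (sq_nonneg _))
        (pow_nonneg hq.le 4)
    linarith
  -- E is antitone up to any t < T
  have hEanti : ∀ s t : ℝ, 0 ≤ s → s ≤ t → t < T → E t ≤ E s := by
    intro s t hs hst htT
    have hanti : AntitoneOn E (Icc 0 t) := by
      apply antitoneOn_of_deriv_nonpos (convex_Icc 0 t)
      · intro r hr
        obtain ⟨e, he, _⟩ := hEderiv r ⟨hr.1, lt_of_le_of_lt hr.2 htT⟩
        exact he.continuousWithinAt.mono (Icc_subset_Icc le_rfl htT.le)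
      · intro r hr
        rw [interior_Icc] at hr
        obtain ⟨e, he, _⟩ := hEderiv r ⟨hr.1.le, hr.2.trans htT⟩
        exact ((he.hasDerivAt (Icc_mem_nhds hr.1 (hr.2.trans htT))).differentiableAt).differentiableWithinAt
      · intro r hr
        rw [interior_Icc] at hr
        obtain ⟨e, he, hle⟩ := hEderiv r ⟨hr.1.le, hr.2.trans htT⟩
        rw [(he.hasDerivAt (Icc_mem_nhds hr.1 (hr.2.trans htT))).deriv]
        exact hle
    exact hanti ⟨hs, hst⟩ ⟨hs.trans hst, le_rfl⟩ hst
  -- D₁ is monotone, hence ≥ γ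
  have hD₁mono : MonotoneOn D₁ (Icc 0 T) := by
    apply monotoneOn_of_hasDerivWithinAt_nonneg (convex_Icc 0 T) hD₁c
      (f' := fun t => a ^ 2 * iteratedDeriv 2 Φ (u₀ t) / D₁ t ^ 2)
    · intro x hx
      rw [interior_Icc] at hx
      exact (hODE₁ x ⟨hx.1.le, hx.2⟩).mono interior_subset
    · intro x _
      exact div_nonneg (mul_nonneg (sq_nonneg a) (hφ'' _)) (sq_nonneg _)
  have hD₁geγ : ∀ t ∈ Icc (0:ℝ) T, γ ≤ D₁ t := fun t ht =>
    hD₁0.trans (hD₁mono ⟨le_rfl, hT.le⟩ ht ht.1)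
  -- u₁ → -∞ as t → T⁻
  have hD₂lim : Tendsto D₂ (𝓝[Ioo (0:ℝ) T] T) (𝓝[>] 0) := by
    rw [tendsto_nhdsWithin_iff]
    refine ⟨by rwa [hD₂T] at hD₂tend, ?_⟩
    exact hmemIoo.mono fun t ht => hD₂pos t ⟨ht.1.le, ht.2⟩
  have hu₁lim : Tendsto u₁ (𝓝[Ioo (0:ℝ) T] T) atBot := by
    have h := (tendsto_const_mul_atBot_of_neg hc₂neg).mpr
      (tendsto_inv_nhdsGT_zero.comp hD₂lim)
    exact h.congr fun s => by simp only [Function.comp_apply]; rw [hu₁ s, div_eq_mul_inv]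
  -- u₀ → -∞ as t → T⁻
  have hu₀lim : Tendsto u₀ (𝓝[Ioo (0:ℝ) T] T) atBot := by
    refine tendsto_atBot_mono' _ ?_
      (tendsto_atBot_add_const_left _ (a * (x₁ - x₀) / γ) hu₁lim)
    filter_upwards [hmemIoo] with t ht
    have hle : γ ≤ D₁ t := hD₁geγ t ⟨ht.1.le, ht.2.le⟩
    have : a * (x₁ - x₀) / D₁ t ≤ a * (x₁ - x₀) / γ :=
      div_le_div_of_nonneg_left hc₁pos.le hγ hle
    rw [hu₀ t, hu₁ t]
    linarith
  -- E → (b-a)β as t → T⁻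
  have hElim : Tendsto E (𝓝[Ioo (0:ℝ) T] T) (𝓝 (a * (-β) - b * (-β))) := by
    have h0 : Tendsto (fun t => deriv Φ (u₀ t)) (𝓝[Ioo (0:ℝ) T] T) (𝓝 (-β)) :=
      hΦ'bot.comp hu₀lim
    have h1 : Tendsto (fun t => deriv Φ (u₁ t)) (𝓝[Ioo (0:ℝ) T] T) (𝓝 (-β)) :=
      hΦ'bot.comp hu₁lim
    exact (((h0.const_mul a).sub (h1.const_mul b))).congr fun t => (hE t).symm
  -- conclusion
  have ht₀ : T / 2 ∈ Ioo (0:ℝ) T := ⟨half_pos hT, half_lt_self hT⟩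
  have hEup : ∀ᶠ t in 𝓝[Ioo (0:ℝ) T] T, E t ≤ E (T / 2) := by
    have h1 : ∀ᶠ t in 𝓝[Ioo (0:ℝ) T] T, T / 2 < t :=
      eventually_nhdsWithin_of_eventually_nhds (eventually_gt_nhds ht₀.2)
    filter_upwards [hmemIoo, h1] with t ht hlt
    exact hEanti (T / 2) t ht₀.1.le hlt.le ht.2
  have hfinal : a * (-β) - b * (-β) ≤ E (T / 2) := le_of_tendsto hElim hEup
  have hE0 : E 0 ≤ β * (b - a) := (div_le_iff₀ hbapos).mp hβ
  have hdec := hEdec (T / 2) ht₀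
  have hring : a * (-β) - b * (-β) = β * (b - a) := by ring
  linarith
end

section
/- Fix a, b > 0 with a > b, 0 < x₀ < x₁ < 1, γ > 0, and a strictly convex function Φ : ℝ → ℝ of class C² with Φ'' continuous and strictly positive, such that ∫₁^∞ dv/(Φ''(v) v⁴) = ∞. Let 0 < T < ∞ and let D₁, D₂ : [0,T] → ℝ be continuous, differentiable on [0,T), with D₁(0), D₂(0) ≥ γ, strictly positive on [0,T), satisfying D₁'(t) = a² Φ''(u₀(t))/D₁(t)² and D₂'(t) = (a−b)(a Φ''(u₀(t)) − b Φ''(u₁(t)))/D₂(t)², where u₀(t) = a(x₁−x₀)/D₁(t) + (a−b)(1−x₁)/D₂(t) and u₁(t) = (a−b)(1−x₁)/D₂(t). Then D₂(T) > 0. -/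
/-!
With `c = (a - b)(1 - x₁)` and `u₁ = c / D₂`, the ODE for `D₂` gives
`u₁' = -(a - b)(a Φ''(u₀) - b Φ''(u₁)) u₁⁴ / c³ ≤ (a - b) b Φ''(u₁) u₁⁴ / c³`.
Hence the potential `G(w) = ∫₁^w dv / (Φ''(v) v⁴)` grows at most linearly along `u₁`:
`G(u₁(t)) ≤ G(u₁(0)) + (a - b) b t / c³`. Since `∫₁^∞ dv / (Φ''(v) v⁴) = ∞`, `G` is unbounded,
so `u₁` stays bounded on `[0, T)`, i.e. `D₂` stays bounded away from `0`, and by continuity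
so does `D₂(T)`.
-/

open MeasureTheory Set Filter Topology

lemma tendsto_intervalIntegral_atTop_of_not_integrableOn_Ioi {g : ℝ → ℝ} {a : ℝ}
    (hg : ∀ x ∈ Ici a, 0 ≤ g x) (hgi : LocallyIntegrableOn g (Ici a))
    (hdiv : ¬ IntegrableOn g (Ioi a)) :
    Tendsto (fun w => ∫ v in a..w, g v) atTop atTop := by
  have hIcc : ∀ x, IntegrableOn g (Icc a x) := fun x =>
    hgi.integrableOn_compact_subset Icc_subset_Ici_self isCompact_Icc
  have hmono : MonotoneOn (fun w => ∫ v in a..w, g v) (Ici a) := fun x hx y _ hxy => by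
    have hax : IntervalIntegrable g volume a x :=
      (intervalIntegrable_iff_integrableOn_Icc_of_le hx).2 (hIcc x)
    have hxy' : IntervalIntegrable g volume x y := (intervalIntegrable_iff_integrableOn_Icc_of_le
      hxy).2 ((hIcc y).mono_set (Icc_subset_Icc_left hx))
    simp only [← intervalIntegral.integral_add_adjacent_intervals hax hxy']
    exact le_add_of_nonneg_right
      (intervalIntegral.integral_nonneg hxy fun v hv => hg v (le_trans hx hv.1))
  rw [tendsto_atTop_atTop]
  by_contra! ⟨M, hM⟩
  refine hdiv (integrableOn_Ioi_of_intervalIntegral_norm_bounded M a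
    (fun i => (hIcc i).mono_set Ioc_subset_Icc_self) tendsto_id ?_)
  filter_upwards [eventually_ge_atTop a] with i hi
  obtain ⟨j, hij, hj⟩ := hM i
  calc ∫ x in a..i, ‖g x‖ = ∫ x in a..i, g x :=
        intervalIntegral.integral_congr fun x hx =>
          Real.norm_of_nonneg (hg x (by rw [uIcc_of_le hi] at hx; exact hx.1))
    _ ≤ ∫ x in a..j, g x := hmono hi (hi.trans hij) hij
    _ ≤ M := hj.le

lemma le_add_mul_of_hasDerivWithinAt_le {f f' : ℝ → ℝ} {a b K : ℝ}
    (hf : ∀ t ∈ Ico a b, HasDerivWithinAt f (f' t) (Icc a b) t)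
    (hf' : ∀ t ∈ Ico a b, f' t ≤ K) :
    ∀ t ∈ Ico a b, f t ≤ f a + K * (t - a) := by
  intro t ht
  have hsub : Icc a t ⊆ Ico a b := Icc_subset_Ico_right ht.2
  refine image_le_of_deriv_right_le_deriv_boundary (f' := f') (B := fun x => f a + K * (x - a))
    (B' := fun _ => K)
    (fun x hx => ((hf x (hsub hx)).continuousWithinAt).mono (hsub.trans Ico_subset_Icc_self))
    (fun x hx => (hf x (hsub (Ico_subset_Icc_self hx))).mono_of_mem_nhdsWithin
      (mem_of_superset (Icc_mem_nhdsGE (hx.2.trans ht.2)) (Icc_subset_Icc_left hx.1)))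
    (by simp) (by fun_prop) (fun x _ => ?_) (fun x hx => hf' x (hsub (Ico_subset_Icc_self hx)))
    ⟨ht.1, le_rfl⟩
  simpa using ((hasDerivWithinAt_id x (Ici x)).sub_const a).const_mul K |>.const_add (f a)

noncomputable def weight (h : ℝ → ℝ) (v : ℝ) : ℝ := 1 / (h v * v ^ 4)

noncomputable def potential (h : ℝ → ℝ) (w : ℝ) : ℝ := ∫ v in (1 : ℝ)..w, weight h v

section Potential

variable {h : ℝ → ℝ}

lemma weight_nonneg (hpos : ∀ v, 0 ≤ h v) (v : ℝ) : 0 ≤ weight h v :=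
  div_nonneg zero_le_one (mul_nonneg (hpos v) (by positivity))

lemma continuousOn_weight (hh : Continuous h) (hpos : ∀ v, 0 < h v) :
    ContinuousOn (weight h) (Ioi 0) :=
  continuousOn_const.div (by fun_prop) fun v hv => mul_ne_zero (hpos v).ne' (pow_ne_zero _ hv.ne')

lemma intervalIntegrable_weight (hh : Continuous h) (hpos : ∀ v, 0 < h v) {x y : ℝ}
    (hx : 0 < x) (hy : 0 < y) : IntervalIntegrable (weight h) volume x y :=
  ((continuousOn_weight hh hpos).mono fun _ hv =>
    lt_of_lt_of_le (lt_min hx hy) hv.1).intervalIntegrable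

lemma hasDerivAt_potential (hh : Continuous h) (hpos : ∀ v, 0 < h v) {x : ℝ} (hx : 0 < x) :
    HasDerivAt (potential h) (weight h x) x :=
  intervalIntegral.integral_hasDerivAt_right (intervalIntegrable_weight hh hpos one_pos hx)
    ((continuousOn_weight hh hpos).stronglyMeasurableAtFilter isOpen_Ioi x hx)
    ((continuousOn_weight hh hpos).continuousAt (Ioi_mem_nhds hx))

lemma monotoneOn_potential (hh : Continuous h) (hpos : ∀ v, 0 < h v) :
    MonotoneOn (potential h) (Ioi 0) := by
  refine monotoneOn_of_deriv_nonneg (convex_Ioi 0) (fun x hx => ?_) (fun x hx => ?_) fun x hx => ?_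
  · exact (hasDerivAt_potential hh hpos hx).continuousAt.continuousWithinAt
  · rw [interior_Ioi] at hx
    exact (hasDerivAt_potential hh hpos hx).differentiableAt.differentiableWithinAt
  · rw [interior_Ioi] at hx
    exact (hasDerivAt_potential hh hpos hx).deriv ▸ weight_nonneg (fun v => (hpos v).le) x

lemma tendsto_potential_atTop (hh : Continuous h) (hpos : ∀ v, 0 < h v)
    (hdiv : ¬ IntegrableOn (weight h) (Ici 1)) : Tendsto (potential h) atTop atTop :=
  tendsto_intervalIntegral_atTop_of_not_integrableOn_Ioi
    (fun x _ => weight_nonneg (fun v => (hpos v).le) x)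
    (((continuousOn_weight hh hpos).locallyIntegrableOn measurableSet_Ioi).mono_set
      (Ici_subset_Ioi.2 zero_lt_one))
    (by rwa [← integrableOn_Ici_iff_integrableOn_Ioi])

lemma exists_forall_lt_of_potential_le (hh : Continuous h) (hpos : ∀ v, 0 < h v)
    (hdiv : ¬ IntegrableOn (weight h) (Ici 1)) {ι : Type*} {s : Set ι} {u : ι → ℝ} {M : ℝ}
    (hu : ∀ i ∈ s, 0 < u i) (hM : ∀ i ∈ s, potential h (u i) ≤ M) :
    ∃ w > 0, ∀ i ∈ s, u i < w := by
  obtain ⟨w, hMw, hw⟩ :=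
    ((tendsto_potential_atTop hh hpos hdiv).eventually_gt_atTop M |>.and
      (eventually_gt_atTop 0)).exists
  refine ⟨w, hw, fun i hi => lt_of_not_ge fun hwu => ?_⟩
  exact (hMw.trans_le (monotoneOn_potential hh hpos hw (hu i hi) hwu)).not_ge (hM i hi)

theorem HasDerivWithinAt.potential_const_div (hh : Continuous h) (hpos : ∀ v, 0 < h v)
    {D : ℝ → ℝ} {D' c t : ℝ} {s : Set ℝ} (hD : HasDerivWithinAt D D' s t) (hc : 0 < c)
    (hDt : 0 < D t) :
    HasDerivWithinAt (fun τ => potential h (c / D τ))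
      (weight h (c / D t) * (c * (-D' / D t ^ 2))) s t := by
  have hquot : HasDerivWithinAt (fun τ => c / D τ) (c * (-D' / D t ^ 2)) s t := by
    simpa only [div_eq_mul_inv] using (hD.fun_inv hDt.ne').const_mul c
  exact (hasDerivAt_potential hh hpos (div_pos hc hDt)).comp_hasDerivWithinAt t hquot

lemma weight_const_div_mul_le (hpos : ∀ v, 0 < h v) {a b c A D : ℝ} (ha : 0 ≤ a) (hab : b ≤ a)
    (hc : 0 < c) (hD : 0 < D) (hA : 0 ≤ A) :
    weight h (c / D) * (c * (-((a - b) * (a * A - b * h (c / D)) / D ^ 2) / D ^ 2))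
      ≤ (a - b) * b / c ^ 3 := by
  have hB := hpos (c / D)
  rw [weight]
  set B := h (c / D)
  calc 1 / (B * (c / D) ^ 4) * (c * (-((a - b) * (a * A - b * B) / D ^ 2) / D ^ 2))
      = (a - b) * (b * B - a * A) / (B * c ^ 3) := by
        field_simp
        ring
    _ ≤ (a - b) * (b * B) / (B * c ^ 3) := by
        gcongr
        linarith [mul_nonneg ha hA]
    _ = (a - b) * b / c ^ 3 := by field_simp

end Potential

theorem stmt_16_general
    (a b : ℝ) (ha : 0 < a) (hb : 0 < b) (hab : b < a)
    (x₁ : ℝ) (hx₁ : x₁ < 1)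
    (Φ : ℝ → ℝ) (hΦ : ContDiff ℝ 2 Φ)
    (hΦ''pos : ∀ v : ℝ, 0 < iteratedDeriv 2 Φ v)
    (hdiv : ¬ IntegrableOn (fun v => 1 / (iteratedDeriv 2 Φ v * v ^ 4)) (Ici 1) volume)
    (T : ℝ) (hT : 0 < T)
    (D₂ : ℝ → ℝ)
    (hD₂c : ContinuousOn D₂ (Icc 0 T))
    (hD₂pos : ∀ t ∈ Ico (0:ℝ) T, 0 < D₂ t)
    (u₀ u₁ : ℝ → ℝ)
    (hu₁ : ∀ t, u₁ t = (a - b) * (1 - x₁) / D₂ t)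
    (hODE₂ : ∀ t ∈ Ico (0:ℝ) T,
      HasDerivWithinAt D₂
        ((a - b) * (a * iteratedDeriv 2 Φ (u₀ t) - b * iteratedDeriv 2 Φ (u₁ t)) / (D₂ t) ^ 2)
        (Icc 0 T) t) :
    0 < D₂ T := by
  set h := iteratedDeriv 2 Φ
  have hh : Continuous h := hΦ.continuous_iteratedDeriv 2 le_rfl
  simp only [hu₁] at hODE₂
  set c := (a - b) * (1 - x₁)
  have hc : 0 < c := mul_pos (sub_pos.2 hab) (sub_pos.2 hx₁)
  have hgrowth := le_add_mul_of_hasDerivWithinAt_le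
    (fun t ht => (hODE₂ t ht).potential_const_div hh hΦ''pos hc (hD₂pos t ht))
    (fun t ht => weight_const_div_mul_le hΦ''pos ha.le hab.le hc (hD₂pos t ht) (hΦ''pos _).le)
  obtain ⟨w, hw, hlt⟩ := exists_forall_lt_of_potential_le hh hΦ''pos hdiv
    (M := potential h (c / D₂ 0) + (a - b) * b / c ^ 3 * T)
    (fun t ht => div_pos hc (hD₂pos t ht))
    (fun t ht => (hgrowth t ht).trans (by gcongr; linarith [ht.2]))
  have hT_mem : T ∈ closure (Ico 0 T) := by rw [closure_Ico hT.ne]; exact right_mem_Icc.2 hT.le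
  have hlower : c / w ≤ D₂ T :=
    continuousWithinAt_const.closure_le hT_mem ((hD₂c T (right_mem_Icc.2 hT.le)).mono
      Ico_subset_Icc_self) fun t ht => (div_lt_comm₀ (hD₂pos t ht) hw).1 (hlt t ht) |>.le
  exact (div_pos hc hw).trans_le hlower

/-- For the δ-source gradient-flow ODE system with `a > b` and a
strictly convex entropy with `Φ'' > 0` such that `∫₁^∞ dv/(Φ''(v) v⁴) = ∞`
(the positive integrand is not integrable on `[1,∞)`), one has `D₂(T) > 0`. -/
theorem stmt_16
    (a b : ℝ) (ha : 0 < a) (hb : 0 < b) (hab : b < a)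
    (x₀ x₁ : ℝ) (hx₀ : 0 < x₀) (hx01 : x₀ < x₁) (hx₁ : x₁ < 1)
    (γ : ℝ) (hγ : 0 < γ)
    (Φ : ℝ → ℝ) (hΦ : ContDiff ℝ 2 Φ) (hconv : StrictConvexOn ℝ univ Φ)
    (hΦ''pos : ∀ v : ℝ, 0 < iteratedDeriv 2 Φ v)
    (hdiv : ¬ IntegrableOn (fun v => 1 / (iteratedDeriv 2 Φ v * v ^ 4)) (Ici 1) volume)
    (T : ℝ) (hT : 0 < T)
    (D₁ D₂ : ℝ → ℝ)
    (hD₁c : ContinuousOn D₁ (Icc 0 T)) (hD₂c : ContinuousOn D₂ (Icc 0 T))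
    (hD₁pos : ∀ t ∈ Ico (0:ℝ) T, 0 < D₁ t) (hD₂pos : ∀ t ∈ Ico (0:ℝ) T, 0 < D₂ t)
    (hD₁0 : γ ≤ D₁ 0) (hD₂0 : γ ≤ D₂ 0)
    (u₀ u₁ : ℝ → ℝ)
    (hu₀ : ∀ t, u₀ t = a * (x₁ - x₀) / D₁ t + (a - b) * (1 - x₁) / D₂ t)
    (hu₁ : ∀ t, u₁ t = (a - b) * (1 - x₁) / D₂ t)
    (hODE₁ : ∀ t ∈ Ico (0:ℝ) T,
      HasDerivWithinAt D₁ (a ^ 2 * iteratedDeriv 2 Φ (u₀ t) / (D₁ t) ^ 2) (Icc 0 T) t)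
    (hODE₂ : ∀ t ∈ Ico (0:ℝ) T,
      HasDerivWithinAt D₂
        ((a - b) * (a * iteratedDeriv 2 Φ (u₀ t) - b * iteratedDeriv 2 Φ (u₁ t)) / (D₂ t) ^ 2)
        (Icc 0 T) t) :
    0 < D₂ T :=
  stmt_16_general a b ha hb hab x₁ hx₁ Φ hΦ hΦ''pos hdiv T hT D₂ hD₂c hD₂pos u₀ u₁ hu₁ hODE₂
end

section
/- Fix a, b > 0 with a > b, 0 < x₀ < x₁ < 1, γ > 0, and a strictly convex function Φ : ℝ → ℝ of class C² with Φ'' continuous and strictly positive, such that liminf_{w→∞} Φ''(z+w)/Φ''(w) > b/a uniformly for z in compact subsets of (0,∞), i.e., for every compact K ⊂ (0,∞) there exist W and c > b/a with Φ''(z+w)/Φ''(w) ≥ c for all z ∈ K and w ≥ W. Let 0 < T < ∞ and let D₁, D₂ : [0,T] → ℝ be continuous, differentiable on [0,T), with D₁(0), D₂(0) ≥ γ, strictly positive on [0,T), satisfying D₁'(t) = a² Φ''(u₀(t))/D₁(t)² and D₂'(t) = (a−b)(a Φ''(u₀(t)) − b Φ''(u₁(t)))/D₂(t)², where u₀(t)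 = a(x₁−x₀)/D₁(t) + (a−b)(1−x₁)/D₂(t) and u₁(t) = (a−b)(1−x₁)/D₂(t). Then D₂(T) > 0. -/
open Set Filter Topology

/-!
Since `D₁' > 0`, `D₁` stays in `[D₁ 0, D₁ T]`, so `u₀ - u₁ = a (x₁ - x₀) / D₁` ranges over a
compact subset `K` of `(0, ∞)`. Wherever `D₂` is small, `u₁ = (a - b)(1 - x₁) / D₂` exceeds the
threshold `W` of the liminf hypothesis for `K`, so `a Φ''(u₀) > b Φ''(u₁)`, i.e. `D₂' > 0`.
A positive function that increases whenever it is small cannot reach `0` at `T`.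
-/

lemma mul_sub_mul_pos_of_lt_le_div {a b c p q : ℝ} (ha : 0 < a) (hc : b / a < c) (hq : 0 < q)
    (hpq : c ≤ p / q) : 0 < a * p - b * q := by
  rw [div_lt_iff₀ ha] at hc
  rw [le_div_iff₀ hq] at hpq
  nlinarith [mul_le_mul_of_nonneg_left hpq ha.le]

lemma monotoneOn_Icc_of_hasDerivWithinAt_nonneg {f f' : ℝ → ℝ} {s T : ℝ}
    (hf : ContinuousOn f (Icc s T)) (hderiv : ∀ t ∈ Ioo s T, HasDerivWithinAt f (f' t) (Icc s T) t)
    (hnonneg : ∀ t ∈ Ioo s T, 0 ≤ f' t) : MonotoneOn f (Icc s T) :=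
  monotoneOn_of_hasDerivWithinAt_nonneg (convex_Icc s T) hf
    (fun t ht ↦ (hderiv t (interior_Icc.subset ht)).mono interior_subset)
    (fun t ht ↦ hnonneg t (interior_Icc.subset ht))

lemma strictMonoOn_Icc_of_hasDerivWithinAt_pos {f f' : ℝ → ℝ} {s T : ℝ}
    (hf : ContinuousOn f (Icc s T)) (hderiv : ∀ t ∈ Ioo s T, HasDerivWithinAt f (f' t) (Icc s T) t)
    (hpos : ∀ t ∈ Ioo s T, 0 < f' t) : StrictMonoOn f (Icc s T) :=
  strictMonoOn_of_hasDerivWithinAt_pos (convex_Icc s T) hf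
    (fun t ht ↦ (hderiv t (interior_Icc.subset ht)).mono interior_subset)
    (fun t ht ↦ hpos t (interior_Icc.subset ht))

lemma MonotoneOn.div_mem_Icc_div {g : ℝ → ℝ} {s T A t : ℝ} (hg : MonotoneOn g (Icc s T))
    (hgs : 0 < g s) (hA : 0 ≤ A) (ht : t ∈ Icc s T) : A / g t ∈ Icc (A / g T) (A / g s) := by
  have hst : g s ≤ g t := hg (left_mem_Icc.2 (ht.1.trans ht.2)) ht ht.1
  have htT : g t ≤ g T := hg ht (right_mem_Icc.2 (ht.1.trans ht.2)) ht.2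
  exact ⟨div_le_div_of_nonneg_left hA (hgs.trans_le hst) htT, div_le_div_of_nonneg_left hA hgs hst⟩

lemma pos_right_of_hasDerivWithinAt_pos_of_lt {f f' : ℝ → ℝ} {s T ε : ℝ} (hsT : s < T)
    (hε : 0 < ε) (hf : ContinuousOn f (Icc s T)) (hpos : ∀ t ∈ Ico s T, 0 < f t)
    (hderiv : ∀ t ∈ Ioo s T, HasDerivWithinAt f (f' t) (Icc s T) t)
    (hderiv_pos : ∀ t ∈ Ioo s T, f t < ε → 0 < f' t) : 0 < f T := by
  by_contra! hfT
  have hsmall : ∀ᶠ t in 𝓝[≤] T, f t < ε := by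
    rw [← nhdsWithin_Icc_eq_nhdsLE hsT]
    exact hf.continuousWithinAt (right_mem_Icc.2 hsT.le) |>.eventually_lt_const (hfT.trans_lt hε)
  obtain ⟨l, hlT, hl⟩ := mem_nhdsLE_iff_exists_Ioc_subset.1 hsmall
  obtain ⟨m, hlsm, hmT⟩ := exists_between (max_lt hlT hsT)
  have hsm : s ≤ m := (le_max_right l s).trans hlsm.le
  have hmono : StrictMonoOn f (Icc m T) :=
    strictMonoOn_Icc_of_hasDerivWithinAt_pos (hf.mono (Icc_subset_Icc_left hsm))
      (fun t ht ↦ (hderiv t ⟨hsm.trans_lt ht.1, ht.2⟩).mono (Icc_subset_Icc_left hsm))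
      fun t ht ↦ hderiv_pos t ⟨hsm.trans_lt ht.1, ht.2⟩
        (hl ⟨(le_max_left l s).trans_lt (hlsm.trans ht.1), ht.2.le⟩)
  have hfm : 0 < f m := hpos m ⟨hsm, hmT⟩
  have := hmono (left_mem_Icc.2 hmT.le) (right_mem_Icc.2 hmT.le) hmT
  linarith

theorem stmt_18_general
    (a b : ℝ) (ha : 0 < a) (hab : b < a)
    (x₀ x₁ : ℝ) (hx01 : x₀ < x₁) (hx₁ : x₁ < 1)
    (Φ : ℝ → ℝ)
    (hΦ''pos : ∀ v : ℝ, 0 < iteratedDeriv 2 Φ v)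
    (hliminf : ∀ K : Set ℝ, IsCompact K → K ⊆ Ioi 0 →
      ∃ W c : ℝ, b / a < c ∧ ∀ z ∈ K, ∀ w : ℝ, W ≤ w →
        c ≤ iteratedDeriv 2 Φ (z + w) / iteratedDeriv 2 Φ w)
    (T : ℝ) (hT : 0 < T)
    (D₁ D₂ : ℝ → ℝ)
    (hD₁c : ContinuousOn D₁ (Icc 0 T)) (hD₂c : ContinuousOn D₂ (Icc 0 T))
    (hD₁pos : ∀ t ∈ Ico (0:ℝ) T, 0 < D₁ t) (hD₂pos : ∀ t ∈ Ico (0:ℝ) T, 0 < D₂ t)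
    (u₀ u₁ : ℝ → ℝ)
    (hu₀ : ∀ t, u₀ t = a * (x₁ - x₀) / D₁ t + (a - b) * (1 - x₁) / D₂ t)
    (hu₁ : ∀ t, u₁ t = (a - b) * (1 - x₁) / D₂ t)
    (hODE₁ : ∀ t ∈ Ico (0:ℝ) T,
      HasDerivWithinAt D₁ (a ^ 2 * iteratedDeriv 2 Φ (u₀ t) / (D₁ t) ^ 2) (Icc 0 T) t)
    (hODE₂ : ∀ t ∈ Ico (0:ℝ) T,
      HasDerivWithinAt D₂
        ((a - b) * (a * iteratedDeriv 2 Φ (u₀ t) - b * iteratedDeriv 2 Φ (u₁ t)) / (D₂ t) ^ 2)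
        (Icc 0 T) t) :
    0 < D₂ T := by
  set A := a * (x₁ - x₀)
  set C := (a - b) * (1 - x₁)
  have hA : 0 < A := mul_pos ha (sub_pos.2 hx01)
  have hC : 0 < C := mul_pos (sub_pos.2 hab) (sub_pos.2 hx₁)
  have hD₁mono : MonotoneOn D₁ (Icc 0 T) :=
    monotoneOn_Icc_of_hasDerivWithinAt_nonneg hD₁c (fun t ht ↦ hODE₁ t (Ioo_subset_Ico_self ht))
      fun t ht ↦ by have := hD₁pos t (Ioo_subset_Ico_self ht); have := hΦ''pos (u₀ t); positivity
  have hD₁0 : 0 < D₁ 0 := hD₁pos 0 ⟨le_rfl, hT⟩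
  have hD₁T : 0 < D₁ T :=
    hD₁0.trans_le (hD₁mono (left_mem_Icc.2 hT.le) (right_mem_Icc.2 hT.le) hT.le)
  obtain ⟨W, c, hc, hWc⟩ := hliminf (Icc (A / D₁ T) (A / D₁ 0)) isCompact_Icc
    fun z hz ↦ (div_pos hA hD₁T).trans_le hz.1
  have hW : 0 < max W 1 := lt_max_of_lt_right one_pos
  refine pos_right_of_hasDerivWithinAt_pos_of_lt hT (div_pos hC hW) hD₂c hD₂pos
    (fun t ht ↦ hODE₂ t (Ioo_subset_Ico_self ht)) fun t ht hsmall ↦ ?_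
  have hD₂t := hD₂pos t (Ioo_subset_Ico_self ht)
  have hu₁W : W ≤ u₁ t := by
    rw [hu₁]
    exact (le_max_left W 1).trans ((lt_div_comm₀ hD₂t hW).1 hsmall).le
  have hz := hD₁mono.div_mem_Icc_div hD₁0 hA.le (Ioo_subset_Icc_self ht)
  have hratio := hWc _ hz _ hu₁W
  have hu₀t : u₀ t = A / D₁ t + u₁ t := by rw [hu₀, hu₁]
  rw [← hu₀t] at hratio
  have := mul_sub_mul_pos_of_lt_le_div ha hc (hΦ''pos _) hratio
  have := sub_pos.2 hab
  positivity

/-- For the δ-source gradient-flow ODE system with `a > b` and a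
strictly convex entropy with `Φ'' > 0` such that
`liminf_{w→∞} Φ''(z+w)/Φ''(w) > b/a` uniformly for `z` in compact subsets of `(0,∞)`
(for every such compact `K` there exist `W` and `c > b/a` with
`Φ''(z+w)/Φ''(w) ≥ c` for all `z ∈ K`, `w ≥ W`), one has `D₂(T) > 0`. -/
theorem stmt_18
    (a b : ℝ) (ha : 0 < a) (hb : 0 < b) (hab : b < a)
    (x₀ x₁ : ℝ) (hx₀ : 0 < x₀) (hx01 : x₀ < x₁) (hx₁ : x₁ < 1)
    (γ : ℝ) (hγ : 0 < γ)
    (Φ : ℝ → ℝ) (hΦ : ContDiff ℝ 2 Φ) (hconv : StrictConvexOn ℝ univ Φ)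
    (hΦ''pos : ∀ v : ℝ, 0 < iteratedDeriv 2 Φ v)
    (hliminf : ∀ K : Set ℝ, IsCompact K → K ⊆ Ioi 0 →
      ∃ W c : ℝ, b / a < c ∧ ∀ z ∈ K, ∀ w : ℝ, W ≤ w →
        c ≤ iteratedDeriv 2 Φ (z + w) / iteratedDeriv 2 Φ w)
    (T : ℝ) (hT : 0 < T)
    (D₁ D₂ : ℝ → ℝ)
    (hD₁c : ContinuousOn D₁ (Icc 0 T)) (hD₂c : ContinuousOn D₂ (Icc 0 T))
    (hD₁pos : ∀ t ∈ Ico (0:ℝ) T, 0 < D₁ t) (hD₂pos : ∀ t ∈ Ico (0:ℝ) T, 0 < D₂ t)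
    (hD₁0 : γ ≤ D₁ 0) (hD₂0 : γ ≤ D₂ 0)
    (u₀ u₁ : ℝ → ℝ)
    (hu₀ : ∀ t, u₀ t = a * (x₁ - x₀) / D₁ t + (a - b) * (1 - x₁) / D₂ t)
    (hu₁ : ∀ t, u₁ t = (a - b) * (1 - x₁) / D₂ t)
    (hODE₁ : ∀ t ∈ Ico (0:ℝ) T,
      HasDerivWithinAt D₁ (a ^ 2 * iteratedDeriv 2 Φ (u₀ t) / (D₁ t) ^ 2) (Icc 0 T) t)
    (hODE₂ : ∀ t ∈ Ico (0:ℝ) T,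
      HasDerivWithinAt D₂
        ((a - b) * (a * iteratedDeriv 2 Φ (u₀ t) - b * iteratedDeriv 2 Φ (u₁ t)) / (D₂ t) ^ 2)
        (Icc 0 T) t) :
    0 < D₂ T :=
  stmt_18_general a b ha hab x₀ x₁ hx01 hx₁ Φ hΦ''pos hliminf T hT D₁ D₂ hD₁c hD₂c hD₁pos hD₂pos u₀
    u₁ hu₀ hu₁ hODE₁ hODE₂
end

section
/- Fix a, b > 0 with a < b, 0 < x₀ < x₁ < 1, γ > 0, and a strictly convex function Φ : ℝ → ℝ of class C² with Φ'' continuous and strictly positive, such that limsup_{w→−∞} Φ''(z+w)/Φ''(w) < b/a uniformly for z in compact subsets of (0,∞), i.e., for every compact K ⊂ (0,∞) there exist W and c < b/a with Φ''(z+w)/Φ''(w) ≤ c for all z ∈ K and w ≤ −W. Let 0 < T < ∞ and let D₁, D₂ : [0,T] → ℝ be continuous, differentiable on [0,T), with D₁(0), D₂(0) ≥ γ, strictly positive on [0,T), satisfying D₁'(t) = a² Φ''(u₀(t))/D₁(t)² and D₂'(t) = (a−b)(a Φ''(u₀(t)) − b Φ''(u₁(t)))/D₂(t)², where u₀(t)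 = a(x₁−x₀)/D₁(t) + (a−b)(1−x₁)/D₂(t) and u₁(t) = (a−b)(1−x₁)/D₂(t). Then D₂(T) > 0. -/
/-!
`D₁` is nondecreasing, so `z(t) = a (x₁ - x₀) / D₁ t` stays in a compact subset `K` of `(0, ∞)`,
and `u₀ = z + u₁` with `u₁ = (a - b)(1 - x₁) / D₂ → -∞` as `D₂ → 0⁺`. The limsup hypothesis on `K`
then gives `a Φ''(u₀) < b Φ''(u₁)`, i.e. `D₂' > 0`, as soon as `D₂` is small; so a small enough
level `ε > 0` acts as a barrier that `D₂` cannot cross from above.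
-/

open Set

theorem monotoneOn_Icc_of_hasDerivWithinAt_nonneg_s19 {f f' : ℝ → ℝ} {a b : ℝ}
    (hf : ContinuousOn f (Icc a b))
    (hf' : ∀ x ∈ Ioo a b, HasDerivWithinAt f (f' x) (Icc a b) x)
    (hf'₀ : ∀ x ∈ Ioo a b, 0 ≤ f' x) : MonotoneOn f (Icc a b) := by
  refine monotoneOn_of_hasDerivWithinAt_nonneg (f' := f') (convex_Icc a b) hf ?_ ?_ <;>
    rw [interior_Icc]
  · exact fun x hx => (hf' x hx).mono Ioo_subset_Icc_self
  · exact hf'₀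

theorem le_of_hasDerivWithinAt_pos_of_eq {f f' : ℝ → ℝ} {a b ε : ℝ}
    (hf : ContinuousOn f (Icc a b))
    (hf' : ∀ x ∈ Ico a b, HasDerivWithinAt f (f' x) (Icc a b) x)
    (ha : ε ≤ f a) (bound : ∀ x ∈ Ico a b, f x = ε → 0 < f' x) :
    ∀ ⦃x⦄, x ∈ Icc a b → ε ≤ f x :=
  image_le_of_deriv_right_lt_deriv_boundary' continuousOn_const
    (fun x _ => hasDerivWithinAt_const x _ ε) ha hf
    (fun x hx => (hf' x hx).mono_of_mem_nhdsWithin (Icc_mem_nhdsGE_of_mem hx))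
    (fun x hx h => bound x hx h.symm)

theorem mul_lt_mul_of_div_le_of_lt_div {a b c p q : ℝ} (ha : 0 < a) (hq : 0 < q)
    (hpq : p / q ≤ c) (hc : c < b / a) : a * p < b * q := by
  have hp : p ≤ c * q := (div_le_iff₀ hq).mp hpq
  have hca : c * a < b := (lt_div_iff₀ ha).mp hc
  nlinarith

theorem exists_pos_forall_mul_lt_of_ratio_le {g : ℝ → ℝ} (hg : ∀ v, 0 < g v) {a b m : ℝ}
    (ha : 0 < a) (hm : m < 0) {K : Set ℝ}
    (hK : ∃ W c : ℝ, c < b / a ∧ ∀ z ∈ K, ∀ w : ℝ, w ≤ -W → g (z + w) / g w ≤ c) :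
    ∃ δ > 0, ∀ d, 0 < d → d ≤ δ → ∀ z ∈ K, a * g (z + m / d) < b * g (m / d) := by
  obtain ⟨W, c, hc, hW⟩ := hK
  have hW₁ : (0 : ℝ) < max W 1 := lt_max_of_lt_right one_pos
  refine ⟨-m / max W 1, div_pos (neg_pos.mpr hm) hW₁, fun d hd hdδ z hz => ?_⟩
  have hmd : m / d ≤ -max W 1 := by
    rw [div_le_iff₀ hd]
    nlinarith [(le_div_iff₀ hW₁).mp hdδ]
  exact mul_lt_mul_of_div_le_of_lt_div ha (hg _)
    (hW z hz _ (hmd.trans (neg_le_neg (le_max_left W 1)))) hc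

theorem stmt_19_general
    (a b : ℝ) (ha : 0 < a) (hab : a < b)
    (x₀ x₁ : ℝ) (hx01 : x₀ < x₁) (hx₁ : x₁ < 1)
    (γ : ℝ) (hγ : 0 < γ)
    (Φ : ℝ → ℝ)
    (hΦ''pos : ∀ v : ℝ, 0 < iteratedDeriv 2 Φ v)
    (hlimsup : ∀ K : Set ℝ, IsCompact K → K ⊆ Ioi 0 →
      ∃ W c : ℝ, c < b / a ∧ ∀ z ∈ K, ∀ w : ℝ, w ≤ -W →
        iteratedDeriv 2 Φ (z + w) / iteratedDeriv 2 Φ w ≤ c)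
    (T : ℝ) (hT : 0 < T)
    (D₁ D₂ : ℝ → ℝ)
    (hD₁c : ContinuousOn D₁ (Icc 0 T)) (hD₂c : ContinuousOn D₂ (Icc 0 T))
    (hD₁0 : γ ≤ D₁ 0) (hD₂0 : γ ≤ D₂ 0)
    (u₀ u₁ : ℝ → ℝ)
    (hu₀ : ∀ t, u₀ t = a * (x₁ - x₀) / D₁ t + (a - b) * (1 - x₁) / D₂ t)
    (hu₁ : ∀ t, u₁ t = (a - b) * (1 - x₁) / D₂ t)
    (hODE₁ : ∀ t ∈ Ico (0:ℝ) T,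
      HasDerivWithinAt D₁ (a ^ 2 * iteratedDeriv 2 Φ (u₀ t) / (D₁ t) ^ 2) (Icc 0 T) t)
    (hODE₂ : ∀ t ∈ Ico (0:ℝ) T,
      HasDerivWithinAt D₂
        ((a - b) * (a * iteratedDeriv 2 Φ (u₀ t) - b * iteratedDeriv 2 Φ (u₁ t)) / (D₂ t) ^ 2)
        (Icc 0 T) t) :
    0 < D₂ T := by
  have hD₁ : MonotoneOn D₁ (Icc 0 T) :=
    monotoneOn_Icc_of_hasDerivWithinAt_nonneg_s19 hD₁c (fun t ht => hODE₁ t (Ioo_subset_Ico_self ht))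
      (fun t _ => by have := hΦ''pos (u₀ t); positivity)
  have h0 : (0 : ℝ) ∈ Icc 0 T := left_mem_Icc.mpr hT.le
  have hT' : T ∈ Icc 0 T := right_mem_Icc.mpr hT.le
  have hγD₁ : ∀ t ∈ Icc 0 T, γ ≤ D₁ t := fun t ht => hD₁0.trans (hD₁ h0 ht ht.1)
  have hnum : 0 < a * (x₁ - x₀) := mul_pos ha (sub_pos.mpr hx01)
  have hK : ∀ t ∈ Icc 0 T,
      a * (x₁ - x₀) / D₁ t ∈ Icc (a * (x₁ - x₀) / D₁ T) (a * (x₁ - x₀) / γ) := fun t ht =>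
    ⟨div_le_div_of_nonneg_left hnum.le (hγ.trans_le (hγD₁ t ht)) (hD₁ ht hT' ht.2),
      div_le_div_of_nonneg_left hnum.le hγ (hγD₁ t ht)⟩
  have hKpos : Icc (a * (x₁ - x₀) / D₁ T) (a * (x₁ - x₀) / γ) ⊆ Ioi 0 := fun _ hy =>
    (div_pos hnum (hγ.trans_le (hγD₁ T hT'))).trans_le hy.1
  obtain ⟨δ, hδ, hflux⟩ := exists_pos_forall_mul_lt_of_ratio_le hΦ''pos ha
    (mul_neg_of_neg_of_pos (sub_neg.mpr hab) (sub_pos.mpr hx₁)) (hlimsup _ isCompact_Icc hKpos)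
  have hε : 0 < min γ δ := lt_min hγ hδ
  refine hε.trans_le (le_of_hasDerivWithinAt_pos_of_eq hD₂c hODE₂
    ((min_le_left γ δ).trans hD₂0) (fun t ht hεt => ?_) hT')
  have hD₂t : 0 < D₂ t := hεt ▸ hε
  have hflux_t := hflux (D₂ t) hD₂t (hεt ▸ min_le_right γ δ) _ (hK t (Ico_subset_Icc_self ht))
  rw [hu₀, hu₁]
  exact div_pos (mul_pos_of_neg_of_neg (by linarith) (by linarith)) (by positivity)

/-- For the δ-source gradient-flow ODE system with `a < b` and a
strictly convex entropy with `Φ'' > 0` such that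
`limsup_{w→−∞} Φ''(z+w)/Φ''(w) < b/a` uniformly for `z` in compact subsets of `(0,∞)`
(for every such compact `K` there exist `W` and `c < b/a` with
`Φ''(z+w)/Φ''(w) ≤ c` for all `z ∈ K`, `w ≤ −W`), one has `D₂(T) > 0`. -/
theorem stmt_19
    (a b : ℝ) (ha : 0 < a) (hb : 0 < b) (hab : a < b)
    (x₀ x₁ : ℝ) (hx₀ : 0 < x₀) (hx01 : x₀ < x₁) (hx₁ : x₁ < 1)
    (γ : ℝ) (hγ : 0 < γ)
    (Φ : ℝ → ℝ) (hΦ : ContDiff ℝ 2 Φ) (hconv : StrictConvexOn ℝ univ Φ)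
    (hΦ''pos : ∀ v : ℝ, 0 < iteratedDeriv 2 Φ v)
    (hlimsup : ∀ K : Set ℝ, IsCompact K → K ⊆ Ioi 0 →
      ∃ W c : ℝ, c < b / a ∧ ∀ z ∈ K, ∀ w : ℝ, w ≤ -W →
        iteratedDeriv 2 Φ (z + w) / iteratedDeriv 2 Φ w ≤ c)
    (T : ℝ) (hT : 0 < T)
    (D₁ D₂ : ℝ → ℝ)
    (hD₁c : ContinuousOn D₁ (Icc 0 T)) (hD₂c : ContinuousOn D₂ (Icc 0 T))
    (hD₁pos : ∀ t ∈ Ico (0:ℝ) T, 0 < D₁ t) (hD₂pos : ∀ t ∈ Ico (0:ℝ) T, 0 < D₂ t)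
    (hD₁0 : γ ≤ D₁ 0) (hD₂0 : γ ≤ D₂ 0)
    (u₀ u₁ : ℝ → ℝ)
    (hu₀ : ∀ t, u₀ t = a * (x₁ - x₀) / D₁ t + (a - b) * (1 - x₁) / D₂ t)
    (hu₁ : ∀ t, u₁ t = (a - b) * (1 - x₁) / D₂ t)
    (hODE₁ : ∀ t ∈ Ico (0:ℝ) T,
      HasDerivWithinAt D₁ (a ^ 2 * iteratedDeriv 2 Φ (u₀ t) / (D₁ t) ^ 2) (Icc 0 T) t)
    (hODE₂ : ∀ t ∈ Ico (0:ℝ) T,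
      HasDerivWithinAt D₂
        ((a - b) * (a * iteratedDeriv 2 Φ (u₀ t) - b * iteratedDeriv 2 Φ (u₁ t)) / (D₂ t) ^ 2)
        (Icc 0 T) t) :
    0 < D₂ T :=
  stmt_19_general a b ha hab x₀ x₁ hx01 hx₁ γ hγ Φ hΦ''pos hlimsup T hT D₁ D₂ hD₁c hD₂c hD₁0 hD₂0 u₀
    u₁ hu₀ hu₁ hODE₁ hODE₂
end
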